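/- arXiv:2303.09019 — 10 statements merged into one kernel-verified Lean document; each statement's English description precedes it below -/
import Mathlib

section
/- Stanley's fundamental theorem: Let (P,ω) be a finite labeled poset. Then the set of (P,ω)-partitions is the disjoint union, over all linear extensions L of P, of the sets of (L,ω)-partitions; that is, every (P,ω)-partition is an (L,ω)-partition for exactly one linear extension L of P, and conversely every (L,ω)-partition, for L a linear extension of P, is a (P,ω)-partition. -/
/-- The cover relation of a relation `r` (thought of as the non-strict order relation):
`v` covers `u` if `u < v` and nothing lies strictly between. -/
def RelCovBy {P : Type*} (r : P → P → Prop) (u v : P) : Prop :=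
  r u v ∧ u ≠ v ∧ ∀ w, r u w → r w v → w = u ∨ w = v

/-- `r` is (the non-strict relation of) a linear extension of the partial order on `P`. -/
def IsLinExt {P : Type*} [PartialOrder P] (r : P → P → Prop) : Prop :=
  IsLinearOrder P r ∧ ∀ u v : P, u ≤ v → r u v

/-- `f : P → ℤ_{>0}` is a `(P,ω)`-partition with respect to the order relation `r`:
for every cover `u ⋖ v` of `r` one has `f u ≥ f v`, with moreover `f u > f v`
whenever `ω u > ω v`. -/
def IsPart {P : Type*} [Fintype P] (r : P → P → Prop)
    (ω : P ≃ Fin (Fintype.card P)) (f : P → ℕ+) : Prop :=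
  ∀ u v : P, RelCovBy r u v → f v ≤ f u ∧ (ω v < ω u → f v < f u)

/-!
Sort the elements of `P` by decreasing value of `f`, breaking ties by increasing label `ω`;
equivalently, compare them by the key `(f u, ω u)` in the lexicographic order with the first
coordinate reversed. The `(P,ω)`-partition condition on a cover `u ⋖ v` says exactly that the key
of `u` is smaller than that of `v`, and in a finite order this propagates from covers to all
strict comparabilities. Hence for a linear order `L`, `f` is an `(L,ω)`-partition iff `L` is the
sorting order of `f`, and that order extends `P` iff `f` is a `(P,ω)`-partition.
-/

open OrderDual

lemma relCovBy_le_iff_covBy {α : Type*} [PartialOrder α] {a b : α} :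
    RelCovBy (· ≤ ·) a b ↔ a ⋖ b := by
  refine ⟨fun ⟨hab, hne, h⟩ => ⟨hab.lt_of_ne hne, fun c hac hcb => ?_⟩,
    fun h => ⟨h.le, h.ne, fun c hac hcb => ?_⟩⟩
  · rcases h c hac.le hcb.le with rfl | rfl
    exacts [hac.false, hcb.false]
  · by_contra! hc
    exact h.2 (hac.lt_of_ne hc.1.symm) (hcb.lt_of_ne hc.2)

lemma lt_of_forall_relCovBy {α β : Type*} [Finite α] [Preorder β] {r : α → α → Prop}
    [IsPartialOrder α r] {g : α → β} (hg : ∀ u v, RelCovBy r u v → g u < g v)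
    ⦃u v : α⦄ (huv : r u v) (hne : u ≠ v) : g u < g v := by
  classical
  let : PartialOrder α :=
    { le := r
      le_refl := refl_of r
      le_trans := fun _ _ _ => trans_of r
      le_antisymm := fun _ _ => antisymm_of r }
  have : Fintype α := Fintype.ofFinite α
  let : LocallyFiniteOrder α := Fintype.toLocallyFiniteOrder
  exact (strictMono_iff_forall_covBy g).2 (fun a b h => hg a b (relCovBy_le_iff_covBy.2 h))
    (lt_of_le_of_ne huv hne)

section PartitionKey

variable {P : Type*} [Fintype P] (ω : P ≃ Fin (Fintype.card P)) (f : P → ℕ+)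

def partitionKey (u : P) : ℕ+ᵒᵈ ×ₗ Fin (Fintype.card P) :=
  toLex (toDual (f u), ω u)

def partitionOrder (u v : P) : Prop :=
  partitionKey ω f u ≤ partitionKey ω f v

variable {ω f}

lemma partitionKey_injective : Function.Injective (partitionKey ω f) := fun _ _ h =>
  ω.injective (congrArg (fun k => (ofLex k).2) h)

lemma partitionKey_lt_iff {u v : P} (hne : u ≠ v) :
    partitionKey ω f u < partitionKey ω f v ↔ f v ≤ f u ∧ (ω v < ω u → f v < f u) := by
  have hω : ω u ≠ ω v := ω.injective.ne hne
  simp only [partitionKey, Prod.Lex.toLex_lt_toLex, toDual_lt_toDual, toDual_inj]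
  constructor
  · rintro (h | ⟨h, h'⟩)
    · exact ⟨h.le, fun _ => h⟩
    · exact ⟨h.ge, fun h'' => absurd h' h''.asymm⟩
  · rintro ⟨h, h'⟩
    rcases h.lt_or_eq with h | h
    · exact .inl h
    · exact .inr ⟨h.symm, (hω.lt_or_gt).resolve_right fun h'' => (h' h'').ne h⟩

lemma isPart_iff_forall_relCovBy {r : P → P → Prop} :
    IsPart r ω f ↔ ∀ u v, RelCovBy r u v → partitionKey ω f u < partitionKey ω f v :=
  forall₂_congr fun _ _ =>
    ⟨fun h hc => (partitionKey_lt_iff hc.2.1).2 (h hc),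
      fun h hc => (partitionKey_lt_iff hc.2.1).1 (h hc)⟩

instance isLinearOrder_partitionOrder : IsLinearOrder P (partitionOrder ω f) where
  refl _ := le_rfl
  trans _ _ _ := le_trans
  antisymm _ _ h h' := partitionKey_injective (le_antisymm h h')
  total _ _ := le_total _ _

variable {r : P → P → Prop}

lemma isPart_of_forall_partitionOrder (h : ∀ u v, r u v → partitionOrder ω f u v) :
    IsPart r ω f :=
  isPart_iff_forall_relCovBy.2 fun u v ⟨huv, hne, _⟩ =>
    (h u v huv).lt_of_ne (partitionKey_injective.ne hne)

lemma partitionKey_lt_of_isPart [IsPartialOrder P r] (h : IsPart r ω f) ⦃u v : P⦄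
    (huv : r u v) (hne : u ≠ v) :
    partitionKey ω f u < partitionKey ω f v :=
  lt_of_forall_relCovBy (isPart_iff_forall_relCovBy.1 h) huv hne

lemma partitionOrder_of_isPart [IsPartialOrder P r] (h : IsPart r ω f) ⦃u v : P⦄
    (huv : r u v) :
    partitionOrder ω f u v := by
  obtain rfl | hne := eq_or_ne u v
  exacts [le_rfl, (partitionKey_lt_of_isPart h huv hne).le]

lemma eq_partitionOrder_of_isPart [IsLinearOrder P r] (h : IsPart r ω f) :
    r = partitionOrder ω f := by
  funext u v
  refine propext ⟨fun huv => partitionOrder_of_isPart h huv, fun huv => ?_⟩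
  obtain rfl | hne := eq_or_ne u v
  exacts [refl_of r u, (total_of r u v).resolve_right fun hvu =>
    (partitionKey_lt_of_isPart h hvu hne.symm).not_ge huv]

end PartitionKey

/-- **Stanley's fundamental theorem**: every `(L,ω)`-partition for a linear extension `L`
of `P` is a `(P,ω)`-partition, and every `(P,ω)`-partition is an `(L,ω)`-partition for
exactly one linear extension `L` of `P`. -/
theorem stanley_fundamental {P : Type*} [Fintype P] [PartialOrder P]
    (ω : P ≃ Fin (Fintype.card P)) (f : P → ℕ+) :
    (∀ r : P → P → Prop, IsLinExt r → IsPart r ω f → IsPart (· ≤ ·) ω f) ∧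
    (IsPart (· ≤ ·) ω f → ∃! r : P → P → Prop, IsLinExt r ∧ IsPart r ω f) := by
  refine ⟨fun r ⟨hlin, hext⟩ hr => ?_, fun hf => ?_⟩
  · obtain rfl : r = partitionOrder ω f := eq_partitionOrder_of_isPart hr
    exact isPart_of_forall_partitionOrder hext
  · refine ⟨partitionOrder ω f,
      ⟨⟨isLinearOrder_partitionOrder, partitionOrder_of_isPart hf⟩,
        isPart_of_forall_partitionOrder fun _ _ => id⟩, ?_⟩
    rintro r ⟨⟨hlin, -⟩, hr⟩
    exact eq_partitionOrder_of_isPart hr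
end

section
/- Let P be a finite poset with a labeled flag Φ. Then the set of (P,Φ)-partitions is the disjoint union, over all linear extensions L of P, of the sets of (L,Φ)-partitions; that is, every (P,Φ)-partition is an (L,Φ)-partition for exactly one linear extension L of P, and conversely every (L,Φ)-partition, for L a linear extension of P, is a (P,Φ)-partition. -/
/-- `f : P → ℤ_{>0}` is a `(P,Φ)`-partition for the labeled flag `Φ`, with respect to the
order relation `r`: for every cover `u ⋖ v` of `r` one has `f u ≥ f v`, with `f u > f v`
whenever `Φ u > Φ v` (lexicographically), and `f u ≤ val (Φ u)` for all `u`. -/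
def IsPhiPartRel {P : Type*} (r : P → P → Prop) (Φ : P → ℕ+ ×ₗ ℕ+) (f : P → ℕ+) : Prop :=
  (∀ u v : P, RelCovBy r u v → f v ≤ f u ∧ (Φ v < Φ u → f v < f u)) ∧
  ∀ u : P, f u ≤ (ofLex (Φ u)).1

/-! The cover conditions on `f` say exactly that each cover `u ⋖ v` goes weakly up in the
*reading order*, which sorts `P` by decreasing `f` with ties broken by increasing `Φ`. This order
is transitive and in a finite poset every relation is a chain of covers, so `f` is an
`(r,Φ)`-partition iff `r` is contained in the reading order (and the bound `f ≤ val ∘ Φ` holds).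
As `Φ` is injective the reading order is linear; it is therefore a linear extension for which `f`
is a partition, and any other such linear extension, being contained in it, equals it. -/

open Relation OrderDual

section RelCovBy

variable {α : Type*}

lemma reflTransGen_relCovBy_of_rel [Finite α] {r : α → α → Prop} [IsPartialOrder α r] {a b : α}
    (hab : r a b) : ReflTransGen (RelCovBy r) a b := by
  let _ : PartialOrder α :=
    { le := r, le_refl := refl_of r, le_trans := fun _ _ _ => trans_of r,
      le_antisymm := fun _ _ => antisymm_of r }
  classical
  let _ := Fintype.ofFinite α
  let _ := Fintype.toLocallyFiniteOrder (α := α)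
  refine ReflTransGen.mono (fun u v (huv : u ⋖ v) => ⟨huv.le, huv.ne, fun w huw hwv => ?_⟩) a b
    (le_iff_reflTransGen_covBy.mp (show a ≤ b from hab))
  by_contra! hw
  exact huv.2 (lt_of_le_of_ne huw hw.1.symm) (lt_of_le_of_ne hwv hw.2)

lemma rel_of_forall_relCovBy [Finite α] {r s : α → α → Prop} [IsPartialOrder α r] [IsPreorder α s]
    (h : ∀ a b, RelCovBy r a b → s a b) {a b : α} (hab : r a b) : s a b := by
  simpa [reflTransGen_eq_self] using ReflTransGen.mono h a b (reflTransGen_relCovBy_of_rel hab)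

end RelCovBy

lemma eq_of_imp_of_total {α : Type*} {r s : α → α → Prop} [Std.Total r] [Std.Antisymm s]
    (h : ∀ a b, r a b → s a b) : r = s := by
  funext a b
  refine propext ⟨h a b, fun hab => ?_⟩
  rcases total_of r a b with hr | hr
  · exact hr
  · obtain rfl := antisymm_of s hab (h b a hr)
    exact hr

section ReadingOrder

variable {P : Type*} (Φ : P → ℕ+ ×ₗ ℕ+) (f : P → ℕ+)

def readingKey (u : P) : ℕ+ᵒᵈ ×ₗ (ℕ+ ×ₗ ℕ+) := toLex (toDual (f u), Φ u)

def ReadingOrder (u v : P) : Prop := readingKey Φ f u ≤ readingKey Φ f v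

variable {Φ f}

lemma readingOrder_iff {u v : P} :
    ReadingOrder Φ f u v ↔ f v ≤ f u ∧ (Φ v < Φ u → f v < f u) := by
  simp only [ReadingOrder, readingKey, Prod.Lex.toLex_le_toLex, toDual_lt_toDual, toDual_inj]
  rcases lt_or_ge (f v) (f u) with h | h
  · simp [h, h.le]
  · simp [h.not_gt, le_antisymm_iff, h, not_lt]

instance : IsPreorder P (ReadingOrder Φ f) where
  refl _ := le_refl _
  trans _ _ _ := le_trans

lemma isLinearOrder_readingOrder (hΦ : Function.Injective Φ) :
    IsLinearOrder P (ReadingOrder Φ f) where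
  antisymm _ _ h h' := hΦ (congrArg (fun k => (ofLex k).2) (le_antisymm h h'))
  total _ _ := le_total _ _

lemma isPhiPartRel_iff_forall_readingOrder [Finite P] {r : P → P → Prop} [IsPartialOrder P r] :
    IsPhiPartRel r Φ f ↔
      (∀ u v, r u v → ReadingOrder Φ f u v) ∧ ∀ u, f u ≤ (ofLex (Φ u)).1 := by
  refine and_congr_left' ⟨fun h u v huv => ?_, fun h u v huv => readingOrder_iff.1 (h u v huv.1)⟩
  exact rel_of_forall_relCovBy (fun a b hab => readingOrder_iff.2 (h a b hab)) huv

end ReadingOrder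

/-- **Stanley's theorem for `(P,Φ)`-partitions**: every `(L,Φ)`-partition for a linear
extension `L` of `P` is a `(P,Φ)`-partition, and every `(P,Φ)`-partition is an
`(L,Φ)`-partition for exactly one linear extension `L` of `P`. -/
theorem phi_stanley {P : Type*} [Fintype P] [PartialOrder P]
    (Φ : P → ℕ+ ×ₗ ℕ+) (hΦ : Function.Injective Φ) (f : P → ℕ+) :
    (∀ r : P → P → Prop, IsLinExt r → IsPhiPartRel r Φ f → IsPhiPartRel (· ≤ ·) Φ f) ∧
    (IsPhiPartRel (· ≤ ·) Φ f →
      ∃! r : P → P → Prop, IsLinExt r ∧ IsPhiPartRel r Φ f) := by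
  refine ⟨fun r ⟨hr, hle⟩ hf => ?_, fun hf => ?_⟩
  · obtain ⟨hrL, hval⟩ := isPhiPartRel_iff_forall_readingOrder.1 hf
    exact isPhiPartRel_iff_forall_readingOrder.2 ⟨fun u v huv => hrL u v (hle u v huv), hval⟩
  · obtain ⟨hleL, hval⟩ := isPhiPartRel_iff_forall_readingOrder.1 hf
    have hL : IsLinearOrder P (ReadingOrder Φ f) := isLinearOrder_readingOrder hΦ
    have hLf : IsPhiPartRel (ReadingOrder Φ f) Φ f :=
      isPhiPartRel_iff_forall_readingOrder.2 ⟨fun _ _ => id, hval⟩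
    refine ⟨ReadingOrder Φ f, ⟨⟨hL, hleL⟩, hLf⟩, fun r ⟨⟨hr, _⟩, hrf⟩ => ?_⟩
    exact eq_of_imp_of_total (isPhiPartRel_iff_forall_readingOrder.1 hrf).1
end

section
/- For every injective word W over ℤ_{>0} × ℤ_{>0}, the polynomial 𝔉(W) is either zero or equal to the slide polynomial 𝔉_c for a unique finitely supported c : ℤ_{>0} → ℕ. -/
/-!
Propagating the constraints `i_j ≤ val a_j` and `i_{j+1} < i_j` (at descents `a_{j+1} < a_j`)
from left to right gives a pointwise bound `maxEntry W` on all fillings, so `𝔉(W) = 0` as soon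
as it reaches `0`. Otherwise `maxEntry W` drops exactly at the descents of `W` (at a non-descent
`val` does not decrease), so the fillings of `W` are the antitone sequences below `maxEntry W`
that drop wherever it drops. For `c` the content of `maxEntry W`, the value sequence of `W_c` is
`maxEntry W` itself and `W_c` descends exactly where it drops, so `W` and `W_c` have the same
fillings. Uniqueness: the value sequence of `W_c` is its only filling of content `c`, and it
dominates every filling of `W_c`, so `c` can be read off from `𝔉_c`.
-/

/-- The coefficient of `𝔉(W)` on the monomial `∏ xᵢ^{m i}`, for an injective word `W`
over `ℤ_{>0} × ℤ_{>0}` (lexicographically ordered): the number of sequences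
`i₁ ≥ i₂ ≥ ⋯ ≥ i_r ≥ 1` with `i_j > i_{j+1}` whenever `a_j > a_{j+1}` and
`i_j ≤ val (a_j)` for all `j`, with exponent vector `m`. -/
noncomputable def slideCoeff (W : List (ℕ+ ×ₗ ℕ+)) (m : ℕ+ →₀ ℕ) : ℕ :=
  Nat.card {g : Fin W.length → ℕ+ // Antitone g ∧
    (∀ j k : Fin W.length, (k : ℕ) = (j : ℕ) + 1 → W.get k < W.get j → g k < g j) ∧
    (∀ j, g j ≤ (ofLex (W.get j)).1) ∧
    (∑ j, Finsupp.single (g j) 1) = m}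

/-- The injective word `W_c` attached to a finitely supported `c : ℤ_{>0} → ℕ`: it lists
the letters `(i,j)` with `c i > 0` and `1 ≤ j ≤ c i`, with `i` decreasing and, for each
fixed `i`, `j` increasing.  The slide polynomial `𝔉_c` is `𝔉(W_c)`. -/
noncomputable def Wc (c : ℕ+ →₀ ℕ) : List (ℕ+ ×ₗ ℕ+) :=
  ((c.support.sort (· ≤ ·)).reverse.map
    (fun i => (List.range (c i)).map (fun j => toLex (i, j.succPNat)))).flatten

namespace SlidePolynomial

abbrev Letter := ℕ+ ×ₗ ℕ+

def val (a : Letter) : ℕ+ := (ofLex a).1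

lemma val_mono : Monotone val := Prod.Lex.monotone_fst

lemma lt_of_val_lt {a b : Letter} (h : val a < val b) : a < b :=
  Prod.Lex.lt_iff.2 (Or.inl h)

noncomputable def content {n : ℕ} (g : Fin n → ℕ+) : ℕ+ →₀ ℕ := ∑ j, Finsupp.single (g j) 1

lemma content_eq_toFinsupp {n : ℕ} (g : Fin n → ℕ+) :
    content g = Multiset.toFinsupp (List.ofFn g) := by
  rw [← Fin.univ_val_map, ← Multiset.sum_map_singleton (Multiset.map g _), Multiset.map_map,
    map_multiset_sum, Multiset.map_map]
  simp [content, Function.comp_def, Multiset.toFinsupp_singleton, Finset.sum_eq_multiset_sum]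

def IsFilling (W : List Letter) (g : Fin W.length → ℕ+) : Prop :=
  Antitone g ∧ (∀ j k : Fin W.length, (k : ℕ) = j + 1 → W[k] < W[j] → g k < g j) ∧
    ∀ j, g j ≤ val W[j]

lemma slideCoeff_eq_card (W : List Letter) (m : ℕ+ →₀ ℕ) :
    slideCoeff W m = Nat.card {g // IsFilling W g ∧ content g = m} :=
  Nat.card_congr <| Equiv.subtypeEquivRight fun _ => by simp only [IsFilling, and_assoc]; rfl

/-- The pointwise largest filling of `W`, got by pushing the bounds `val` down through the
descents; when `W` has no filling it vanishes somewhere. -/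
def maxEntry (W : List Letter) : ℕ → ℕ
  | 0 => val (W.getI 0)
  | j + 1 => min (val (W.getI (j + 1)))
      (maxEntry W j - if W.getI (j + 1) < W.getI j then 1 else 0)

lemma maxEntry_le_val (W : List Letter) : ∀ j, maxEntry W j ≤ val (W.getI j)
  | 0 => le_rfl
  | _ + 1 => min_le_left _ _

lemma maxEntry_antitone (W : List Letter) : Antitone (maxEntry W) :=
  antitone_nat_of_succ_le fun _ => (min_le_right _ _).trans (Nat.sub_le _ _)

lemma maxEntry_succ (W : List Letter) {j : ℕ} (hj : j + 1 < W.length) :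
    maxEntry W (j + 1) =
      min (val W[j + 1] : ℕ) (maxEntry W j - if W[j + 1] < W[j] then 1 else 0) := by
  rw [maxEntry, List.getI_eq_getElem W hj, List.getI_eq_getElem W (by omega)]

lemma maxEntry_succ_eq_of_not_lt {W : List Letter} {j : ℕ} (hj : j + 1 < W.length)
    (h : ¬ W[j + 1] < W[j]) :
    maxEntry W (j + 1) = maxEntry W j := by
  have hval : (val W[j] : ℕ) ≤ val W[j + 1] := by exact_mod_cast val_mono (not_lt.1 h)
  have hle := maxEntry_le_val W j
  rw [List.getI_eq_getElem W (by omega)] at hle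
  rw [maxEntry_succ W hj, if_neg h]
  omega

lemma maxEntry_succ_lt_of_lt {W : List Letter} {j : ℕ} (hj : j + 1 < W.length)
    (hpos : 0 < maxEntry W j) (h : W[j + 1] < W[j]) : maxEntry W (j + 1) < maxEntry W j := by
  rw [maxEntry_succ W hj, if_pos h]
  omega

lemma IsFilling.le_maxEntry {W : List Letter} {g : Fin W.length → ℕ+} (hg : IsFilling W g)
    (j : Fin W.length) : (g j : ℕ) ≤ maxEntry W j := by
  obtain ⟨j, hj⟩ := j
  induction j with
  | zero => simpa [maxEntry, List.getI_eq_getElem W hj] using hg.2.2 ⟨0, hj⟩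
  | succ j ih =>
    have hj' : j < W.length := by omega
    have hprev : (g ⟨j, hj'⟩ : ℕ) ≤ maxEntry W j := ih hj'
    rw [maxEntry_succ W hj]
    refine le_min (by exact_mod_cast hg.2.2 ⟨j + 1, hj⟩) ?_
    split_ifs with hdesc
    · have : (g ⟨j + 1, hj⟩ : ℕ) < g ⟨j, hj'⟩ := hg.2.1 ⟨j, hj'⟩ ⟨j + 1, hj⟩ rfl hdesc
      omega
    · have : (g ⟨j + 1, hj⟩ : ℕ) ≤ g ⟨j, hj'⟩ := hg.1 (Fin.mk_le_mk.2 j.le_succ)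
      omega

def Fits (H : ℕ → ℕ) {n : ℕ} (g : Fin n → ℕ+) : Prop :=
  Antitone g ∧ (∀ j : Fin n, (g j : ℕ) ≤ H j) ∧
    ∀ j k : Fin n, (k : ℕ) = j + 1 → H k < H j → g k < g j

noncomputable def fitCount (n : ℕ) (H : ℕ → ℕ) (m : ℕ+ →₀ ℕ) : ℕ :=
  Nat.card {g : Fin n → ℕ+ // Fits H g ∧ content g = m}

lemma fitCount_congr {n : ℕ} {H H' : ℕ → ℕ} (h : ∀ j < n, H j = H' j) (m : ℕ+ →₀ ℕ) :
    fitCount n H m = fitCount n H' m := by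
  simp only [fitCount, Fits, fun j : Fin n => h j j.2]

lemma isFilling_iff_fits {W : List Letter} (hpos : ∀ j < W.length, 0 < maxEntry W j)
    {g : Fin W.length → ℕ+} : IsFilling W g ↔ Fits (maxEntry W) g := by
  constructor
  · intro hg
    refine ⟨hg.1, hg.le_maxEntry, fun ⟨j, _⟩ ⟨k, hk⟩ hjk hdrop => hg.2.1 _ _ hjk ?_⟩
    obtain rfl : k = j + 1 := hjk
    by_contra hasc
    exact hdrop.ne (maxEntry_succ_eq_of_not_lt hk hasc)
  · rintro ⟨hanti, hle, hdrop⟩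
    refine ⟨hanti, fun ⟨j, hj⟩ ⟨k, hk⟩ hjk hdesc => hdrop _ _ hjk ?_, fun j => ?_⟩
    · obtain rfl : k = j + 1 := hjk
      exact maxEntry_succ_lt_of_lt hk (hpos j hj) hdesc
    · have hval := maxEntry_le_val W j
      rw [List.getI_eq_getElem W j.2] at hval
      exact_mod_cast (hle j).trans hval

lemma slideCoeff_eq_fitCount {W : List Letter} (hpos : ∀ j < W.length, 0 < maxEntry W j)
    (m : ℕ+ →₀ ℕ) : slideCoeff W m = fitCount W.length (maxEntry W) m := by
  simp only [slideCoeff_eq_card, fitCount, isFilling_iff_fits hpos]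

lemma slideCoeff_eq_zero {W : List Letter} (h : ∃ j < W.length, maxEntry W j = 0) (m : ℕ+ →₀ ℕ) :
    slideCoeff W m = 0 := by
  obtain ⟨j, hj, hzero⟩ := h
  have : IsEmpty {g // IsFilling W g ∧ content g = m} :=
    ⟨fun ⟨g, hg, _⟩ => by
      have hle : (g ⟨j, hj⟩ : ℕ) ≤ maxEntry W j := hg.le_maxEntry ⟨j, hj⟩
      have := (g ⟨j, hj⟩).pos
      omega⟩
  rw [slideCoeff_eq_card, Nat.card_of_isEmpty]

lemma map_val_Wc (c : ℕ+ →₀ ℕ) :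
    (Wc c).map val =
      ((c.support.sort (· ≤ ·)).reverse.map fun i => List.replicate (c i) i).flatten := by
  simp only [Wc, List.map_flatten, List.map_map]
  congr 1
  refine List.map_congr_left fun i _ => ?_
  simp [Function.comp_def, val, List.map_const']

lemma coe_map_val_Wc (c : ℕ+ →₀ ℕ) :
    (((Wc c).map val : List ℕ+) : Multiset ℕ+) = Finsupp.toMultiset c := by
  rw [map_val_Wc, ← Multiset.coe_join]
  simp only [Finsupp.toMultiset_apply, Finsupp.sum, List.map_reverse, ← Multiset.map_coe,
    Multiset.coe_reverse, Finset.sort_eq, Multiset.join, Finset.sum_eq_multiset_sum,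
    Multiset.map_map]
  simp [Multiset.nsmul_singleton, Multiset.coe_replicate]

lemma isChain_Wc (c : ℕ+ →₀ ℕ) :
    (Wc c).IsChain fun a b => val b < val a ∨ a < b ∧ val b = val a := by
  have hrow : ∀ i, ((List.range (c i)).map fun j => toLex (i, j.succPNat)).IsChain
      fun a b => val b < val a ∨ a < b ∧ val b = val a := fun i =>
    (List.isChain_map _).2 <| List.pairwise_lt_range.isChain.imp fun _ _ h =>
      Or.inr ⟨Prod.Lex.lt_iff.2 (Or.inr ⟨rfl, Nat.succPNat_lt_succPNat.2 h⟩), rfl⟩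
  have hdecr : (c.support.sort (· ≤ ·)).reverse.IsChain (· > ·) :=
    (List.pairwise_reverse.2 (Finset.sortedLT_sort c.support).pairwise).isChain
  rw [Wc, List.isChain_flatten (by simp [List.range_eq_nil])]
  refine ⟨by simpa using fun i _ => hrow i, (List.isChain_map _).2 (hdecr.imp ?_)⟩
  intro i i' hlt a ha b hb
  obtain ⟨_, -, rfl⟩ := List.mem_map.1 (List.mem_of_mem_getLast? ha)
  obtain ⟨_, -, rfl⟩ := List.mem_map.1 (List.mem_of_mem_head? hb)
  exact Or.inl hlt

lemma sortedGE_map_val_Wc (c : ℕ+ →₀ ℕ) : ((Wc c).map val).SortedGE :=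
  List.IsChain.sortedGE <| (List.isChain_map _).2 <|
    (isChain_Wc c).imp fun _ _ h => h.elim le_of_lt fun h => h.2.le

lemma map_val_Wc_content {n : ℕ} {H : Fin n → ℕ+} (hH : Antitone H) :
    (Wc (content H)).map val = List.ofFn H := by
  refine (Multiset.coe_eq_coe.1 ?_).eq_of_sortedGE (sortedGE_map_val_Wc _) hH.sortedGE_ofFn
  rw [coe_map_val_Wc, content_eq_toFinsupp, Multiset.toFinsupp_toMultiset]

lemma maxEntry_Wc (c : ℕ+ →₀ ℕ) {j : ℕ} (hj : j < (Wc c).length) :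
    maxEntry (Wc c) j = val (Wc c)[j] := by
  induction j with
  | zero => rw [maxEntry, List.getI_eq_getElem _ hj]
  | succ j ih =>
    rw [maxEntry_succ _ hj, ih (by omega)]
    rcases List.isChain_iff_getElem.1 (isChain_Wc c) j hj with hdrop | ⟨hasc, heq⟩
    · rw [if_pos (lt_of_val_lt hdrop)]
      have : (val (Wc c)[j + 1] : ℕ) < val (Wc c)[j] := hdrop
      omega
    · rw [if_neg hasc.not_gt, heq]
      simp

lemma isFilling_val_Wc (c : ℕ+ →₀ ℕ) : IsFilling (Wc c) fun j => val (Wc c)[j] := by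
  refine ⟨fun j k hjk => ?_, fun ⟨j, _⟩ ⟨k, hk⟩ hjk hdesc => ?_, fun _ => le_rfl⟩
  · simpa using List.sortedGE_iff_getElem_ge_getElem_of_le.1 (sortedGE_map_val_Wc c)
      (i := k) (j := j) (hi := by simp) (hj := by simp) hjk
  · obtain rfl : k = j + 1 := hjk
    rcases List.isChain_iff_getElem.1 (isChain_Wc c) j hk with hdrop | ⟨hasc, -⟩
    · exact hdrop
    · exact absurd hdesc hasc.not_gt

lemma content_val_Wc (c : ℕ+ →₀ ℕ) : content (fun j => val (Wc c)[j]) = c := by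
  simp only [content_eq_toFinsupp, Fin.getElem_fin, List.ofFn_getElem_eq_map, coe_map_val_Wc,
    Finsupp.toMultiset_toFinsupp]

lemma slideCoeff_Wc_self (c : ℕ+ →₀ ℕ) : slideCoeff (Wc c) c = 1 := by
  rw [slideCoeff_eq_card, Nat.card_eq_one_iff_unique]
  refine ⟨⟨fun ⟨g, hg, hgc⟩ ⟨g', hg', hg'c⟩ => Subtype.ext <| List.ofFn_injective ?_⟩,
    ⟨⟨_, isFilling_val_Wc c, content_val_Wc c⟩⟩⟩
  rw [← map_val_Wc_content hg.1, ← map_val_Wc_content hg'.1, hgc, hg'c]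

lemma forall₂_le_map_val_Wc {c c' : ℕ+ →₀ ℕ} (h : slideCoeff (Wc c') c ≠ 0) :
    List.Forall₂ (· ≤ ·) ((Wc c).map val) ((Wc c').map val) := by
  rw [slideCoeff_eq_card] at h
  obtain ⟨⟨g, hg, rfl⟩⟩ := (Nat.card_ne_zero.1 h).1
  rw [map_val_Wc_content hg.1, List.forall₂_iff_get]
  exact ⟨by simp, fun j _ hj => by simpa using hg.2.2 ⟨j, by simpa using hj⟩⟩

lemma eq_of_forall₂_le {α : Type*} [PartialOrder α] {l l' : List α}
    (h : List.Forall₂ (· ≤ ·) l l') (h' : List.Forall₂ (· ≤ ·) l' l) : l = l' := by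
  induction h with
  | nil => rfl
  | cons hab _ ih =>
    obtain _ | ⟨hba, h'⟩ := h'
    rw [le_antisymm hab hba, ih h']

lemma eq_of_slideCoeff_Wc_eq {c c' : ℕ+ →₀ ℕ}
    (h : ∀ m, slideCoeff (Wc c) m = slideCoeff (Wc c') m) : c = c' := by
  have hle := forall₂_le_map_val_Wc (c := c) (c' := c') (by simp [← h, slideCoeff_Wc_self])
  have hge := forall₂_le_map_val_Wc (c := c') (c' := c) (by simp [h, slideCoeff_Wc_self])
  rw [← Finsupp.toMultiset_toFinsupp c, ← Finsupp.toMultiset_toFinsupp c', ← coe_map_val_Wc,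
    ← coe_map_val_Wc, eq_of_forall₂_le hle hge]

lemma exists_slideCoeff_eq_Wc {W : List Letter} (hpos : ∀ j < W.length, 0 < maxEntry W j) :
    ∃ c, ∀ m, slideCoeff W m = slideCoeff (Wc c) m := by
  let H : Fin W.length → ℕ+ := fun j => ⟨maxEntry W j, hpos j j.2⟩
  obtain ⟨c, hWc⟩ : ∃ c, (Wc c).map val = List.ofFn H :=
    ⟨_, map_val_Wc_content fun _ _ hjk => PNat.coe_le_coe _ _ |>.1 (maxEntry_antitone W hjk)⟩
  have hlen : W.length = (Wc c).length := by simpa using congrArg List.length hWc.symm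
  have hposWc : ∀ j < (Wc c).length, 0 < maxEntry (Wc c) j :=
    fun j hj => maxEntry_Wc c hj ▸ PNat.pos _
  refine ⟨c, fun m => ?_⟩
  rw [slideCoeff_eq_fitCount hpos, slideCoeff_eq_fitCount hposWc, hlen]
  refine fitCount_congr (fun j hj => ?_) m
  have := List.getElem_of_eq hWc (by simpa using hj)
  simp only [List.getElem_map, List.getElem_ofFn] at this
  rw [maxEntry_Wc _ hj, this]
  rfl

end SlidePolynomial

open SlidePolynomial

theorem slide_of_word_general {W : List (ℕ+ ×ₗ ℕ+)} :
    (∀ m : ℕ+ →₀ ℕ, slideCoeff W m = 0) ∨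
    (∃! c : ℕ+ →₀ ℕ, ∀ m : ℕ+ →₀ ℕ, slideCoeff W m = slideCoeff (Wc c) m) := by
  by_cases hzero : ∃ j < W.length, maxEntry W j = 0
  · exact Or.inl (slideCoeff_eq_zero hzero)
  · push Not at hzero
    obtain ⟨c, hc⟩ := exists_slideCoeff_eq_Wc fun j hj => Nat.pos_of_ne_zero (hzero j hj)
    exact Or.inr ⟨c, hc, fun c' hc' => eq_of_slideCoeff_Wc_eq fun m => (hc' m).symm.trans (hc m)⟩

/-- For every injective word `W` over `ℤ_{>0} × ℤ_{>0}`, the polynomial `𝔉(W)` is either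
zero or equal to the slide polynomial `𝔉_c` for a unique finitely supported
`c : ℤ_{>0} → ℕ`. -/
theorem slide_of_word {W : List (ℕ+ ×ₗ ℕ+)} (hW : W.Nodup) :
    (∀ m : ℕ+ →₀ ℕ, slideCoeff W m = 0) ∨
    (∃! c : ℕ+ →₀ ℕ, ∀ m : ℕ+ →₀ ℕ, slideCoeff W m = slideCoeff (Wc c) m) :=
  slide_of_word_general
end

section
/- The forest polynomials 𝔓_F, as F ranges over all indexed forests, form a basis of the polynomial ring ℤ[x_1, x_2, …] as a ℤ-module. -/
open scoped Classical

/-- A rooted plane binary tree: either a single leaf, or an ordered pair of subtrees. -/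
inductive PBT : Type
  | leaf : PBT
  | node : PBT → PBT → PBT
  deriving DecidableEq

namespace PBT

/-- The number of leaves of a plane binary tree (one more than its internal nodes). -/
def leaves : PBT → ℕ+
  | .leaf => 1
  | .node l r => leaves l + leaves r

/-- A labeling of the internal nodes of a plane binary tree by positive integers. -/
inductive Labeling : PBT → Type
  | leaf : Labeling .leaf
  | node {l r : PBT} (k : ℕ+) : Labeling l → Labeling r → Labeling (.node l r)

/-- The label of the root, if the tree has an internal node. -/
def Labeling.rootVal? : {T : PBT} → Labeling T → Option ℕ+
  | _, .leaf => none
  | _, .node k _ _ => some k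

/-- Validity of a labeling of the internal nodes of a tree whose leaves are labeled
`a, a+1, …` from left to right: every internal node `v` satisfies
`f v ≤` (the label of the leftmost leaf descendant of `v`), a left child `u` of `v`
satisfies `f u ≤ f v`, and a right child `u` of `v` satisfies `f u > f v`. -/
def Labeling.Valid : {T : PBT} → Labeling T → ℕ+ → Prop
  | _, .leaf, _ => True
  | _, @Labeling.node l _r k labl labr, a =>
      k ≤ a ∧ (∀ x ∈ labl.rootVal?, x ≤ k) ∧ (∀ x ∈ labr.rootVal?, k < x) ∧
      labl.Valid a ∧ labr.Valid (a + l.leaves)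

/-- The exponent vector `∏_{v ∈ IN(T)} x_{f v}` of a labeling. -/
noncomputable def Labeling.mon : {T : PBT} → Labeling T → (ℕ+ →₀ ℕ)
  | _, .leaf => 0
  | _, .node k labl labr => Finsupp.single k 1 + labl.mon + labr.mon

/-- The (finite) set of labelings of `T` all of whose labels lie in `{1, …, B}`. -/
noncomputable def labsUpTo : (T : PBT) → (B : ℕ+) → Finset (Labeling T)
  | .leaf, _ => {Labeling.leaf}
  | .node l r, B =>
      ((((Finset.range B).image Nat.succPNat) ×ˢ (labsUpTo l B ×ˢ labsUpTo r B)).image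
        (fun x => Labeling.node x.1 x.2.1 x.2.2))

/-- The forest polynomial of a single indexed tree `(T, [a, a + leaves T − 1])`:
the sum of the monomials of all valid labelings of its internal nodes.  (Every valid
labeling has labels `< a + leaves T`, so the enumeration below is exhaustive.) -/
noncomputable def treePoly (T : PBT) (a : ℕ+) : MvPolynomial ℕ+ ℤ :=
  ∑ lab ∈ (labsUpTo T (a + T.leaves)).filter (fun lab => lab.Valid a),
    MvPolynomial.monomial lab.mon 1

end PBT

/-- An indexed forest: a finite collection of plane binary trees `T` with at least one
internal node, each carried by an interval `[a, a + leaves T − 1] ⊆ ℤ_{>0}` labeling its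
leaves from left to right, the intervals being pairwise disjoint. -/
structure IndexedForest : Type where
  trees : Finset (PBT × ℕ+)
  nontrivial : ∀ p ∈ trees, p.1 ≠ PBT.leaf
  disjoint : ∀ p ∈ trees, ∀ q ∈ trees, p ≠ q →
    Disjoint (Set.Icc (p.2 : ℕ) ((p.2 : ℕ) + (p.1.leaves : ℕ) - 1))
             (Set.Icc (q.2 : ℕ) ((q.2 : ℕ) + (q.1.leaves : ℕ) - 1))

/-- The forest polynomial `𝔓_F`: the sum of the monomials `∏_{v ∈ IN(F)} x_{f v}` over
all valid labelings `f` of the internal nodes of `F`; equivalently, the product of the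
polynomials of its indexed trees. -/
noncomputable def forestPoly (F : IndexedForest) : MvPolynomial ℕ+ ℤ :=
  ∏ p ∈ F.trees, PBT.treePoly p.1 p.2


/-!
Order monomials by the weight `∑ i μ_i`. Labelling every internal node by the leftmost leaf
below it is the unique valid labelling of maximal weight, so `𝔓_F = x^{c(F)} + (lighter terms)`,
where `c(F)_i` (`IndexedForest.leadExp`) counts the internal nodes of `F` whose leftmost leaf
is `i`. The code `c` is a bijection from indexed forests onto monomials: if `m` is the smallest
index with `c(F)_m ≠ 0`, then `F` has a tree with leftmost leaf `m`, and removing its root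
lowers `c` by `x_m`; conversely `x_m` is put back by grafting the (possibly trivial) trees at `m`
and just after it onto a new root. A family that is unitriangular in this sense and indexed
bijectively by the monomials is a basis.
-/

namespace MvPolynomial

variable {σ R ι : Type*}

section CommSemiring

variable [CommSemiring R] (w : σ → ℕ)

def HasLeadingMonomial (P : MvPolynomial σ R) (τ : σ →₀ ℕ) : Prop :=
  P.coeff τ = 1 ∧ ∀ μ ∈ P.support, μ ≠ τ → Finsupp.weight w μ < Finsupp.weight w τ

variable {w}

theorem hasLeadingMonomial_one : HasLeadingMonomial w (1 : MvPolynomial σ R) 0 := by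
  refine ⟨coeff_zero_one, fun μ hμ hne => absurd ?_ hne⟩
  simp_all [coeff_one, eq_comm]

theorem HasLeadingMonomial.mul {P Q : MvPolynomial σ R} {τ τ' : σ →₀ ℕ}
    (hP : HasLeadingMonomial w P τ) (hQ : HasLeadingMonomial w Q τ') :
    HasLeadingMonomial w (P * Q) (τ + τ') := by
  have hle : ∀ μ ∈ P.support, Finsupp.weight w μ ≤ Finsupp.weight w τ := fun μ hμ => by
    rcases eq_or_ne μ τ with rfl | hne
    exacts [le_rfl, (hP.2 μ hμ hne).le]
  have hle' : ∀ μ ∈ Q.support, Finsupp.weight w μ ≤ Finsupp.weight w τ' := fun μ hμ => by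
    rcases eq_or_ne μ τ' with rfl | hne
    exacts [le_rfl, (hQ.2 μ hμ hne).le]
  have hmax : ∀ μ ∈ P.support, ∀ μ' ∈ Q.support,
      Finsupp.weight w τ + Finsupp.weight w τ' ≤ Finsupp.weight w μ + Finsupp.weight w μ' →
      μ = τ ∧ μ' = τ' := by
    intro μ hμ μ' hμ' h
    by_contra hne
    rcases not_and_or.1 hne with hne | hne
    · linarith [hP.2 μ hμ hne, hle' μ' hμ']
    · linarith [hle μ hμ, hQ.2 μ' hμ' hne]
  refine ⟨?_, fun μ hμ hne => ?_⟩
  · have hmem : (τ, τ') ∈ Finset.HasAntidiagonal.antidiagonal (τ + τ') :=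
      Finset.HasAntidiagonal.mem_antidiagonal.2 rfl
    rw [coeff_mul, Finset.sum_eq_single_of_mem _ hmem, hP.1, hQ.1, one_mul]
    rintro ⟨μ, μ'⟩ hmem hne
    rw [Finset.HasAntidiagonal.mem_antidiagonal] at hmem
    by_contra h0
    have := hmax μ (mem_support_iff.2 (left_ne_zero_of_mul h0)) μ'
      (mem_support_iff.2 (right_ne_zero_of_mul h0)) (by rw [← map_add, ← map_add, hmem])
    exact hne (Prod.ext this.1 this.2)
  · obtain ⟨μ₁, hμ₁, μ₂, hμ₂, rfl⟩ := Finset.mem_add.1 (support_mul P Q hμ)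
    rw [map_add, map_add]
    refine lt_of_le_of_ne (add_le_add (hle μ₁ hμ₁) (hle' μ₂ hμ₂)) fun h => hne ?_
    obtain ⟨rfl, rfl⟩ := hmax μ₁ hμ₁ μ₂ hμ₂ h.ge
    rfl

theorem HasLeadingMonomial.prod {s : Finset ι} {P : ι → MvPolynomial σ R} {τ : ι → σ →₀ ℕ}
    (h : ∀ i ∈ s, HasLeadingMonomial w (P i) (τ i)) :
    HasLeadingMonomial w (∏ i ∈ s, P i) (∑ i ∈ s, τ i) := by
  induction s using Finset.induction_on with
  | empty => simpa using hasLeadingMonomial_one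
  | insert i s hi ih =>
    rw [Finset.prod_insert hi, Finset.sum_insert hi]
    exact (h i (s.mem_insert_self i)).mul (ih fun j hj => h j (Finset.mem_insert_of_mem hj))

end CommSemiring

section CommRing

variable [CommRing R] {w : σ → ℕ} {P : ι → MvPolynomial σ R} {τ : ι → σ →₀ ℕ}

theorem linearIndependent_of_hasLeadingMonomial (hP : ∀ i, HasLeadingMonomial w (P i) (τ i))
    (hτ : Function.Injective τ) : LinearIndependent R P := by
  rw [linearIndependent_iff']
  intro s g hsum
  by_contra! hg
  obtain ⟨i, hi, hmax⟩ := (s.filter (g · ≠ 0)).exists_max_image (fun i => Finsupp.weight w (τ i))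
    (by simpa [Finset.filter_nonempty_iff] using hg)
  rw [Finset.mem_filter] at hi
  -- the heaviest leading monomial occurs in no other `P j` with `g j ≠ 0`
  have hcoeff := congrArg (coeff (τ i)) hsum
  rw [coeff_sum, coeff_zero, Finset.sum_eq_single i, coeff_smul, (hP i).1, smul_eq_mul,
    mul_one] at hcoeff
  · exact hi.2 hcoeff
  · intro j hj hji
    rw [coeff_smul, smul_eq_mul]
    by_contra h0
    have := (hP j).2 (τ i) (mem_support_iff.2 (right_ne_zero_of_mul h0)) (hτ.ne hji.symm)
    exact (hmax j (Finset.mem_filter.2 ⟨hj, left_ne_zero_of_mul h0⟩)).not_gt this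
  · exact fun h => absurd hi.1 h

theorem span_eq_top_of_hasLeadingMonomial (hP : ∀ i, HasLeadingMonomial w (P i) (τ i))
    (hτ : Function.Surjective τ) : Submodule.span R (Set.range P) = ⊤ := by
  have hmono : ∀ n μ, Finsupp.weight w μ < n →
      monomial μ (1 : R) ∈ Submodule.span R (Set.range P) := by
    intro n
    induction n using Nat.strong_induction_on with
    | _ n ih =>
    intro μ hμ
    obtain ⟨i, rfl⟩ := hτ μ
    have hsupp : P i - monomial (τ i) 1 ∈
        restrictSupport R {ν | Finsupp.weight w ν < Finsupp.weight w (τ i)} := by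
      rw [mem_restrictSupport_iff]
      intro ν hν
      rw [Finset.mem_coe, mem_support_iff, coeff_sub, coeff_monomial] at hν
      have hne : ν ≠ τ i := by rintro rfl; simp [(hP i).1] at hν
      rw [if_neg hne.symm, sub_zero] at hν
      exact (hP i).2 ν (mem_support_iff.2 hν) hne
    have hlower : P i - monomial (τ i) 1 ∈ Submodule.span R (Set.range P) := by
      rw [restrictSupport_eq_span] at hsupp
      refine Submodule.span_le.2 ?_ hsupp
      rintro _ ⟨ν, hν, rfl⟩
      exact ih _ hμ ν hν
    simpa using Submodule.sub_mem _ (Submodule.subset_span (Set.mem_range_self i)) hlower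
  rw [eq_top_iff, ← (basisMonomials σ R).span_eq, Submodule.span_le]
  rintro _ ⟨μ, rfl⟩
  simpa using hmono _ μ (Nat.lt_succ_self _)

end CommRing

end MvPolynomial

namespace PBT

@[simp]
theorem coe_leaves_node (l r : PBT) : ((node l r).leaves : ℕ) = l.leaves + r.leaves :=
  PNat.add_coe _ _

@[simp]
theorem leaves_leaf : leaf.leaves = 1 := rfl

noncomputable def leadExp : PBT → ℕ+ → (ℕ+ →₀ ℕ)
  | leaf, _ => 0
  | node l r, a => Finsupp.single a 1 + l.leadExp a + r.leadExp (a + l.leaves)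

@[simp]
theorem leadExp_leaf (a : ℕ+) : leaf.leadExp a = 0 := rfl

theorem leadExp_self_ne_zero {T : PBT} (hT : T ≠ leaf) (a : ℕ+) : T.leadExp a a ≠ 0 := by
  cases T with
  | leaf => exact absurd rfl hT
  | node l r => simp [leadExp]

theorem le_of_mem_support_leadExp :
    ∀ {T : PBT} {a i : ℕ+}, i ∈ (T.leadExp a).support → a ≤ i
  | leaf, _, _, h => by simp at h
  | node l r, a, i, h => by
    simp only [leadExp] at h
    rcases Finset.mem_union.1 (Finsupp.support_add h) with h | h
    · rcases Finset.mem_union.1 (Finsupp.support_add h) with h | h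
      · exact (Finset.mem_singleton.1 (Finsupp.support_single_subset h)).ge
      · exact le_of_mem_support_leadExp h
    · exact (PNat.lt_add_right a l.leaves).le.trans (le_of_mem_support_leadExp h)

def leadLabeling : (T : PBT) → ℕ+ → Labeling T
  | leaf, _ => .leaf
  | node l r, a => .node a (l.leadLabeling a) (r.leadLabeling (a + l.leaves))

theorem mon_leadLabeling : ∀ (T : PBT) (a : ℕ+), (T.leadLabeling a).mon = T.leadExp a
  | leaf, _ => rfl
  | node l r, a => by
    simp only [leadLabeling, Labeling.mon, leadExp, mon_leadLabeling l, mon_leadLabeling r]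

theorem eq_of_mem_rootVal?_leadLabeling {T : PBT} {a x : ℕ+}
    (h : x ∈ (T.leadLabeling a).rootVal?) : x = a := by
  cases T <;> simp_all [leadLabeling, Labeling.rootVal?]

theorem valid_leadLabeling : ∀ (T : PBT) (a : ℕ+), (T.leadLabeling a).Valid a
  | leaf, _ => trivial
  | node l r, a => by
    refine ⟨le_rfl, fun x hx => (eq_of_mem_rootVal?_leadLabeling hx).le, fun x hx => ?_,
      valid_leadLabeling l a, valid_leadLabeling r _⟩
    rw [eq_of_mem_rootVal?_leadLabeling hx]
    exact PNat.lt_add_right a l.leaves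

theorem leadLabeling_mem_labsUpTo :
    ∀ (T : PBT) {a B : ℕ+}, (a : ℕ) + T.leaves ≤ B + 1 → T.leadLabeling a ∈ labsUpTo T B
  | leaf, _, _, _ => Finset.mem_singleton_self _
  | node l r, a, B, h => by
    simp only [coe_leaves_node] at h
    have := l.leaves.pos
    have := r.leaves.pos
    refine Finset.mem_image.2 ⟨(a, l.leadLabeling a, r.leadLabeling (a + l.leaves)), ?_, rfl⟩
    refine Finset.mem_product.2 ⟨?_, Finset.mem_product.2
      ⟨leadLabeling_mem_labsUpTo l (by omega), leadLabeling_mem_labsUpTo r ?_⟩⟩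
    · exact Finset.mem_image.2 ⟨a.natPred, Finset.mem_range.2 (by simp [PNat.natPred]; omega),
        a.succPNat_natPred⟩
    · rw [PNat.add_coe]
      omega

section weight

local notation "wt" => Finsupp.weight ((↑) : ℕ+ → ℕ)

theorem Labeling.Valid.weight_mon_le {T : PBT} {lab : Labeling T} {a : ℕ+} (h : lab.Valid a) :
    wt lab.mon ≤ wt (T.leadExp a) := by
  induction lab generalizing a with
  | leaf => exact le_rfl
  | node k labl labr ihl ihr =>
    obtain ⟨hk, -, -, hl, hr⟩ := h
    simp only [Labeling.mon, leadExp, map_add, Finsupp.weight_single, smul_eq_mul, one_mul]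
    have := ihl hl
    have := ihr hr
    have : (k : ℕ) ≤ a := hk
    omega

theorem Labeling.Valid.eq_leadLabeling {T : PBT} {lab : Labeling T} {a : ℕ+} (h : lab.Valid a)
    (heq : wt lab.mon = wt (T.leadExp a)) : lab = T.leadLabeling a := by
  induction lab generalizing a with
  | leaf => rfl
  | node k labl labr ihl ihr =>
    obtain ⟨hk, -, -, hl, hr⟩ := h
    simp only [Labeling.mon, leadExp, map_add, Finsupp.weight_single, smul_eq_mul, one_mul] at heq
    have := hl.weight_mon_le
    have := hr.weight_mon_le
    have : (k : ℕ) ≤ a := hk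
    rw [leadLabeling, PNat.coe_injective (show (k : ℕ) = a by omega), ihl hl (by omega),
      ihr hr (by omega)]

end weight

open MvPolynomial in
theorem hasLeadingMonomial_treePoly (T : PBT) (a : ℕ+) :
    HasLeadingMonomial (↑) (treePoly T a) (T.leadExp a) := by
  set labs := (labsUpTo T (a + T.leaves)).filter (fun lab => lab.Valid a)
  have hcoeff : ∀ μ, (treePoly T a).coeff μ = ∑ lab ∈ labs, if lab.mon = μ then 1 else 0 :=
    fun μ => by simp only [treePoly, coeff_sum, coeff_monomial, labs]
  have hlead : T.leadLabeling a ∈ labs := Finset.mem_filter.2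
    ⟨leadLabeling_mem_labsUpTo T (by rw [PNat.add_coe]; omega), valid_leadLabeling T a⟩
  have hvalid : ∀ lab ∈ labs, lab.Valid a := fun lab h => (Finset.mem_filter.1 h).2
  refine ⟨?_, fun μ hμ hne => ?_⟩
  · rw [hcoeff, Finset.sum_eq_single_of_mem _ hlead, if_pos (mon_leadLabeling T a)]
    intro lab hlab hne
    rw [if_neg]
    exact fun h => hne ((hvalid lab hlab).eq_leadLabeling (by rw [h]))
  · rw [mem_support_iff, hcoeff] at hμ
    obtain ⟨lab, hlab, hne0⟩ := Finset.exists_ne_zero_of_sum_ne_zero hμ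
    have hmon : lab.mon = μ := by by_contra h; simp [h] at hne0
    subst hmon
    refine lt_of_le_of_ne (hvalid lab hlab).weight_mon_le fun h => hne ?_
    rw [(hvalid lab hlab).eq_leadLabeling h, mon_leadLabeling]

end PBT

namespace IndexedForest

open PBT

variable {F : IndexedForest} {p q : PBT × ℕ+} {m : ℕ+}

@[ext]
theorem ext {F G : IndexedForest} (h : F.trees = G.trees) : F = G := by
  cases F; cases G; cases h; rfl

def Separated (p q : PBT × ℕ+) : Prop :=
  (p.2 : ℕ) + p.1.leaves ≤ q.2 ∨ (q.2 : ℕ) + q.1.leaves ≤ p.2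

theorem disjoint_Icc_iff (p q : PBT × ℕ+) :
    Disjoint (Set.Icc (p.2 : ℕ) ((p.2 : ℕ) + (p.1.leaves : ℕ) - 1))
      (Set.Icc (q.2 : ℕ) ((q.2 : ℕ) + (q.1.leaves : ℕ) - 1)) ↔ Separated p q := by
  have := p.1.leaves.pos
  have := q.1.leaves.pos
  rw [Set.disjoint_left, Separated]
  constructor
  · intro h
    by_contra! hlt
    by_cases hpq : (p.2 : ℕ) ≤ q.2
    · exact h ⟨hpq, by omega⟩ ⟨le_rfl, by omega⟩
    · exact h ⟨le_rfl, by omega⟩ ⟨by omega, by omega⟩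
  · rintro h x ⟨_, _⟩ ⟨_, _⟩
    omega

theorem add_leaves_le (hp : p ∈ F.trees) (hq : q ∈ F.trees) (hne : p ≠ q) (hle : p.2 ≤ q.2) :
    (p.2 : ℕ) + p.1.leaves ≤ q.2 := by
  have := q.1.leaves.pos
  have : (p.2 : ℕ) ≤ q.2 := hle
  rcases (disjoint_Icc_iff p q).1 (F.disjoint p hp q hq hne) with h | h <;> omega

theorem eq_of_mem_of_mem {T T' : PBT} {s : ℕ+} (hT : (T, s) ∈ F.trees)
    (hT' : (T', s) ∈ F.trees) : T = T' := by
  by_contra hne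
  have : (s : ℕ) + T.leaves ≤ s := add_leaves_le hT hT' (by simpa using hne) le_rfl
  have := T.leaves.pos
  omega

noncomputable def treeAt (F : IndexedForest) (s : ℕ+) : PBT :=
  if h : ∃ T, (T, s) ∈ F.trees then h.choose else .leaf

theorem treeAt_eq_of_mem {T : PBT} {s : ℕ+} (h : (T, s) ∈ F.trees) : F.treeAt s = T := by
  have hex : ∃ T, (T, s) ∈ F.trees := ⟨T, h⟩
  rw [treeAt, dif_pos hex]
  exact eq_of_mem_of_mem hex.choose_spec h

theorem treeAt_mem_or_eq_leaf (F : IndexedForest) (s : ℕ+) :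
    (F.treeAt s, s) ∈ F.trees ∨ F.treeAt s = .leaf := by
  unfold treeAt
  split_ifs with h
  exacts [Or.inl h.choose_spec, Or.inr rfl]

theorem treeAt_eq {T : PBT} {s : ℕ+} (hmem : T ≠ .leaf → (T, s) ∈ F.trees)
    (huniq : ∀ q ∈ F.trees, q.2 = s → q.1 = T) : F.treeAt s = T := by
  rcases (F.treeAt_mem_or_eq_leaf s).symm with h | h
  · by_cases hT : T = .leaf
    · rw [h, hT]
    · exact treeAt_eq_of_mem (hmem hT)
  · exact huniq _ h rfl

theorem add_leaves_treeAt_le {s : ℕ+} (hq : q ∈ F.trees) (hs : s ≤ q.2)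
    (hne : q ≠ (F.treeAt s, s)) : (s : ℕ) + (F.treeAt s).leaves ≤ q.2 := by
  have hs' : s ≠ q.2 := fun h => hne (Prod.ext (treeAt_eq_of_mem (h ▸ hq)).symm h.symm)
  rcases F.treeAt_mem_or_eq_leaf s with h | h
  · exact add_leaves_le h hq hne.symm hs
  · rw [h, leaves_leaf, PNat.one_coe]
    exact Nat.succ_le_of_lt ((PNat.coe_lt_coe _ _).2 (lt_of_le_of_ne hs hs'))

noncomputable def leadExp (F : IndexedForest) : ℕ+ →₀ ℕ :=
  ∑ p ∈ F.trees, p.1.leadExp p.2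

theorem hasLeadingMonomial_forestPoly (F : IndexedForest) :
    MvPolynomial.HasLeadingMonomial (↑) (forestPoly F) F.leadExp :=
  MvPolynomial.HasLeadingMonomial.prod fun p _ => p.1.hasLeadingMonomial_treePoly p.2

theorem leadExp_apply_ne_zero (hp : p ∈ F.trees) : F.leadExp p.2 ≠ 0 := by
  rw [leadExp, Finsupp.finsetSum_apply]
  refine (Nat.pos_of_ne_zero (leadExp_self_ne_zero (F.nontrivial p hp) p.2)).trans_le ?_ |>.ne'
  exact Finset.single_le_sum (f := fun q : PBT × ℕ+ => q.1.leadExp q.2 p.2)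
    (fun _ _ => Nat.zero_le _) hp

theorem exists_le_of_mem_support {i : ℕ+} (hi : i ∈ F.leadExp.support) :
    ∃ p ∈ F.trees, p.2 ≤ i := by
  obtain ⟨p, hp, hi⟩ := Finset.mem_biUnion.1 (Finsupp.support_finsetSum hi)
  exact ⟨p, hp, le_of_mem_support_leadExp hi⟩

theorem le_snd_of_mem_trees (hm : ∀ i ∈ F.leadExp.support, m ≤ i) (hp : p ∈ F.trees) :
    m ≤ p.2 :=
  hm _ (Finsupp.mem_support_iff.2 (leadExp_apply_ne_zero hp))

theorem trees_eq_empty_of_leadExp_eq_zero (h : F.leadExp = 0) : F.trees = ∅ :=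
  Finset.eq_empty_of_forall_notMem fun p hp => leadExp_apply_ne_zero hp (by rw [h]; rfl)

def eraseTree (F : IndexedForest) (p : PBT × ℕ+) : IndexedForest where
  trees := F.trees.erase p
  nontrivial q hq := F.nontrivial q (Finset.mem_of_mem_erase hq)
  disjoint q hq r hr := F.disjoint q (Finset.mem_of_mem_erase hq) r (Finset.mem_of_mem_erase hr)

def insertTree (F : IndexedForest) (p : PBT × ℕ+) (h : ∀ q ∈ F.trees, Separated p q) :
    IndexedForest where
  trees := (insert p F.trees).filter (·.1 ≠ .leaf)
  nontrivial q hq := (Finset.mem_filter.1 hq).2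
  disjoint q hq r hr hne := by
    rw [disjoint_Icc_iff]
    rcases Finset.mem_insert.1 (Finset.mem_filter.1 hq).1 with hqp | hqF <;>
      rcases Finset.mem_insert.1 (Finset.mem_filter.1 hr).1 with hrp | hrF
    · exact absurd (hqp.trans hrp.symm) hne
    · exact hqp ▸ h r hrF
    · exact hrp ▸ (h q hqF).symm
    · exact (disjoint_Icc_iff q r).1 (F.disjoint q hqF r hrF hne)

@[simp]
theorem mem_eraseTree : q ∈ (F.eraseTree p).trees ↔ q ≠ p ∧ q ∈ F.trees :=
  Finset.mem_erase

@[simp]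
theorem mem_insertTree {h : ∀ q ∈ F.trees, Separated p q} :
    q ∈ (F.insertTree p h).trees ↔ (q = p ∧ p.1 ≠ .leaf) ∨ q ∈ F.trees := by
  simp only [insertTree, Finset.mem_filter, Finset.mem_insert]
  constructor
  · rintro ⟨rfl | hq, hleaf⟩
    exacts [Or.inl ⟨rfl, hleaf⟩, Or.inr hq]
  · rintro (⟨rfl, hleaf⟩ | hq)
    exacts [⟨Or.inl rfl, hleaf⟩, ⟨Or.inr hq, F.nontrivial q hq⟩]

theorem leadExp_eraseTree_add (h : p ∈ F.trees ∨ p.1.leadExp p.2 = 0) :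
    (F.eraseTree p).leadExp + p.1.leadExp p.2 = F.leadExp := by
  rcases h with h | h
  · exact Finset.sum_erase_add _ _ h
  · rw [h, add_zero]
    exact Finset.sum_erase _ h

theorem leadExp_insertTree (h : ∀ q ∈ F.trees, Separated p q) :
    (F.insertTree p h).leadExp = p.1.leadExp p.2 + F.leadExp := by
  have hp : p ∉ F.trees := fun hp => by
    have := p.1.leaves.pos
    rcases h p hp with h | h <;> omega
  rw [leadExp, insertTree, Finset.sum_filter_of_ne, Finset.sum_insert hp, leadExp]
  rintro q - hq hleaf
  rw [hleaf, leadExp_leaf] at hq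
  exact hq rfl

/-- Graft onto a new root the tree of `F` at `m` and the tree right after it (either may be a
single leaf). -/
noncomputable def join (F : IndexedForest) (m : ℕ+) (hF : ∀ p ∈ F.trees, m ≤ p.2) :
    IndexedForest :=
  let L := F.treeAt m
  let R := F.treeAt (m + L.leaves)
  ((F.eraseTree (L, m)).eraseTree (R, m + L.leaves)).insertTree (node L R, m) fun q hq => by
    simp only [mem_eraseTree] at hq
    obtain ⟨hR, hL, hq⟩ := hq
    have h₁ := add_leaves_treeAt_le hq (hF q hq) hL
    have h₂ := add_leaves_treeAt_le hq
      ((PNat.coe_le_coe _ _).1 (by rw [PNat.add_coe]; exact h₁)) hR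
    left
    simpa [add_assoc] using h₂

theorem mem_join {hF : ∀ p ∈ F.trees, m ≤ p.2} {L R : PBT} (hL : F.treeAt m = L)
    (hR : F.treeAt (m + L.leaves) = R) :
    q ∈ (F.join m hF).trees ↔
      q = (node L R, m) ∨ (q ≠ (R, m + L.leaves) ∧ q ≠ (L, m) ∧ q ∈ F.trees) := by
  subst hL hR
  simp [join]

theorem leadExp_join (hF : ∀ p ∈ F.trees, m ≤ p.2) :
    (F.join m hF).leadExp = Finsupp.single m 1 + F.leadExp := by
  obtain ⟨L, hL⟩ : ∃ L, F.treeAt m = L := ⟨_, rfl⟩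
  obtain ⟨R, hR⟩ : ∃ R, F.treeAt (m + L.leaves) = R := ⟨_, rfl⟩
  have hLmem : (L, m) ∈ F.trees ∨ L.leadExp m = 0 := by
    rcases F.treeAt_mem_or_eq_leaf m with h | h
    · exact Or.inl (hL ▸ h)
    · rw [← hL, h, leadExp_leaf]
      exact Or.inr rfl
  have hRmem : (R, m + L.leaves) ∈ (F.eraseTree (L, m)).trees ∨
      R.leadExp (m + L.leaves) = 0 := by
    rcases F.treeAt_mem_or_eq_leaf (m + L.leaves) with h | h
    · refine Or.inl (mem_eraseTree.2 ⟨fun h' => ?_, hR ▸ h⟩)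
      exact (PNat.lt_add_right m L.leaves).ne' (congrArg Prod.snd h')
    · rw [← hR, h, leadExp_leaf]
      exact Or.inr rfl
  rw [← leadExp_eraseTree_add hLmem, ← leadExp_eraseTree_add hRmem]
  subst hL hR
  rw [join, leadExp_insertTree, PBT.leadExp]
  abel

theorem add_leaves_add_leaves_le {L R : PBT} (hF : ∀ p ∈ F.trees, m ≤ p.2)
    (hT : (node L R, m) ∈ F.trees) (hq : q ∈ F.trees) (hne : q ≠ (node L R, m)) :
    (m : ℕ) + L.leaves + R.leaves ≤ q.2 := by
  simpa [add_assoc] using add_leaves_le hT hq hne.symm (hF q hq)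

theorem exists_split {L R : PBT} (hF : ∀ p ∈ F.trees, m ≤ p.2) (hT : (node L R, m) ∈ F.trees) :
    ∃ F' : IndexedForest, ∀ {q}, q ∈ F'.trees ↔ (q = (L, m) ∧ L ≠ .leaf) ∨
      (q = (R, m + L.leaves) ∧ R ≠ .leaf) ∨ (q ≠ (node L R, m) ∧ q ∈ F.trees) := by
  have hafter := fun q => add_leaves_add_leaves_le (q := q) hF hT
  obtain ⟨F₁, hF₁⟩ : ∃ F₁ : IndexedForest, ∀ {q}, q ∈ F₁.trees ↔
      (q = (R, m + L.leaves) ∧ R ≠ .leaf) ∨ (q ≠ (node L R, m) ∧ q ∈ F.trees) := by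
    refine ⟨(F.eraseTree (node L R, m)).insertTree (R, m + L.leaves) fun q hq => ?_,
      mem_insertTree.trans (or_congr_right mem_eraseTree)⟩
    rw [mem_eraseTree] at hq
    exact Or.inl (by simpa using hafter q hq.2 hq.1)
  refine ⟨F₁.insertTree (L, m) fun q hq => Or.inl ?_, mem_insertTree.trans (or_congr_right hF₁)⟩
  rcases hF₁.1 hq with ⟨rfl, -⟩ | ⟨hne, hq⟩
  · simp
  · have := hafter q hq hne
    simp only
    omega

theorem exists_join_eq {L R : PBT} (hF : ∀ p ∈ F.trees, m ≤ p.2) (hT : (node L R, m) ∈ F.trees) :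
    ∃ (F' : IndexedForest) (hF' : ∀ p ∈ F'.trees, m ≤ p.2), F'.join m hF' = F := by
  have hm := PNat.lt_add_right m L.leaves
  have := R.leaves.pos
  have hafter := fun q => add_leaves_add_leaves_le (q := q) hF hT
  obtain ⟨F', hmem⟩ := exists_split hF hT
  have hF' : ∀ p ∈ F'.trees, m ≤ p.2 := fun p hp => by
    rcases hmem.1 hp with ⟨rfl, -⟩ | ⟨rfl, -⟩ | ⟨-, hp⟩
    exacts [le_rfl, hm.le, hF p hp]
  have hL : F'.treeAt m = L := by
    refine treeAt_eq (fun h => hmem.2 (Or.inl ⟨rfl, h⟩)) fun q hq hqm => ?_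
    rcases hmem.1 hq with ⟨rfl, -⟩ | ⟨rfl, -⟩ | ⟨hne, hq⟩
    · rfl
    · exact absurd hqm hm.ne'
    · have := hafter q hq hne
      rw [hqm] at this
      omega
  have hR : F'.treeAt (m + L.leaves) = R := by
    refine treeAt_eq (fun h => hmem.2 (Or.inr (Or.inl ⟨rfl, h⟩))) fun q hq hqm => ?_
    rcases hmem.1 hq with ⟨rfl, -⟩ | ⟨rfl, -⟩ | ⟨hne, hq⟩
    · exact absurd hqm.symm hm.ne'
    · rfl
    · have := hafter q hq hne
      rw [hqm, PNat.add_coe] at this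
      omega
  refine ⟨F', hF', ext (Finset.ext fun q => ?_)⟩
  rw [mem_join hL hR, hmem]
  constructor
  · rintro (rfl | ⟨hR', hL', (⟨rfl, -⟩ | ⟨rfl, -⟩ | ⟨-, hq⟩)⟩)
    exacts [hT, absurd rfl hL', absurd rfl hR', hq]
  · intro hq
    by_cases hqT : q = (node L R, m)
    · exact Or.inl hqT
    have := hafter q hq hqT
    refine Or.inr ⟨fun h => ?_, fun h => ?_, Or.inr (Or.inr ⟨hqT, hq⟩)⟩ <;>
      rw [h] at this <;> simp only [PNat.add_coe] at this <;> omega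

theorem exists_join_eq_of_isLeast (hm : IsLeast (F.leadExp.support : Set ℕ+) m) :
    ∃ (F' : IndexedForest) (hF' : ∀ p ∈ F'.trees, m ≤ p.2), F'.join m hF' = F := by
  have hF : ∀ p ∈ F.trees, m ≤ p.2 := fun p hp => le_snd_of_mem_trees hm.2 hp
  obtain ⟨⟨T, s⟩, hp, hsm⟩ := exists_le_of_mem_support hm.1
  obtain rfl : s = m := le_antisymm hsm (hF _ hp)
  cases T with
  | leaf => exact absurd rfl (F.nontrivial _ hp)
  | node L R => exact exists_join_eq hF hp

theorem leadExp_injective : Function.Injective leadExp := by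
  intro F G h
  obtain ⟨n, hn⟩ : ∃ n, F.leadExp.degree = n := ⟨_, rfl⟩
  induction n generalizing F G with
  | zero =>
    have hF := trees_eq_empty_of_leadExp_eq_zero ((Finsupp.degree_eq_zero_iff _).1 hn)
    have hG := trees_eq_empty_of_leadExp_eq_zero (h ▸ (Finsupp.degree_eq_zero_iff _).1 hn)
    exact ext (hF.trans hG.symm)
  | succ n ih =>
    have hne : F.leadExp.support.Nonempty := by
      rw [Finsupp.support_nonempty_iff]
      rintro h0
      simp [h0] at hn
    obtain ⟨m, hm⟩ : ∃ m, IsLeast (F.leadExp.support : Set ℕ+) m :=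
      ⟨_, Finset.isLeast_min' _ hne⟩
    obtain ⟨F', hF', rfl⟩ := exists_join_eq_of_isLeast hm
    obtain ⟨G', hG', rfl⟩ := exists_join_eq_of_isLeast (h ▸ hm)
    rw [leadExp_join, leadExp_join, add_right_inj] at h
    rw [leadExp_join, map_add, Finsupp.degree_single, add_comm, Nat.add_right_cancel_iff] at hn
    obtain rfl := ih h hn
    rfl

theorem leadExp_surjective : Function.Surjective leadExp := by
  intro μ
  obtain ⟨n, hn⟩ : ∃ n, μ.degree = n := ⟨_, rfl⟩
  induction n generalizing μ with
  | zero =>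
    refine ⟨⟨∅, by simp, by simp⟩, ?_⟩
    rw [(Finsupp.degree_eq_zero_iff _).1 hn]
    rfl
  | succ n ih =>
    have hne : μ.support.Nonempty := by
      rw [Finsupp.support_nonempty_iff]
      rintro rfl
      simp at hn
    obtain ⟨m, hm⟩ : ∃ m, IsLeast (μ.support : Set ℕ+) m := ⟨_, Finset.isLeast_min' _ hne⟩
    have hle : Finsupp.single m 1 ≤ μ :=
      Finsupp.single_le_iff.2 (Nat.one_le_iff_ne_zero.2 (Finsupp.mem_support_iff.1 hm.1))
    have hμ : Finsupp.single m 1 + (μ - Finsupp.single m 1) = μ := add_tsub_cancel_of_le hle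
    obtain ⟨F', hF'⟩ := ih (μ - Finsupp.single m 1) (by
      rw [← hμ, map_add, Finsupp.degree_single] at hn
      omega)
    have hF'm : ∀ p ∈ F'.trees, m ≤ p.2 := fun p hp => le_snd_of_mem_trees
      (fun i hi => hm.2 (Finsupp.support_tsub (hF' ▸ hi))) hp
    exact ⟨F'.join m hF'm, by rw [leadExp_join, hF', hμ]⟩

end IndexedForest

/-- **Forest polynomials form a basis**: the family `(𝔓_F)`, as `F` ranges over all
indexed forests, is a basis of the polynomial ring `ℤ[x₁, x₂, …]` as a `ℤ`-module. -/
theorem forestPoly_basis :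
    LinearIndependent ℤ forestPoly ∧
    Submodule.span ℤ (Set.range forestPoly) = ⊤ :=
  ⟨MvPolynomial.linearIndependent_of_hasLeadingMonomial
      IndexedForest.hasLeadingMonomial_forestPoly IndexedForest.leadExp_injective,
    MvPolynomial.span_eq_top_of_hasLeadingMonomial
      IndexedForest.hasLeadingMonomial_forestPoly IndexedForest.leadExp_surjective⟩
end

section
/- The family of formal power series {F_α(x_−)·x^c}, indexed by pairs consisting of a composition α and an ℕ-vector c, is linearly independent over ℚ: if u is a finitely supported ℚ-valued function on such pairs and Σ_{α,c} u_{α,c}·F_α(x_−)·x^c = 0, then u_{α,c} = 0 for all α and c. -/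
/-- The fundamental quasisymmetric series `F_{r,S}(x_I)` in the variables `(x_i)_{i ∈ I}`,
`I ⊆ ℤ`: the sum of `x_{i₁}⋯x_{i_r}` over sequences `i₁ ≤ ⋯ ≤ i_r` in `I` with
`i_j < i_{j+1}` whenever `j ∈ S`, as a formal power series given coefficientwise. -/
noncomputable def FqrS (r : ℕ) (S : Set ℕ) (I : Set ℤ) : MvPowerSeries ℤ ℚ :=
  fun m => (Nat.card {g : Fin r → ℤ // (∀ j, g j ∈ I) ∧ Monotone g ∧
    (∀ j k : Fin r, (k : ℕ) = (j : ℕ) + 1 → ((j : ℕ) + 1) ∈ S → g j < g k) ∧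
    (∑ j, Finsupp.single (g j) 1) = m} : ℚ)

/-- The subset `S(α) = {α₁, α₁+α₂, …, α₁+⋯+α_{ℓ−1}}` of `{1,…,|α|−1}` attached to a
composition `α`. -/
def compS (α : List ℕ+) : Set ℕ :=
  {s | ∃ k : ℕ, 0 < k ∧ k < α.length ∧ s = ((α.take k).map (fun a => (a : ℕ))).sum}

/-- The fundamental quasisymmetric series `F_α(x_I)` of a composition `α`. -/
noncomputable def Fcomp (α : List ℕ+) (I : Set ℤ) : MvPowerSeries ℤ ℚ :=
  FqrS ((α.map (fun a => (a : ℕ))).sum) (compS α) I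

/-!
Suppose `u ≠ 0`. Pick `c` minimal among the ℕ-vectors in the support of `u`, then `α` with `S(α)`
inclusion-minimal among the compositions paired with `c`, and read off the coefficient of
`x^t · x^c`, where `x^t` is the content of the weakly increasing word that is constant on the
blocks of `α` and jumps by one between them, placed on variables to the left of every support.
A weakly increasing word is determined by its content, so the coefficient of `x^t` in `F_β(x_−)`
is `1` if `|β| = |α|` and `S(β) ⊆ S(α)`, and `0` otherwise; and since `x^t` avoids the supports,
a term `F_β(x_−) · x^{c'}` can contribute only if `c' ≤ c`. By the two minimal choices only
`(α, c)` contributes, so `u_{α,c} = 0`, a contradiction.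
-/

theorem Finsupp.le_of_le_add_of_disjoint {ι : Type*} {a b c : ι →₀ ℕ} (h : a ≤ b + c)
    (hd : Disjoint a.support b.support) : a ≤ c := fun x => by
  by_cases hx : x ∈ b.support
  · rw [Finsupp.notMem_support_iff.1 (Finset.disjoint_right.1 hd hx)]
    exact Nat.zero_le _
  · simpa [Finsupp.notMem_support_iff.1 hx] using h x

namespace QuasiSymmetric

section Content

variable {α : Type*} {r : ℕ}

noncomputable def content (g : Fin r → α) : α →₀ ℕ := ∑ j, Finsupp.single (g j) 1

theorem degree_content (g : Fin r → α) : (content g).degree = r := by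
  simp [content, map_sum]

theorem toMultiset_content (g : Fin r → α) :
    Finsupp.toMultiset (content g) = ↑(List.ofFn g) := by
  rw [content, Finsupp.toMultiset_sum, ← Fin.univ_val_map,
    ← Multiset.sum_map_singleton (Finset.univ.val.map g), Multiset.map_map]
  simp [Finset.sum_eq_multiset_sum]

theorem eq_of_content_eq [LinearOrder α] {g g' : Fin r → α} (hg : Monotone g)
    (hg' : Monotone g') (h : content g = content g') : g = g' := by
  refine List.ofFn_injective (List.Perm.eq_of_sortedLE hg.sortedLE_ofFn hg'.sortedLE_ofFn ?_)
  rw [← Multiset.coe_eq_coe, ← toMultiset_content, ← toMultiset_content, h]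

theorem support_content_subset (g : Fin r → α) : ↑(content g).support ⊆ Set.range g := by
  classical
  intro x hx
  obtain ⟨j, -, hj⟩ := Finset.mem_biUnion.1 (Finsupp.support_finsetSum hx)
  exact ⟨j, (Finset.mem_singleton.1 (Finsupp.support_single_subset hj)).symm⟩

end Content

theorem coeff_FqrS (r : ℕ) (S : Set ℕ) (I : Set ℤ) (m : ℤ →₀ ℕ) :
    MvPowerSeries.coeff m (FqrS r S I) = Nat.card {g : Fin r → ℤ // (∀ j, g j ∈ I) ∧ Monotone g ∧
      (∀ j k : Fin r, (k : ℕ) = (j : ℕ) + 1 → ((j : ℕ) + 1) ∈ S → g j < g k) ∧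
      content g = m} := rfl

theorem coeff_FqrS_of_degree_ne {r : ℕ} (S : Set ℕ) (I : Set ℤ) {m : ℤ →₀ ℕ}
    (hm : m.degree ≠ r) : MvPowerSeries.coeff m (FqrS r S I) = 0 := by
  rw [coeff_FqrS, Nat.cast_eq_zero, Nat.card_eq_zero]
  exact .inl ⟨fun ⟨g, _, _, _, hg⟩ => hm (hg ▸ degree_content g)⟩

open Classical in
theorem coeff_FqrS_content {r : ℕ} (S : Set ℕ) (I : Set ℤ) {g₀ : Fin r → ℤ}
    (hg₀ : Monotone g₀) :
    MvPowerSeries.coeff (content g₀) (FqrS r S I) =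
      if (∀ j, g₀ j ∈ I) ∧
        ∀ j k : Fin r, (k : ℕ) = (j : ℕ) + 1 → ((j : ℕ) + 1) ∈ S → g₀ j < g₀ k then 1 else 0 := by
  have key : ∀ g : Fin r → ℤ, ((∀ j, g j ∈ I) ∧ Monotone g ∧
      (∀ j k : Fin r, (k : ℕ) = (j : ℕ) + 1 → ((j : ℕ) + 1) ∈ S → g j < g k) ∧
      content g = content g₀) ↔ g = g₀ ∧ (∀ j, g₀ j ∈ I) ∧
        ∀ j k : Fin r, (k : ℕ) = (j : ℕ) + 1 → ((j : ℕ) + 1) ∈ S → g₀ j < g₀ k := by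
    intro g
    constructor
    · rintro ⟨hI, hg, hS, hc⟩
      obtain rfl := eq_of_content_eq hg hg₀ hc
      exact ⟨rfl, hI, hS⟩
    · rintro ⟨rfl, hI, hS⟩
      exact ⟨hI, hg₀, hS, rfl⟩
  rw [coeff_FqrS]
  simp_rw [key]
  split_ifs with h
  · simp only [eq_true h, and_true, Nat.card_unique, Nat.cast_one]
  · simp only [eq_false h, and_false, Nat.card_of_isEmpty, Nat.cast_zero]

section Staircase

open scoped Classical

noncomputable def staircase (S : Set ℕ) (N : ℤ) (t : ℕ) : ℤ := N + Nat.count (· ∈ S) (t + 1)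

variable (S : Set ℕ) (N : ℤ)

theorem staircase_monotone : Monotone (staircase S N) :=
  fun _ _ h => add_le_add_right (Nat.cast_le.2 (Nat.count_monotone _ (Nat.succ_le_succ h))) N

theorem staircase_le (t : ℕ) : staircase S N t ≤ N + (t + 1) := by
  unfold staircase
  have := Nat.count_le (p := (· ∈ S)) (n := t + 1)
  omega

theorem staircase_lt_succ_iff (t : ℕ) :
    staircase S N t < staircase S N (t + 1) ↔ t + 1 ∈ S := by
  unfold staircase
  rw [Nat.count_succ _ (t + 1)]
  split_ifs with h <;> simp [h]

theorem staircase_jumps_iff (T : Set ℕ) (r : ℕ) :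
    (∀ j k : Fin r, (k : ℕ) = (j : ℕ) + 1 → ((j : ℕ) + 1) ∈ T →
      staircase S N j < staircase S N k) ↔ ∀ s ∈ T, 0 < s → s < r → s ∈ S := by
  constructor
  · intro h s hsT hs0 hsr
    obtain ⟨t, rfl⟩ : ∃ t, s = t + 1 := ⟨s - 1, by omega⟩
    exact (staircase_lt_succ_iff S N t).1 (h ⟨t, by omega⟩ ⟨t + 1, hsr⟩ rfl hsT)
  · rintro h j k hjk hjT
    rw [hjk]
    exact (staircase_lt_succ_iff S N j).2 (h _ hjT (by omega) (by omega))

end Staircase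

section Compositions

/-- `l.map (fun a => (a : ℕ))`, as written in `compS` and `Fcomp`, elaborates through the
list-monad coercion to `List.map id (do let a ← l; pure ↑a)`, not to `l.map PNat.val`. -/
theorem map_coe_eq_map_val (l : List ℕ+) : l.map (fun a => (a : ℕ)) = l.map PNat.val :=
  (List.map_id' _).trans (List.flatMap_pure_eq_map PNat.val l)

theorem mem_compS_iff (α : List ℕ+) (s : ℕ) :
    s ∈ compS α ↔ ∃ k, 0 < k ∧ k < α.length ∧ ((α.map PNat.val).take k).sum = s := by
  simp only [compS, Set.mem_ofPred_eq, map_coe_eq_map_val, List.map_take, eq_comm]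

def toComposition (α : List ℕ+) {n : ℕ} (h : (α.map PNat.val).sum = n) : Composition n :=
  ⟨α.map PNat.val, fun hi => by
    obtain ⟨a, -, rfl⟩ := List.mem_map.1 hi
    exact a.pos, h⟩

theorem mem_boundaries_toComposition_iff (α : List ℕ+) {n : ℕ}
    (h : (α.map PNat.val).sum = n) (j : Fin (n + 1)) :
    j ∈ (toComposition α h).boundaries ↔ (j : ℕ) = 0 ∨ (j : ℕ) = n ∨ (j : ℕ) ∈ compS α := by
  set c := toComposition α h
  have hlen : c.length = α.length := List.length_map _
  simp only [Composition.boundaries, Finset.mem_map, Finset.mem_univ, true_and,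
    RelEmbedding.coe_toEmbedding, Composition.boundary, OrderEmbedding.coe_ofStrictMono,
    Fin.ext_iff, mem_compS_iff]
  constructor
  · rintro ⟨i, hi⟩
    rw [← hi]
    rcases Nat.eq_zero_or_pos i with h0 | hpos
    · exact .inl (by rw [h0, c.sizeUpTo_zero])
    rcases (Nat.lt_succ_iff.1 i.isLt).eq_or_lt with hl | hl
    · exact .inr (.inl (by rw [hl, c.sizeUpTo_length]))
    · exact .inr (.inr ⟨i, hpos, hlen ▸ hl, rfl⟩)
  · rintro (h0 | hn | ⟨k, -, hk, hkj⟩)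
    · exact ⟨0, by rw [Fin.val_zero, c.sizeUpTo_zero, h0]⟩
    · exact ⟨Fin.last _, by rw [Fin.val_last, c.sizeUpTo_length, hn]⟩
    · exact ⟨⟨k, by omega⟩, hkj⟩

theorem eq_of_compS_eq {α β : List ℕ+}
    (hsum : (β.map (fun a => (a : ℕ))).sum = (α.map (fun a => (a : ℕ))).sum)
    (hS : compS β = compS α) : β = α := by
  rw [map_coe_eq_map_val, map_coe_eq_map_val] at hsum
  have h : toComposition β hsum = toComposition α rfl :=
    (compositionEquiv _).injective (CompositionAsSet.ext (Finset.ext fun j => by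
      simp only [compositionEquiv, Equiv.coe_fn_mk, Composition.toCompositionAsSet_boundaries]
      rw [mem_boundaries_toComposition_iff, mem_boundaries_toComposition_iff, hS]))
  exact List.map_injective_iff.2 PNat.coe_injective (congrArg Composition.blocks h)

theorem compS_subset_Ioo (α : List ℕ+) :
    compS α ⊆ Set.Ioo 0 (α.map (fun a => (a : ℕ))).sum := by
  intro s hs
  obtain ⟨k, hk0, hkl, rfl⟩ := (mem_compS_iff α s).1 hs
  rw [map_coe_eq_map_val]
  set c := toComposition α rfl
  have hlen : c.length = α.length := List.length_map _
  constructor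
  · calc 0 = c.sizeUpTo 0 := c.sizeUpTo_zero.symm
      _ < c.sizeUpTo 1 := c.sizeUpTo_strict_mono (by omega)
      _ ≤ c.sizeUpTo k := c.monotone_sizeUpTo hk0
  · calc c.sizeUpTo k < c.sizeUpTo (k + 1) := c.sizeUpTo_strict_mono (by omega)
      _ ≤ c.sizeUpTo c.length := c.monotone_sizeUpTo (by omega)
      _ = _ := c.sizeUpTo_length

end Compositions

noncomputable def staircaseMonomial (α : List ℕ+) (N : ℤ) : ℤ →₀ ℕ :=
  content fun t : Fin (α.map (fun a => (a : ℕ))).sum => staircase (compS α) N t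

open Classical in
theorem coeff_staircaseMonomial_Fcomp (α β : List ℕ+) {N : ℤ}
    (hN : N + ((α.map (fun a => (a : ℕ))).sum : ℤ) ≤ 0) :
    MvPowerSeries.coeff (staircaseMonomial α N) (Fcomp β {i : ℤ | i ≤ 0}) =
      if (β.map (fun a => (a : ℕ))).sum = (α.map (fun a => (a : ℕ))).sum ∧ compS β ⊆ compS α
      then 1 else 0 := by
  by_cases hsize : (β.map (fun a => (a : ℕ))).sum = (α.map (fun a => (a : ℕ))).sum
  · conv_lhs => rw [staircaseMonomial, Fcomp, hsize]
    rw [coeff_FqrS_content (g₀ := fun t : Fin _ => staircase (compS α) N t) _ _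
      ((staircase_monotone _ N).comp Fin.val_strictMono.monotone)]
    congr 1
    refine propext ⟨fun h => ⟨hsize, fun s hs => ?_⟩, fun h => ⟨fun j => ?_, ?_⟩⟩
    · exact (staircase_jumps_iff _ N _ _).1 h.2 s hs (compS_subset_Ioo β hs).1
        (hsize ▸ (compS_subset_Ioo β hs).2)
    · exact (staircase_le (compS α) N j).trans (by have := j.isLt; omega)
    · exact (staircase_jumps_iff _ N _ _).2 fun s hs _ _ => h.2 hs
  · rw [if_neg fun h => hsize h.1]
    exact coeff_FqrS_of_degree_ne _ _ (by rw [staircaseMonomial, degree_content]; exact Ne.symm hsize)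

theorem coeff_staircaseMonomial_add_Fcomp_mul_monomial {α β : List ℕ+} {c c' : ℤ →₀ ℕ}
    {N : ℤ} (hN : N + ((α.map (fun a => (a : ℕ))).sum : ℤ) ≤ 0)
    (hc' : ∀ x ∈ c'.support, N + ((α.map (fun a => (a : ℕ))).sum : ℤ) < x)
    (hc_min : c' ≤ c → c' = c) (hα_min : c' = c → compS β ⊆ compS α → compS α ⊆ compS β) :
    MvPowerSeries.coeff (staircaseMonomial α N + c)
        (Fcomp β {i : ℤ | i ≤ 0} * MvPowerSeries.monomial c' 1) =
      if (β, c') = (α, c) then 1 else 0 := by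
  have hdisj : Disjoint c'.support (staircaseMonomial α N).support := Finset.disjoint_left.2 fun x hx hxt => by
    obtain ⟨j, rfl⟩ := support_content_subset _ hxt
    have := staircase_le (compS α) N j
    have := hc' (staircase (compS α) N j) hx
    omega
  rw [MvPowerSeries.coeff_mul_monomial, mul_one]
  by_cases hle : c' ≤ staircaseMonomial α N + c
  · obtain rfl := hc_min (Finsupp.le_of_le_add_of_disjoint hle hdisj)
    rw [if_pos hle, add_tsub_cancel_right, coeff_staircaseMonomial_Fcomp α β hN]
    by_cases hβ : β = α
    · simp [hβ]
    · rw [if_neg fun h => hβ (eq_of_compS_eq h.1 (h.2.antisymm (hα_min rfl h.2))),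
        if_neg fun h => hβ (Prod.ext_iff.1 h).1]
  · rw [if_neg hle, if_neg]
    rintro ⟨⟩
    exact hle le_add_self

end QuasiSymmetric

open QuasiSymmetric in
/-- **Linear independence of the family `F_α(x_−)·x^c`**: if `u` is a finitely supported
`ℚ`-valued function on pairs `(α, c)` of a composition `α` and an `ℕ`-vector `c` with
`∑_{α,c} u_{α,c}·F_α(x_−)·x^c = 0`, then `u = 0`. -/
theorem F_mul_monomial_linearIndependent
    (u : (List ℕ+ × (ℤ →₀ ℕ)) →₀ ℚ)
    (h : ∑ p ∈ u.support,
        u p • (Fcomp p.1 {i : ℤ | i ≤ 0} * MvPowerSeries.monomial (R := ℚ) p.2 1) = 0) :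
    u = 0 := by
  classical
  by_contra hu
  obtain ⟨⟨α₀, c₀⟩, hp₀, hc_min⟩ :=
    u.support.exists_minimalFor Prod.snd (Finsupp.support_nonempty_iff.2 hu)
  obtain ⟨⟨α, c⟩, hfilter, hα_min⟩ :=
    {q ∈ u.support | q.2 = c₀}.exists_minimalFor (compS ·.1) ⟨_, Finset.mem_filter.2 ⟨hp₀, rfl⟩⟩
  obtain ⟨hp, rfl : c = c₀⟩ := Finset.mem_filter.1 hfilter
  set r : ℤ := ((α.map (fun a => (a : ℕ))).sum : ℤ)
  obtain ⟨N, hN0, hN⟩ : ∃ N : ℤ, N + r ≤ 0 ∧ ∀ q ∈ u.support, ∀ x ∈ q.2.support, N + r < x := by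
    obtain ⟨M, hM⟩ := (u.support.biUnion fun q => q.2.support).bddBelow
    refine ⟨min M 0 - r - 1, by omega, fun q hq x hx => ?_⟩
    have := hM (Finset.mem_biUnion.2 ⟨q, hq, hx⟩)
    omega
  have hterm : ∀ q ∈ u.support, MvPowerSeries.coeff (staircaseMonomial α N + c)
      (u q • (Fcomp q.1 {i : ℤ | i ≤ 0} * MvPowerSeries.monomial q.2 1)) =
        if q = (α, c) then u q else 0 := by
    rintro ⟨β, c'⟩ hq
    rw [map_smul, coeff_staircaseMonomial_add_Fcomp_mul_monomial hN0 (hN _ hq)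
      (fun hle => le_antisymm hle (hc_min hq hle))
      (fun hc => hα_min (Finset.mem_filter.2 ⟨hq, hc⟩)), smul_eq_mul, mul_ite, mul_one, mul_zero]
  have hcoeff := congrArg (MvPowerSeries.coeff (staircaseMonomial α N + c)) h
  rw [map_sum, Finset.sum_congr rfl hterm, Finset.sum_ite_eq', if_pos hp, map_zero] at hcoeff
  exact Finsupp.mem_support_iff.1 hp hcoeff
end

section
/- Let b ∈ ℤ. Every formal power series that is a finite ℚ-linear combination of products F_α(x_{≤b})·m, where α is a composition, F_α(x_{≤b}) is the fundamental quasisymmetric series in the variables (x_i)_{i≤b}, and m is a monomial in the variables (x_i)_{i>b}, is also a finite ℚ-linear combination of the series F_β(x_−)·x^c with β a composition and c an ℕ-vector. -/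
/-!
If `v` exceeds every element of `I`, a weakly increasing sequence in `insert v I` is a
sequence in `I` of some length `t` followed by `r - t` copies of `v`, and it satisfies the
strictness conditions of `S` exactly when those of the first part hold and `S` misses `(t, r)`:
`F_{r,S}(x_{insert v I}) = F_{r,S}(x_I) + ∑_{t < r} [S ∩ (t, r) = ∅] F_{t,S}(x_I) x_v^{r-t}`.
Read forwards, this puts `F(x_{≤b+1})` in the span of the `F(x_{≤b}) x^c`; read backwards, by
induction on `r`, it puts `F(x_{≤b-1})` there. Inducting on `b` in both directions from `0`
reduces everything to `F_{r,S}(x_{≤0})`, which is some `F_α(x_{≤0})` because it only depends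
on `S ∩ (0, r)`.
-/

open MvPowerSeries

section Compositions

lemma compS_append_singleton {β : List ℕ+} (hβ : β ≠ []) (p : ℕ+) :
    compS (β ++ [p]) = insert (β.map (fun a => (a : ℕ))).sum (compS β) := by
  have hlen : 0 < β.length := List.length_pos_iff.mpr hβ
  ext s
  simp only [compS, Set.mem_insert_iff, List.length_append,
    List.length_singleton]
  constructor
  · rintro ⟨k, hk0, hk, rfl⟩
    rw [List.take_append_of_le_length (by omega)]
    rcases (show k < β.length ∨ k = β.length by omega) with hk' | rfl
    · exact Or.inr ⟨k, hk0, hk', rfl⟩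
    · exact Or.inl (by rw [List.take_length])
  · rintro (rfl | ⟨k, hk0, hk, rfl⟩)
    · refine ⟨β.length, hlen, by omega, ?_⟩
      rw [List.take_append_of_le_length le_rfl, List.take_length]
    · exact ⟨k, hk0, by omega, by rw [List.take_append_of_le_length (by omega)]⟩

lemma exists_compS_eq (S : Finset ℕ) (r : ℕ) (hS : ∀ s ∈ S, 0 < s ∧ s < r) :
    ∃ α : List ℕ+, (α.map (fun a => (a : ℕ))).sum = r ∧ compS α = S := by
  induction S using Finset.induction_on_max generalizing r with
  | empty =>
    rcases Nat.eq_zero_or_pos r with rfl | hr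
    · exact ⟨[], rfl, by ext; simp [compS]⟩
    · exact ⟨[r.toPNat'], by simp [PNat.toPNat'_coe hr], by ext; simp [compS]⟩
  | insert a S haS ih =>
    obtain ⟨ha0, har⟩ := hS a (Finset.mem_insert_self a S)
    obtain ⟨β, hβsum, hβS⟩ :=
      ih a fun s hs => ⟨(hS s (Finset.mem_insert_of_mem hs)).1, haS s hs⟩
    have hβ : β ≠ [] := by
      rintro rfl
      simp at hβsum
      omega
    refine ⟨β ++ [(r - a).toPNat'], ?_, ?_⟩
    · simp at hβsum
      simp [hβsum, PNat.toPNat'_coe (show 0 < r - a by omega)]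
      omega
    · rw [compS_append_singleton hβ, hβsum, hβS, Finset.coe_insert]

end Compositions

section Sequences

variable {r t : ℕ}

def StrictAt (S : Set ℕ) (g : Fin r → ℤ) : Prop :=
  ∀ j k : Fin r, (k : ℕ) = j + 1 → (j : ℕ) + 1 ∈ S → g j < g k

/-- The index sequences `i₁ ≤ ⋯ ≤ i_r` in `I` of the monomials of `F_{r,S}(x_I)`. -/
def IsFSeq (S : Set ℕ) (I : Set ℤ) (g : Fin r → ℤ) : Prop :=
  (∀ j, g j ∈ I) ∧ Monotone g ∧ StrictAt S g

noncomputable def seqExponent (g : Fin r → ℤ) : ℤ →₀ ℕ :=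
  ∑ j, Finsupp.single (g j) 1

lemma coeff_FqrS (S : Set ℕ) (I : Set ℤ) (m : ℤ →₀ ℕ) :
    coeff m (FqrS r S I) = Nat.card {g : Fin r → ℤ // IsFSeq S I g ∧ seqExponent g = m} :=
  congrArg Nat.cast <| Nat.card_congr <| Equiv.subtypeEquivRight fun g => by
    simp only [IsFSeq, StrictAt, seqExponent, and_assoc]

lemma coeff_FqrS_mul_monomial (S : Set ℕ) (I : Set ℤ) (n m : ℤ →₀ ℕ) :
    coeff m (FqrS t S I * monomial n (1 : ℚ)) =
      Nat.card {g : Fin t → ℤ // IsFSeq S I g ∧ seqExponent g + n = m} := by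
  rw [coeff_mul_monomial, mul_one]
  split_ifs with hnm
  · rw [coeff_FqrS]
    exact congrArg Nat.cast <| Nat.card_congr <| Equiv.subtypeEquivRight fun g => by
      rw [eq_tsub_iff_add_eq_of_le hnm]
  · have : IsEmpty {g : Fin t → ℤ // IsFSeq S I g ∧ seqExponent g + n = m} :=
      ⟨fun g => hnm (g.2.2 ▸ le_add_self)⟩
    simp

lemma finite_setOf_seqExponent_le (m : ℤ →₀ ℕ) :
    {g : Fin r → ℤ | seqExponent g ≤ m}.Finite := by
  refine (Set.Finite.pi' fun _ => m.support.finite_toSet).subset fun g hg j => ?_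
  have hj : Finsupp.single (g j) 1 ≤ seqExponent g :=
    Finset.single_le_sum (f := fun j => Finsupp.single (g j) 1) (by simp) (Finset.mem_univ j)
  have := (hj.trans hg) (g j)
  simp only [Finsupp.single_eq_same] at this
  exact Finsupp.mem_support_iff.mpr (by omega)

lemma FqrS_congr_inter_Ioo {S S' : Set ℕ} (h : S ∩ Set.Ioo 0 r = S' ∩ Set.Ioo 0 r)
    (I : Set ℤ) : FqrS r S I = FqrS r S' I := by
  have hstrict (g : Fin r → ℤ) : StrictAt S g ↔ StrictAt S' g := by
    refine forall₂_congr fun j k => imp_congr_right fun hk => imp_congr_left ?_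
    have hmem : (j : ℕ) + 1 ∈ Set.Ioo 0 r := ⟨by omega, by omega⟩
    simpa [hmem] using Set.ext_iff.mp h ((j : ℕ) + 1)
  ext m
  simp only [coeff_FqrS, IsFSeq, hstrict]

lemma exists_Fcomp_eq_FqrS (r : ℕ) (S : Set ℕ) : ∃ α : List ℕ+, ∀ I, Fcomp α I = FqrS r S I := by
  have hfin : (S ∩ Set.Ioo 0 r).Finite := (Set.finite_Ioo 0 r).inter_of_right S
  obtain ⟨α, hsum, hS⟩ := exists_compS_eq hfin.toFinset r fun s hs => by
    simp only [Set.Finite.mem_toFinset] at hs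
    exact hs.2
  refine ⟨α, fun I => ?_⟩
  rw [Fcomp, hsum]
  apply FqrS_congr_inter_Ioo
  rw [hS, Set.Finite.coe_toFinset, Set.inter_assoc, Set.inter_self]

end Sequences

lemma card_eq_sum_range_card_fiber {α : Type*} [Finite α] (f : α → ℕ) (r : ℕ)
    (hf : ∀ x, f x ≤ r) : Nat.card α = ∑ t ∈ Finset.range (r + 1), Nat.card {x // f x = t} := by
  let F : α → Fin (r + 1) := fun x => ⟨f x, Nat.lt_succ_of_le (hf x)⟩
  rw [← Nat.card_congr (Equiv.sigmaFiberEquiv F), Nat.card_sigma,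
    ← Fin.sum_univ_eq_sum_range (fun t => Nat.card {x // f x = t})]
  exact Finset.sum_congr rfl fun t _ =>
    Nat.card_congr (Equiv.subtypeEquivRight fun _ => Fin.ext_iff)

section InsertLargest

variable {S : Set ℕ} {I : Set ℤ} {v : ℤ} {r t : ℕ}

/-- For monotone `g`, the number of entries `< v`. -/
def cutoff (v : ℤ) (g : Fin r → ℤ) : ℕ :=
  Nat.find (⟨r, Or.inl rfl⟩ : ∃ n, n = r ∨ ∃ h : n < r, v ≤ g ⟨n, h⟩)

lemma cutoff_le (v : ℤ) (g : Fin r → ℤ) : cutoff v g ≤ r :=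
  Nat.find_min' _ (Or.inl rfl)

lemma lt_cutoff_iff {g : Fin r → ℤ} (hg : Monotone g) (j : Fin r) :
    (j : ℕ) < cutoff v g ↔ g j < v := by
  constructor
  · intro hj
    have := Nat.find_min _ hj
    simp only [not_or, not_exists, not_le] at this
    exact this.2 j.2
  · intro hj
    by_contra! hle
    rcases Nat.find_spec (⟨r, Or.inl rfl⟩ : ∃ n, n = r ∨ ∃ h : n < r, v ≤ g ⟨n, h⟩)
      with hr | ⟨hr, hv⟩
    · exact absurd j.2 (by unfold cutoff at hle; omega)
    · exact absurd (hv.trans (hg (Fin.mk_le_of_le_val hle))) (not_le.mpr hj)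

def padConst (g : Fin t → ℤ) (v : ℤ) (r : ℕ) : Fin r → ℤ :=
  fun j => if h : (j : ℕ) < t then g ⟨j, h⟩ else v

lemma padConst_castLE (ht : t ≤ r) (g : Fin t → ℤ) (j : Fin t) :
    padConst g v r (Fin.castLE ht j) = g j := by
  simp [padConst]

lemma padConst_comp_castLE (ht : t ≤ r) {g : Fin r → ℤ}
    (hg : ∀ j : Fin r, t ≤ j → g j = v) : padConst (g ∘ Fin.castLE ht) v r = g := by
  funext j
  by_cases hj : (j : ℕ) < t
  · simp [padConst, hj]
  · simp [padConst, hj, hg j (not_lt.mp hj)]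

lemma seqExponent_padConst (ht : t ≤ r) (g : Fin t → ℤ) :
    seqExponent (padConst g v r) = seqExponent g + Finsupp.single v (r - t) := by
  obtain ⟨k, rfl⟩ := Nat.exists_eq_add_of_le ht
  simp [seqExponent, Fin.sum_univ_add, padConst]

lemma cutoff_padConst (ht : t ≤ r) {g : Fin t → ℤ} (hg : ∀ j, g j < v) :
    cutoff v (padConst g v r) = t := by
  rw [cutoff, Nat.find_eq_iff]
  refine ⟨?_, fun n hn => ?_⟩
  · rcases ht.eq_or_lt with rfl | htr
    · exact Or.inl rfl
    · exact Or.inr ⟨htr, by simp [padConst]⟩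
  · simp only [not_or, not_exists, not_le]
    exact ⟨by omega, fun hnr => by simpa [padConst, hn] using hg ⟨n, hn⟩⟩

lemma IsFSeq.padConst {g : Fin t → ℤ} (hg : IsFSeq S I g) (hI : ∀ i ∈ I, i < v)
    (hS : Disjoint S (Set.Ioo t r)) : IsFSeq S (insert v I) (padConst g v r) := by
  obtain ⟨hgI, hmono, hstrict⟩ := hg
  have hlt (j : Fin t) : g j < v := hI _ (hgI j)
  refine ⟨fun j => ?_, fun j k hjk => ?_, fun j k hk hjS => ?_⟩
  · by_cases hj : (j : ℕ) < t
    · simp [_root_.padConst, hj, hgI]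
    · simp [_root_.padConst, hj]
  · have hjk' : (j : ℕ) ≤ k := hjk
    by_cases hk : (k : ℕ) < t
    · simp only [_root_.padConst, hk, lt_of_le_of_lt hjk' hk, dite_true]
      exact hmono hjk
    · by_cases hj : (j : ℕ) < t
      · simp [_root_.padConst, hj, hk, (hlt _).le]
      · simp [_root_.padConst, hj, hk]
  · by_cases hk' : (k : ℕ) < t
    · simp only [_root_.padConst, hk', show (j : ℕ) < t by omega, dite_true]
      exact hstrict ⟨j, by omega⟩ ⟨k, hk'⟩ hk hjS
    · by_cases hj : (j : ℕ) < t
      · simp [_root_.padConst, hj, hk', hlt]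
      · exact absurd hS (Set.not_disjoint_iff.mpr ⟨_, hjS, by omega, by omega⟩)

lemma IsFSeq.comp_castLE {J : Set ℤ} {g : Fin r → ℤ} (hg : IsFSeq S J g) (ht : t ≤ r)
    (hI : ∀ j, g (Fin.castLE ht j) ∈ I) : IsFSeq S I (g ∘ Fin.castLE ht) :=
  ⟨hI, fun _ _ hjk => hg.2.1 hjk, fun _ _ hk hjS => hg.2.2 _ _ hk hjS⟩

lemma eq_of_cutoff_le {g : Fin r → ℤ} (hg : IsFSeq S (insert v I) g) (hI : ∀ i ∈ I, i < v)
    {j : Fin r} (hj : cutoff v g ≤ j) : g j = v := by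
  have hv : ¬ g j < v := by rw [← lt_cutoff_iff hg.2.1]; omega
  rcases hg.1 j with h | h
  · exact h
  · exact absurd (hI _ h) hv

lemma disjoint_Ioo_cutoff {g : Fin r → ℤ} (hg : IsFSeq S (insert v I) g)
    (hI : ∀ i ∈ I, i < v) : Disjoint S (Set.Ioo (cutoff v g) r) := by
  refine Set.disjoint_left.mpr fun s hs ⟨hcs, hsr⟩ => ?_
  have hlt := hg.2.2 ⟨s - 1, by omega⟩ ⟨s, hsr⟩ (by simp; omega)
    (by simpa [Nat.sub_add_cancel (show 1 ≤ s by omega)] using hs)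
  rw [eq_of_cutoff_le hg hI (by simp; omega), eq_of_cutoff_le hg hI (by simp; omega)] at hlt
  exact lt_irrefl v hlt

def cutoffFiberEquiv (hI : ∀ i ∈ I, i < v) (ht : t ≤ r) (hS : Disjoint S (Set.Ioo t r))
    (m : ℤ →₀ ℕ) :
    {x : {g : Fin r → ℤ // IsFSeq S (insert v I) g ∧ seqExponent g = m} // cutoff v x.1 = t} ≃
      {g : Fin t → ℤ // IsFSeq S I g ∧ seqExponent g + Finsupp.single v (r - t) = m} where
  toFun x :=
    have hg := x.1.2.1
    have htail (j : Fin r) (hj : t ≤ j) : x.1.1 j = v := eq_of_cutoff_le hg hI (x.2.le.trans hj)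
    ⟨x.1.1 ∘ Fin.castLE ht,
      hg.comp_castLE ht fun j => (hg.1 _).resolve_left
        ((lt_cutoff_iff hg.2.1 _).mp (by simp [x.2])).ne,
      by rw [← seqExponent_padConst ht, padConst_comp_castLE ht htail, x.1.2.2]⟩
  invFun y :=
    have hlt (j : Fin t) : y.1 j < v := hI _ (y.2.1.1 j)
    ⟨⟨padConst y.1 v r, y.2.1.padConst hI hS, by rw [seqExponent_padConst ht, y.2.2]⟩,
      cutoff_padConst ht hlt⟩
  left_inv x := Subtype.ext <| Subtype.ext <|
    padConst_comp_castLE ht fun _ hj => eq_of_cutoff_le x.1.2.1 hI (x.2.le.trans hj)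
  right_inv y := Subtype.ext <| funext <| padConst_castLE ht y.1

open scoped Classical in
lemma card_cutoff_fiber (hI : ∀ i ∈ I, i < v) (ht : t ≤ r) (m : ℤ →₀ ℕ) :
    Nat.card {x : {g : Fin r → ℤ // IsFSeq S (insert v I) g ∧ seqExponent g = m} //
        cutoff v x.1 = t} =
      if Disjoint S (Set.Ioo t r) then
        Nat.card {g : Fin t → ℤ // IsFSeq S I g ∧ seqExponent g + Finsupp.single v (r - t) = m}
      else 0 := by
  split_ifs with hS
  · exact Nat.card_congr (cutoffFiberEquiv hI ht hS m)
  · have : IsEmpty {x : {g : Fin r → ℤ // IsFSeq S (insert v I) g ∧ seqExponent g = m} //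
        cutoff v x.1 = t} := ⟨fun x => hS (x.2 ▸ disjoint_Ioo_cutoff x.1.2.1 hI)⟩
    exact Nat.card_of_isEmpty

open scoped Classical in
lemma FqrS_insert_eq_sum (hI : ∀ i ∈ I, i < v) :
    FqrS r S (insert v I) = ∑ t ∈ Finset.range (r + 1),
      if Disjoint S (Set.Ioo t r) then
        FqrS t S I * monomial (Finsupp.single v (r - t)) (1 : ℚ)
      else 0 := by
  ext m
  have : Finite {g : Fin r → ℤ // IsFSeq S (insert v I) g ∧ seqExponent g = m} :=
    ((finite_setOf_seqExponent_le m).subset fun _ hg => hg.2.le).to_subtype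
  rw [coeff_FqrS, card_eq_sum_range_card_fiber (cutoff v ∘ Subtype.val) r
    (fun x => cutoff_le v x.1), map_sum, Nat.cast_sum]
  refine Finset.sum_congr rfl fun t ht => ?_
  rw [Function.comp_def, card_cutoff_fiber hI (Nat.lt_succ_iff.mp (Finset.mem_range.mp ht))]
  split_ifs <;> simp [coeff_FqrS_mul_monomial]

open scoped Classical in
lemma FqrS_insert (hI : ∀ i ∈ I, i < v) :
    FqrS r S (insert v I) = FqrS r S I + ∑ t ∈ Finset.range r,
      if Disjoint S (Set.Ioo t r) then
        FqrS t S I * monomial (Finsupp.single v (r - t)) (1 : ℚ)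
      else 0 := by
  rw [FqrS_insert_eq_sum hI, Finset.sum_range_succ, add_comm]
  simp

end InsertLargest

section Span

lemma forall_FqrS_insert_mem_iff {M : Submodule ℚ (MvPowerSeries ℤ ℚ)}
    (hM : ∀ f ∈ M, ∀ c, f * monomial c (1 : ℚ) ∈ M) {S : Set ℕ} {I : Set ℤ} {v : ℤ}
    (hI : ∀ i ∈ I, i < v) :
    (∀ r, FqrS r S (insert v I) ∈ M) ↔ ∀ r, FqrS r S I ∈ M := by
  constructor
  · intro h r
    induction r using Nat.strong_induction_on with
    | _ r ih =>
      rw [eq_sub_of_add_eq (FqrS_insert hI).symm]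
      refine sub_mem (h r) (sum_mem fun t ht => ?_)
      split_ifs
      exacts [hM _ (ih t (Finset.mem_range.mp ht)) _, zero_mem M]
  · intro h r
    rw [FqrS_insert hI]
    refine add_mem (h r) (sum_mem fun t _ => ?_)
    split_ifs
    exacts [hM _ (h t) _, zero_mem M]

def spanFMonomial (I : Set ℤ) : Submodule ℚ (MvPowerSeries ℤ ℚ) :=
  Submodule.span ℚ {s | ∃ (β : List ℕ+) (c : ℤ →₀ ℕ), s = Fcomp β I * monomial c (1 : ℚ)}

lemma mul_monomial_mem_spanFMonomial {I : Set ℤ} {f : MvPowerSeries ℤ ℚ}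
    (hf : f ∈ spanFMonomial I) (c : ℤ →₀ ℕ) : f * monomial c (1 : ℚ) ∈ spanFMonomial I := by
  have hmap : (spanFMonomial I).map (LinearMap.mulRight ℚ (monomial c (1 : ℚ))) ≤
      spanFMonomial I := by
    rw [spanFMonomial, Submodule.map_span_le]
    rintro _ ⟨β, c', rfl⟩
    refine Submodule.subset_span ⟨β, c' + c, ?_⟩
    rw [LinearMap.mulRight_apply, mul_assoc, monomial_mul_monomial, one_mul]
  exact hmap ⟨f, hf, rfl⟩

lemma FqrS_mem_spanFMonomial (r : ℕ) (S : Set ℕ) (I : Set ℤ) :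
    FqrS r S I ∈ spanFMonomial I := by
  obtain ⟨α, hα⟩ := exists_Fcomp_eq_FqrS r S
  refine Submodule.subset_span ⟨α, 0, ?_⟩
  rw [monomial_zero_one, mul_one, hα]

lemma FqrS_Iic_mem_spanFMonomial (S : Set ℕ) (b : ℤ) (r : ℕ) :
    FqrS r S (Set.Iic b) ∈ spanFMonomial (Set.Iic 0) := by
  have hstep (b : ℤ) : (∀ r, FqrS r S (Set.Iic (b + 1)) ∈ spanFMonomial (Set.Iic 0)) ↔
      ∀ r, FqrS r S (Set.Iic b) ∈ spanFMonomial (Set.Iic 0) := by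
    rw [← Set.Iio_insert (a := b + 1), ← Set.Iio_add_one_eq_Iic b]
    exact forall_FqrS_insert_mem_iff (fun _ hf c => mul_monomial_mem_spanFMonomial hf c)
      fun _ hi => hi
  induction b using Int.induction_on generalizing r with
  | zero => exact FqrS_mem_spanFMonomial r S _
  | succ b ih => exact (hstep b).mpr ih r
  | pred b ih => exact (hstep (-b - 1)).mp (by rwa [sub_add_cancel]) r

end Span

/-- Every finite `ℚ`-linear combination of products `F_α(x_{≤b})·m`, with `α` a
composition and `m` a monomial in the variables `(x_i)_{i>b}`, is a finite `ℚ`-linear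
combination of the series `F_β(x_−)·x^c` with `β` a composition and `c` an `ℕ`-vector. -/
theorem span_F_le_b_le_span_F_neg (b : ℤ) :
    Submodule.span ℚ {s : MvPowerSeries ℤ ℚ | ∃ (α : List ℕ+) (c : ℤ →₀ ℕ),
        (∀ i ∈ c.support, b < i) ∧
        s = Fcomp α {i : ℤ | i ≤ b} * MvPowerSeries.monomial c (1 : ℚ)} ≤
    Submodule.span ℚ {s : MvPowerSeries ℤ ℚ | ∃ (β : List ℕ+) (c : ℤ →₀ ℕ),
        s = Fcomp β {i : ℤ | i ≤ 0} * MvPowerSeries.monomial c (1 : ℚ)} := by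
  refine Submodule.span_le.mpr ?_
  rintro _ ⟨α, c, -, rfl⟩
  exact mul_monomial_mem_spanFMonomial (FqrS_Iic_mem_spanFMonomial _ b _) c
end

section
/- Let c be an ℕ-vector. (i) Substituting x_i = 0 for all i ≤ 0 into the back stable slide 𝔉⃖_c yields the slide polynomial 𝔉_c if the support of c is contained in ℤ_{>0}, and yields 0 otherwise. (ii) For b ≥ 0 let γ^b(c) be the ℕ-vector with γ^b(c)_i = c_{i−b}; then for every monomial in the variables (x_i)_{i≥1}, the coefficient of that monomial in the slide polynomial 𝔉_{γ^b(c)} equals, for all sufficiently large b, its coefficient in the fundamental quasisymmetric series F_{flatten(c)}(x_+) in the variables (x_i)_{i≥1}. -/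
/-!
If a monomial is supported on `ℤ_{>0}`, every index `i_j` of a sequence contributing to it is
positive, so the condition `i_r ≥ 1` of the slide polynomial is automatic; and a letter `(i, 1)`
of `W_c` with `i ≤ 0` forces `i_j ≤ 0` somewhere, so no sequence contributes at all.

Once `c` is shifted far enough to the right, the bounds `i_j ≤ val(a_j)` are implied by the
monomial. Reading a sequence backwards then turns "weakly decreasing, strictly at the descents of
`W_c`" into "weakly increasing, strictly at the positions in `S(flatten c)`": `W_c` increases
inside each block `(i,1) ⋯ (i,c_i)` and drops between consecutive blocks, so its descents are the
block boundaries, i.e. the partial sums of the reversed composition.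
-/

/-- The back stable slide `𝔉⃖(W)` of an injective word `W` over `ℤ × ℤ_{>0}`
(ordered lexicographically, with `val (i,j) = i`): the formal power series
`∑ x_{i₁}⋯x_{i_r}` over integer sequences `i₁ ≥ ⋯ ≥ i_r` with `i_j > i_{j+1}` whenever
`a_j > a_{j+1}` and `i_j ≤ val (a_j)` for all `j`, given coefficientwise. -/
noncomputable def backSlideW (W : List (ℤ ×ₗ ℕ+)) : MvPowerSeries ℤ ℚ :=
  fun m => (Nat.card {g : Fin W.length → ℤ // Antitone g ∧
    (∀ j k : Fin W.length, (k : ℕ) = (j : ℕ) + 1 → W.get k < W.get j → g k < g j) ∧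
    (∀ j, g j ≤ (ofLex (W.get j)).1) ∧
    (∑ j, Finsupp.single (g j) 1) = m} : ℚ)

/-- The slide polynomial `𝔉(W)` of an injective word `W` over `ℤ × ℤ_{>0}`: as
`backSlideW`, but with all variables positively indexed (`i_r ≥ 1`). -/
noncomputable def slideW (W : List (ℤ ×ₗ ℕ+)) : MvPowerSeries ℤ ℚ :=
  fun m => (Nat.card {g : Fin W.length → ℤ // (∀ j, 1 ≤ g j) ∧ Antitone g ∧
    (∀ j k : Fin W.length, (k : ℕ) = (j : ℕ) + 1 → W.get k < W.get j → g k < g j) ∧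
    (∀ j, g j ≤ (ofLex (W.get j)).1) ∧
    (∑ j, Finsupp.single (g j) 1) = m} : ℚ)

/-- The injective word `W_c` of an `ℕ`-vector `c : ℤ →₀ ℕ`: it lists the letters `(i,j)`
with `c i > 0` and `1 ≤ j ≤ c i`, with `i` decreasing and, for fixed `i`, `j`
increasing. -/
noncomputable def WcZ (c : ℤ →₀ ℕ) : List (ℤ ×ₗ ℕ+) :=
  ((c.support.sort (· ≤ ·)).reverse.map
    (fun i => (List.range (c i)).map (fun j => toLex (i, j.succPNat)))).flatten

/-- The back stable slide `𝔉⃖_c = 𝔉⃖(W_c)` of an `ℕ`-vector `c`. -/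
noncomputable def backSlideC (c : ℤ →₀ ℕ) : MvPowerSeries ℤ ℚ := backSlideW (WcZ c)

/-- The slide polynomial `𝔉_c = 𝔉(W_c)` of an `ℕ`-vector `c`, in the variables
`(x_i)_{i ≥ 1}`. -/
noncomputable def slideC (c : ℤ →₀ ℕ) : MvPowerSeries ℤ ℚ := slideW (WcZ c)

/-- `flatten c`: the composition formed by the positive entries of `c`, read in
increasing order of the index. -/
noncomputable def flattenC (c : ℤ →₀ ℕ) : List ℕ+ :=
  (c.support.sort (· ≤ ·)).attach.map
    (fun i => ⟨c i.1, Nat.pos_of_ne_zero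
      (Finsupp.mem_support_iff.mp ((Finset.mem_sort _).mp i.2))⟩)

open MvPowerSeries

universe u

lemma mem_support_sum_single {α : Type*} {r : ℕ} (g : Fin r → α) (j : Fin r) :
    g j ∈ (∑ k, Finsupp.single (g k) 1 : α →₀ ℕ).support :=
  Finsupp.support_mono (Finset.single_le_sum (fun _ _ => zero_le) (Finset.mem_univ j))
    (by simp)

theorem coeff_backSlideW_eq_coeff_slideW (W : List (ℤ ×ₗ ℕ+)) {m : ℤ →₀ ℕ}
    (hm : ∀ i ∈ m.support, 0 < i) : coeff m (backSlideW W) = coeff m (slideW W) := by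
  simp only [backSlideW, slideW, coeff_apply, Nat.cast_inj]
  refine Nat.card_congr (Equiv.subtypeEquivRight fun g =>
    ⟨fun h => ⟨fun j => ?_, h⟩, fun h => h.2⟩)
  exact hm _ (h.2.2.2 ▸ mem_support_sum_single g j)

theorem coeff_backSlideW_eq_zero {W : List (ℤ ×ₗ ℕ+)} {a : ℤ ×ₗ ℕ+} (ha : a ∈ W)
    (ha₀ : (ofLex a).1 ≤ 0) {m : ℤ →₀ ℕ} (hm : ∀ i ∈ m.support, 0 < i) :
    coeff m (backSlideW W) = 0 := by
  obtain ⟨j, rfl⟩ := List.mem_iff_get.mp ha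
  simp only [backSlideW, coeff_apply, Nat.cast_eq_zero, Nat.card_eq_zero]
  refine .inl ⟨fun ⟨g, _, _, hle, hsum⟩ => ?_⟩
  have := hm _ (hsum ▸ mem_support_sum_single g j)
  have := hle j
  omega

theorem mem_WcZ {c : ℤ →₀ ℕ} {a : ℤ ×ₗ ℕ+} : a ∈ WcZ c ↔ ((ofLex a).2 : ℕ) ≤ c (ofLex a).1 := by
  simp only [WcZ, List.map_reverse, List.mem_flatten, List.mem_reverse, List.mem_map,
    Finset.mem_sort, Finsupp.mem_support_iff, ne_eq, exists_exists_and_eq_and, List.mem_range]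
  constructor
  · rintro ⟨i, -, j, hj, rfl⟩
    simpa using hj
  · intro h
    have hpos := (ofLex a).2.pos
    refine ⟨(ofLex a).1, by omega, (ofLex a).2.natPred, ?_, by simp⟩
    rw [← PNat.natPred_add_one (ofLex a).2] at h
    omega

def IsProperPrefixSum (L : List ℕ) (s : ℕ) : Prop :=
  ∃ k, 0 < k ∧ k < L.length ∧ s = (L.take k).sum

/-- `compS` and `Fcomp` elaborate `α.map (fun a => (a : ℕ))` through the list monad, as
`List.map (fun b => b) (α >>= fun a => pure ↑a)`. -/
theorem List.map_id_bind_pure {α β : Type u} (f : α → β) (l : List α) :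
    List.map (fun b => b) (l >>= fun a => pure (f a)) = l.map f := by
  rw [List.map_id', bind_pure_comp]
  rfl

theorem mem_compS_iff {α : List ℕ+} {s : ℕ} :
    s ∈ compS α ↔ IsProperPrefixSum (α.map (↑)) s := by
  simp only [compS, Set.mem_ofPred_eq, List.map_id_bind_pure, IsProperPrefixSum, List.map_take,
    List.length_map]

theorem isProperPrefixSum_cons {a s : ℕ} {L : List ℕ} :
    IsProperPrefixSum (a :: L) s ↔ (L ≠ [] ∧ s = a) ∨ ∃ t, IsProperPrefixSum L t ∧ s = a + t := by
  constructor
  · rintro ⟨_ | _ | k, hk, hkL, rfl⟩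
    · omega
    · exact .inl ⟨List.ne_nil_of_length_pos (by simpa using hkL), by simp⟩
    · exact .inr ⟨_, ⟨k + 1, by omega, by simpa using hkL, rfl⟩, by simp⟩
  · rintro (⟨hL, rfl⟩ | ⟨t, ⟨k, hk, hkL, rfl⟩, rfl⟩)
    · exact ⟨1, by omega, by simpa using List.length_pos_iff.2 hL, by simp⟩
    · exact ⟨k + 1, by omega, by simpa using hkL, by simp⟩

theorem isProperPrefixSum_reverse {L : List ℕ} {s : ℕ} (hs : s ≤ L.sum) :
    IsProperPrefixSum L.reverse s ↔ IsProperPrefixSum L (L.sum - s) := by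
  have hsplit := List.sum_take_add_sum_drop L
  constructor
  · rintro ⟨k, hk, hkL, rfl⟩
    rw [List.length_reverse] at hkL
    refine ⟨L.length - k, by omega, by omega, ?_⟩
    rw [List.take_reverse, List.sum_reverse]
    have := hsplit (L.length - k)
    omega
  · rintro ⟨k, hk, hkL, hsk⟩
    refine ⟨L.length - k, by omega, by simp only [List.length_reverse]; omega, ?_⟩
    rw [List.take_reverse, List.sum_reverse, Nat.sub_sub_self hkL.le]
    have := hsplit k
    omega

theorem List.getElem_flatten_succ_lt_iff {X : Type*} [LinearOrder X] {bs : List (List X)}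
    (hne : ∀ A ∈ bs, A ≠ []) (hsorted : ∀ A ∈ bs, A.IsChain (· ≤ ·))
    (hdrop : bs.IsChain fun A B => ∀ x ∈ A, ∀ y ∈ B, y < x) {n : ℕ}
    (h : n + 1 < bs.flatten.length) :
    bs.flatten[n + 1] < bs.flatten[n] ↔ IsProperPrefixSum (bs.map List.length) (n + 1) := by
  induction bs generalizing n with
  | nil => simp at h
  | cons A bs ih =>
    simp only [List.flatten_cons, List.length_append, List.map_cons,
      isProperPrefixSum_cons] at h ⊢
    rcases lt_trichotomy (n + 1) A.length with hn | hn | hn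
    · rw [List.getElem_append_left hn, List.getElem_append_left (by omega)]
      refine iff_of_false (not_lt.2 ?_) ?_
      · exact List.isChain_iff_getElem.1 (hsorted A (by simp)) n hn
      · rintro (⟨-, h⟩ | ⟨t, -, h⟩) <;> omega
    · cases bs with
      | nil => simp at h; omega
      | cons B bs =>
        refine iff_of_true ?_ (.inl ⟨by simp, hn⟩)
        have hB : 0 < B.length := List.length_pos_iff.2 (hne B (by simp))
        rw [List.getElem_append_right (by omega), List.getElem_append_left (by omega)]
        simp only [hn, Nat.sub_self, List.flatten_cons]
        rw [List.getElem_append_left hB]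
        exact (List.isChain_cons_cons.1 hdrop).1 _ (List.getElem_mem _) _ (List.getElem_mem _)
    · rw [List.getElem_append_right (by omega), List.getElem_append_right (by omega)]
      have hih := ih (fun A hA => hne A (by simp [hA])) (fun A hA => hsorted A (by simp [hA]))
        hdrop.tail (n := n - A.length) (by omega)
      simp only [show n + 1 - A.length = n - A.length + 1 by omega, hih]
      constructor
      · exact fun hs => .inr ⟨_, hs, by omega⟩
      · rintro (⟨-, h⟩ | ⟨t, ht, h⟩)
        · omega
        · rwa [show n - A.length + 1 = t by omega]

def letterBlock (c : ℤ →₀ ℕ) (i : ℤ) : List (ℤ ×ₗ ℕ+) :=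
  (List.range (c i)).map fun j => toLex (i, j.succPNat)

theorem WcZ_eq_flatten (c : ℤ →₀ ℕ) :
    WcZ c = ((c.support.sort (· ≤ ·)).reverse.map (letterBlock c)).flatten :=
  rfl

theorem map_coe_flattenC (c : ℤ →₀ ℕ) :
    (flattenC c).map (↑) = (c.support.sort (· ≤ ·)).map c :=
  (List.map_map ..).trans List.attach_map_val

theorem map_length_letterBlock (c : ℤ →₀ ℕ) :
    ((c.support.sort (· ≤ ·)).reverse.map (letterBlock c)).map List.length =
      ((flattenC c).map (↑)).reverse := by
  simp [map_coe_flattenC, letterBlock, Function.comp_def]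

theorem length_WcZ (c : ℤ →₀ ℕ) : (WcZ c).length = ((flattenC c).map (↑)).sum := by
  rw [WcZ_eq_flatten, List.length_flatten, map_length_letterBlock, List.sum_reverse]

theorem WcZ_getElem_succ_lt_iff (c : ℤ →₀ ℕ) (n : ℕ) (h : n + 1 < (WcZ c).length) :
    (WcZ c)[n + 1] < (WcZ c)[n] ↔ (WcZ c).length - (n + 1) ∈ compS (flattenC c) := by
  have hne : ∀ A ∈ (c.support.sort (· ≤ ·)).reverse.map (letterBlock c), A ≠ [] := by
    simp [letterBlock]
  have hsorted : ∀ i, (letterBlock c i).IsChain (· ≤ ·) := fun i =>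
    (List.pairwise_lt_range.map _ fun a b hab =>
      Prod.Lex.le_iff.2 (.inr ⟨rfl, Nat.succPNat_le_succPNat.2 hab.le⟩)).isChain
  have hdrop : ((c.support.sort (· ≤ ·)).reverse.map (letterBlock c)).IsChain
      fun A B => ∀ x ∈ A, ∀ y ∈ B, y < x := by
    refine List.Pairwise.isChain (List.Pairwise.map _ ?_
      (List.pairwise_reverse.2 (Finset.sortedLT_sort c.support).pairwise))
    simp only [letterBlock, List.mem_map]
    rintro i i' hi' _ ⟨j, -, rfl⟩ _ ⟨j', -, rfl⟩
    exact Prod.Lex.lt_iff.2 (.inl hi')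
  have hlen := length_WcZ c
  refine (List.getElem_flatten_succ_lt_iff hne (by simpa using fun i _ => hsorted i) hdrop h).trans ?_
  rw [map_length_letterBlock, isProperPrefixSum_reverse (by omega), ← hlen, mem_compS_iff]

theorem Fin.monotone_comp_rev_iff {r : ℕ} {α : Type*} [Preorder α] {g : Fin r → α} :
    Monotone (g ∘ Fin.rev) ↔ Antitone g :=
  ⟨fun h => by simpa [Function.comp_def] using h.comp_antitone Fin.rev_anti,
    fun h => h.comp Fin.rev_anti⟩

theorem Fin.forall_succ_rev_iff {r : ℕ} {P : Fin r → Fin r → Prop} :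
    (∀ t u : Fin r, (u : ℕ) = t + 1 → P u.rev t.rev) ↔ ∀ j k : Fin r, (k : ℕ) = j + 1 → P j k := by
  refine ⟨fun h j k hk => ?_, fun h t u hu => h _ _ (by simp only [Fin.val_rev]; omega)⟩
  simpa using h k.rev j.rev (by simp only [Fin.val_rev]; omega)

theorem coeff_slideW_eq_coeff_FqrS {W : List (ℤ ×ₗ ℕ+)} {S : Set ℕ} {m : ℤ →₀ ℕ}
    (hdesc : ∀ n (h : n + 1 < W.length), W[n + 1] < W[n] ↔ W.length - (n + 1) ∈ S)
    (hval : ∀ a ∈ W, ∀ i ∈ m.support, i ≤ (ofLex a).1) :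
    coeff m (slideW W) = coeff m (FqrS W.length S {i | 0 < i}) := by
  simp only [slideW, FqrS, coeff_apply, Nat.cast_inj]
  refine (Nat.card_congr (Equiv.subtypeEquiv (Fin.revPerm.arrowCongr (Equiv.refl ℤ))
    fun g => ?_))
  rw [show Fin.revPerm.arrowCongr (Equiv.refl ℤ) g = g ∘ Fin.rev from rfl]
  simp only [Function.comp_apply, Set.mem_ofPred_eq]
  have hsum : ∑ t : Fin W.length, Finsupp.single (g t.rev) 1 = ∑ j, Finsupp.single (g j) 1 :=
    Equiv.sum_comp Fin.revPerm fun j => Finsupp.single (g j) 1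
  have hpos : (∀ t : Fin W.length, 0 < g t.rev) ↔ ∀ j, 1 ≤ g j :=
    ⟨fun h j => Fin.rev_rev j ▸ h j.rev, fun h t => h t.rev⟩
  have hasc : (∀ t u : Fin W.length, (u : ℕ) = t + 1 → (t : ℕ) + 1 ∈ S → g t.rev < g u.rev) ↔
      ∀ j k : Fin W.length, (k : ℕ) = j + 1 → W.get k < W.get j → g k < g j := by
    rw [← Fin.forall_succ_rev_iff]
    refine forall₃_congr fun t u hu => ?_
    simp only [List.get_eq_getElem, Fin.rev_rev, hu]
    rw [hdesc _ (by omega), show (u.rev : ℕ) + 1 = W.length - (t + 1) by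
      simp only [Fin.val_rev]; omega]
  rw [hsum, hpos, Fin.monotone_comp_rev_iff, hasc]
  constructor
  · rintro ⟨hpos, hanti, hstrict, -, hm⟩
    exact ⟨hpos, hanti, hstrict, hm⟩
  · rintro ⟨hpos, hanti, hstrict, hm⟩
    exact ⟨hpos, hanti, hstrict, fun j => hval _ (List.get_mem W j) _
      (hm ▸ mem_support_sum_single g j), hm⟩

theorem support_mapDomain_add (c : ℤ →₀ ℕ) (b : ℤ) :
    (c.mapDomain (· + b)).support = c.support.map (addRightEmbedding b) := by
  rw [← Finsupp.support_embDomain, Finsupp.embDomain_eq_mapDomain]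
  rfl

theorem flattenC_mapDomain_add (c : ℤ →₀ ℕ) (b : ℤ) :
    flattenC (c.mapDomain (· + b)) = flattenC c := by
  refine List.map_injective_iff.2 PNat.coe_injective ?_
  rw [map_coe_flattenC, map_coe_flattenC, support_mapDomain_add,
    ← Finset.map_sort _ _ _ _ fun _ _ _ _ => (add_le_add_iff_right b).symm, List.map_map]
  exact List.map_congr_left fun i _ => Finsupp.mapDomain_apply (add_left_injective b) c i

theorem exists_fst_eq_add_of_mem_WcZ_mapDomain_add {c : ℤ →₀ ℕ} {b : ℤ} {a : ℤ ×ₗ ℕ+}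
    (ha : a ∈ WcZ (c.mapDomain (· + b))) : ∃ i ∈ c.support, (ofLex a).1 = i + b := by
  have hpos := (ofLex a).2.pos
  have := mem_WcZ.1 ha
  have hmem : (ofLex a).1 ∈ (c.mapDomain (· + b)).support := by
    rw [Finsupp.mem_support_iff]
    omega
  simpa [support_mapDomain_add, eq_comm] using hmem

/-- (i) Substituting `x_i = 0` for all `i ≤ 0` into `𝔉⃖_c` (i.e. looking at the
coefficients of monomials supported on `ℤ_{>0}`) yields `𝔉_c` if the support of `c` is
contained in `ℤ_{>0}`, and `0` otherwise.
(ii) For the shift `γ^b(c)_i = c_{i−b}`, the coefficient of any monomial in the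
variables `(x_i)_{i≥1}` in `𝔉_{γ^b(c)}` equals, for all sufficiently large `b`, its
coefficient in `F_{flatten c}(x_+)`. -/
theorem eta_pi_backSlide (c : ℤ →₀ ℕ) :
    (∀ m : ℤ →₀ ℕ, (∀ i ∈ m.support, 0 < i) →
      (((∀ i ∈ c.support, 0 < i) →
          MvPowerSeries.coeff m (backSlideC c) = MvPowerSeries.coeff m (slideC c)) ∧
       (¬ (∀ i ∈ c.support, 0 < i) →
          MvPowerSeries.coeff m (backSlideC c) = 0))) ∧
    (∀ m : ℤ →₀ ℕ, (∀ i ∈ m.support, 0 < i) →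
      ∃ B : ℕ, ∀ b : ℕ, B ≤ b →
        MvPowerSeries.coeff m (slideC (Finsupp.mapDomain (fun i => i + (b : ℤ)) c)) =
          MvPowerSeries.coeff m (Fcomp (flattenC c) {i : ℤ | 0 < i})) := by
  refine ⟨fun m hm => ⟨fun _ => coeff_backSlideW_eq_coeff_slideW _ hm, fun hc => ?_⟩,
    fun m _ => ?_⟩
  · obtain ⟨i, hi, hi₀⟩ : ∃ i ∈ c.support, i ≤ 0 := by simpa using hc
    refine coeff_backSlideW_eq_zero (a := toLex (i, 1)) (mem_WcZ.2 ?_) hi₀ hm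
    simpa [Nat.one_le_iff_ne_zero] using hi
  · refine ⟨m.support.sup fun x => c.support.sup fun i => (x - i).toNat, fun b hb => ?_⟩
    rw [slideC, coeff_slideW_eq_coeff_FqrS (WcZ_getElem_succ_lt_iff _), Fcomp,
      List.map_id_bind_pure, ← flattenC_mapDomain_add c b, ← length_WcZ]
    intro a ha x hx
    obtain ⟨i, hi, hai⟩ := exists_fst_eq_add_of_mem_WcZ_mapDomain_add ha
    have : (x - i).toNat ≤ b :=
      ((Finset.le_sup (f := fun i => (x - i).toNat) hi).trans
        (Finset.le_sup (f := fun x => c.support.sup fun i => (x - i).toNat) hx)).trans hb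
    omega
end

section
/- Shuffle rule for back stable slides: Let c and d be ℕ-vectors with associated injective words W_c and W_d, and let W'_d be the word obtained from W_d by replacing each letter (i,j) by (i, j + c_i). Then 𝔉⃖_c · 𝔉⃖_d = Σ_L 𝔉⃖(L), where L ranges over all interleavings of W_c and W'_d, i.e. all words of length ℓ(W_c) + ℓ(W_d) containing W_c and W'_d as complementary subsequences. -/
/-- `Interleave A B L`: the word `L` contains `A` and `B` as complementary
subsequences. -/
inductive Interleave {α : Type*} : List α → List α → List α → Prop
  | nil : Interleave [] [] []
  | left {a : α} {A B L : List α} : Interleave A B L → Interleave (a :: A) B (a :: L)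
  | right {b : α} {A B L : List α} : Interleave A B L → Interleave A (b :: B) (b :: L)

/-- The word `W'_d` obtained from `W_d` by replacing each letter `(i,j)` by
`(i, j + c_i)`. -/
noncomputable def shiftWord (c : ℤ →₀ ℕ) (W : List (ℤ ×ₗ ℕ+)) : List (ℤ ×ₗ ℕ+) :=
  W.map (fun a => toLex ((ofLex a).1,
    ⟨((ofLex a).2 : ℕ) + c (ofLex a).1, Nat.add_pos_left (ofLex a).2.2 _⟩))

/-!
A sequence `g` counted by `𝔉⃖(W)` is recorded as the finite set of points `(-g j, W j)` in
`ℤ ×ₗ (ℤ ×ₗ ℕ+)`: the conditions on `g` say exactly that listing this set in increasing order and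
reading off second coordinates gives back `W`. So for an injective word `W`, the coefficient of
`x^m` in `𝔉⃖(W)` counts the point sets with word `W`, weight `m` and heights bounded by `val`.
For disjoint injective words `A` and `B`, taking unions, and conversely splitting a set according
to which letters lie in `A`, identifies pairs of point sets for `A` and `B` with point sets whose
word is an interleaving of `A` and `B`; this gives `𝔉⃖(A) 𝔉⃖(B) = ∑_L 𝔉⃖(L)`. Finally the shift
`W_d ↦ W'_d` preserves the relative order of the letters and their values, so
`𝔉⃖(W'_d) = 𝔉⃖(W_d)`, while the letters of `W'_d` avoid those of `W_c`.
-/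

open Finset

section Interleave

variable {α : Type*} {A B L : List α}

theorem Interleave.perm (h : Interleave A B L) : L.Perm (A ++ B) := by
  induction h with
  | nil => rfl
  | left _ ih => exact ih.cons _
  | right _ ih => exact (ih.cons _).trans List.perm_middle.symm

theorem Interleave.nodup (h : Interleave A B L) (hA : A.Nodup) (hB : B.Nodup)
    (hAB : A.Disjoint B) : L.Nodup :=
  h.perm.nodup_iff.2 (hA.append hB hAB)

theorem Interleave.finite_setOf (A B : List α) : {L | Interleave A B L}.Finite :=
  (A ++ B).permutations.finite_toSet.subset fun _ h => List.mem_permutations.2 h.perm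

theorem interleave_filter (p : α → Bool) (L : List α) :
    Interleave (L.filter p) (L.filter fun x => !p x) L := by
  induction L with
  | nil => exact .nil
  | cons x L ih =>
    cases hx : p x
    · simpa [List.filter_cons, hx] using ih.right
    · simpa [List.filter_cons, hx] using ih.left

theorem interleave_iff_filter {p : α → Bool} (hA : ∀ a ∈ A, p a) (hB : ∀ b ∈ B, p b = false) :
    Interleave A B L ↔ L.filter p = A ∧ (L.filter fun x => !p x) = B := by
  refine ⟨fun h => ?_, fun ⟨hpA, hpB⟩ => hpA ▸ hpB ▸ interleave_filter p L⟩
  induction h with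
  | nil => simp
  | @left a A B L _ ih =>
    obtain ⟨h1, h2⟩ := ih (fun x hx => hA x (.tail _ hx)) hB
    simp [hA a (.head _), h1, h2]
  | @right b A B L _ ih =>
    obtain ⟨h1, h2⟩ := ih hA (fun x hx => hB x (.tail _ hx))
    simp [hB b (.head _), h1, h2]

end Interleave

section Weight

variable {α : Type*}

noncomputable def weight (s : Finset (ℤ ×ₗ α)) : ℤ →₀ ℕ :=
  ∑ x ∈ s, Finsupp.single (-(ofLex x).1) 1

theorem weight_image [DecidableEq α] {ι : Type*} {t : Finset ι} {f : ι → ℤ ×ₗ α}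
    (hf : Function.Injective f) :
    weight (t.image f) = ∑ j ∈ t, Finsupp.single (-(ofLex (f j)).1) 1 :=
  sum_image fun _ _ _ _ h => hf h

theorem mem_support_weight {s : Finset (ℤ ×ₗ α)} {x : ℤ ×ₗ α} (hx : x ∈ s) :
    -(ofLex x).1 ∈ (weight s).support := by
  rw [Finsupp.mem_support_iff, weight, Finsupp.finsetSum_apply]
  exact (sum_pos' (fun _ _ => Nat.zero_le _) ⟨x, hx, by simp⟩).ne'

end Weight

section Word

variable {α : Type*} [LinearOrder α]

def wordOf (s : Finset (ℤ ×ₗ α)) : List α := s.sort.map fun x => (ofLex x).2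

theorem mem_wordOf {s : Finset (ℤ ×ₗ α)} {a : α} : a ∈ wordOf s ↔ ∃ x ∈ s, (ofLex x).2 = a := by
  simp [wordOf]

theorem length_wordOf (s : Finset (ℤ ×ₗ α)) : (wordOf s).length = s.card := by
  simp [wordOf]

theorem wordOf_filter (s : Finset (ℤ ×ₗ α)) (p : α → Prop) [DecidablePred p] :
    wordOf (s.filter fun x => p (ofLex x).2) = (wordOf s).filter (p ·) := by
  have hsort : (s.filter fun x => p (ofLex x).2).sort = s.sort.filter fun x => p (ofLex x).2 := by
    have h := (List.toFinset_sort (· ≤ ·) ((s.sort_nodup _).filter (fun x => p (ofLex x).2))).2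
      ((s.pairwise_sort _).sublist List.filter_sublist)
    simpa only [List.toFinset_filter, sort_toFinset, decide_eq_true_eq] using h
  simp [wordOf, hsort, List.filter_map, Function.comp_def]

theorem sort_image_univ {β : Type*} [LinearOrder β] {n : ℕ} {f : Fin n → β} (hf : StrictMono f) :
    (univ.image f).sort = List.ofFn f := by
  have hcard : (univ.image f).card = n := by rw [card_image_of_injective _ hf.injective, card_fin]
  rw [← listMap_orderEmbOfFin_finRange _ hcard,
    ← orderEmbOfFin_unique hcard (fun j => mem_image_of_mem f (mem_univ j)) hf, List.ofFn_eq_map]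

theorem wordOf_image_univ {n : ℕ} {f : Fin n → ℤ ×ₗ α} (hf : StrictMono f) :
    wordOf (univ.image f) = List.ofFn fun j => (ofLex (f j)).2 := by
  rw [wordOf, sort_image_univ hf, List.map_ofFn]
  rfl

theorem wordOf_getElem (s : Finset (ℤ ×ₗ α)) {k : ℕ} (h : s.card = k) (j : Fin k) :
    (ofLex (s.orderEmbOfFin h j)).2 =
      (wordOf s)[(j : ℕ)]'(by rw [length_wordOf, h]; exact j.2) := by
  simp [wordOf, orderEmbOfFin_apply]

end Word

section CompatibleSeq

theorem strictMono_of_lt_of_val_eq_succ {β : Type*} [Preorder β] {n : ℕ} {f : Fin n → β}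
    (h : ∀ j k : Fin n, (k : ℕ) = j + 1 → f j < f k) : StrictMono f := by
  cases n with
  | zero => exact fun i => i.elim0
  | succ n => exact Fin.strictMono_iff_lt_succ.2 fun i => h _ _ (by simp)

theorem strictMono_toLex_neg_iff {β : Type*} [LinearOrder β] {n : ℕ} {g : Fin n → ℤ}
    {w : Fin n → β} (hw : Function.Injective w) :
    StrictMono (fun j => toLex (-g j, w j)) ↔
      Antitone g ∧ ∀ j k : Fin n, (k : ℕ) = j + 1 → w k < w j → g k < g j := by
  constructor
  · intro hf
    refine ⟨fun a b hab => neg_le_neg_iff.1 (Prod.Lex.monotone_fst_ofLex (hf.monotone hab)),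
      fun j k hjk hwkj => ?_⟩
    rcases Prod.Lex.lt_iff.1 (hf (show j < k by rw [Fin.lt_def]; omega)) with h | ⟨-, h⟩
    · simpa using h
    · exact absurd h (asymm hwkj)
  · rintro ⟨hg, hdesc⟩
    refine strictMono_of_lt_of_val_eq_succ fun j k hjk => Prod.Lex.lt_iff.2 ?_
    rcases (hg (show j ≤ k by rw [Fin.le_def]; omega)).lt_or_eq with h | h
    · exact Or.inl (by simpa using h)
    · refine Or.inr ⟨by simp [h], ?_⟩
      exact lt_of_le_of_ne (not_lt.1 fun hlt => (hdesc j k hjk hlt).ne h)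
        (hw.ne (Fin.ne_of_val_ne (by omega)))

abbrev Letter : Type := ℤ ×ₗ ℕ+

def CompatibleSeq {n : ℕ} (w : Fin n → Letter) (m : ℤ →₀ ℕ) : Set (Fin n → ℤ) :=
  {g | Antitone g ∧ (∀ j k : Fin n, (k : ℕ) = (j : ℕ) + 1 → w k < w j → g k < g j) ∧
    (∀ j, g j ≤ (ofLex (w j)).1) ∧ (∑ j, Finsupp.single (g j) 1) = m}

theorem coeff_backSlideW (W : List Letter) (m : ℤ →₀ ℕ) :
    MvPowerSeries.coeff m (backSlideW W) = Nat.card (CompatibleSeq W.get m) :=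
  rfl

def BelowVal (s : Finset (ℤ ×ₗ Letter)) : Prop :=
  ∀ x ∈ s, -(ofLex x).1 ≤ (ofLex (ofLex x).2).1

def pointSet (W : List Letter) (m : ℤ →₀ ℕ) : Set (Finset (ℤ ×ₗ Letter)) :=
  {s | wordOf s = W ∧ BelowVal s ∧ weight s = m}

def points {n : ℕ} (w : Fin n → Letter) (g : Fin n → ℤ) : Fin n → ℤ ×ₗ Letter :=
  fun j => toLex (-g j, w j)

variable {W : List Letter} {m : ℤ →₀ ℕ}

theorem mem_compatibleSeq_iff {n : ℕ} {w : Fin n → Letter} (hw : Function.Injective w)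
    {g : Fin n → ℤ} :
    g ∈ CompatibleSeq w m ↔ StrictMono (points w g) ∧
      BelowVal (univ.image (points w g)) ∧ weight (univ.image (points w g)) = m := by
  unfold points
  rw [strictMono_toLex_neg_iff hw, CompatibleSeq, Set.mem_ofPred_eq, ← and_assoc]
  refine and_congr_right fun hmono => and_congr ?_ ?_
  · simp [BelowVal]
  · rw [weight_image ((strictMono_toLex_neg_iff hw).2 hmono).injective]
    simp

theorem card_eq_length_of_mem_pointSet {s : Finset (ℤ ×ₗ Letter)} (hs : s ∈ pointSet W m) :
    s.card = W.length := by
  rw [← hs.1, length_wordOf]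

def heights (s : Finset (ℤ ×ₗ Letter)) {n : ℕ} (h : s.card = n) (j : Fin n) : ℤ :=
  -(ofLex (s.orderEmbOfFin h j)).1

theorem points_heights {s : Finset (ℤ ×ₗ Letter)} (hs : s ∈ pointSet W m) :
    points W.get (heights s (card_eq_length_of_mem_pointSet hs)) =
      s.orderEmbOfFin (card_eq_length_of_mem_pointSet hs) := by
  funext j
  have hword := wordOf_getElem s (card_eq_length_of_mem_pointSet hs) j
  simp only [hs.1] at hword
  simp only [points, heights, List.get_eq_getElem, neg_neg, ← hword, Prod.mk.eta, toLex_ofLex]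

theorem image_points_mem_pointSet (hW : W.Nodup) {g : Fin W.length → ℤ}
    (hg : g ∈ CompatibleSeq W.get m) : univ.image (points W.get g) ∈ pointSet W m := by
  obtain ⟨hmono, hbelow, hweight⟩ :=
    (mem_compatibleSeq_iff (List.nodup_iff_injective_get.1 hW)).1 hg
  refine ⟨?_, hbelow, hweight⟩
  rw [wordOf_image_univ hmono]
  exact List.ofFn_get W

theorem heights_mem_compatibleSeq (hW : W.Nodup) {s : Finset (ℤ ×ₗ Letter)}
    (hs : s ∈ pointSet W m) :
    heights s (card_eq_length_of_mem_pointSet hs) ∈ CompatibleSeq W.get m := by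
  rw [mem_compatibleSeq_iff (List.nodup_iff_injective_get.1 hW), points_heights hs,
    image_orderEmbOfFin_univ]
  exact ⟨(s.orderEmbOfFin _).strictMono, hs.2⟩

noncomputable def compatibleSeqEquivPointSet (hW : W.Nodup) (m : ℤ →₀ ℕ) :
    CompatibleSeq W.get m ≃ pointSet W m where
  toFun g := ⟨univ.image (points W.get g), image_points_mem_pointSet hW g.2⟩
  invFun s := ⟨heights s.1 _, heights_mem_compatibleSeq hW s.2⟩
  left_inv g := by
    have hunique := orderEmbOfFin_unique (card_eq_length_of_mem_pointSet
      (image_points_mem_pointSet hW g.2)) (fun j => mem_image_of_mem _ (mem_univ j))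
      ((mem_compatibleSeq_iff (List.nodup_iff_injective_get.1 hW)).1 g.2).1
    ext j
    simp [heights, ← hunique, points]
  right_inv s := Subtype.ext (by simp only [points_heights s.2, image_orderEmbOfFin_univ])

theorem coeff_backSlideW_eq_card_pointSet (hW : W.Nodup) (m : ℤ →₀ ℕ) :
    MvPowerSeries.coeff m (backSlideW W) = Nat.card (pointSet W m) := by
  rw [coeff_backSlideW, Nat.card_congr (compatibleSeqEquivPointSet hW m)]

end CompatibleSeq

section Merge

theorem pointSet_finite (W : List Letter) (m : ℤ →₀ ℕ) : (pointSet W m).Finite := by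
  let U : Finset (ℤ ×ₗ Letter) := (m.support.image Neg.neg ×ˢ W.toFinset).image toLex
  refine U.powerset.finite_toSet.subset fun s ⟨hword, _, hweight⟩ => ?_
  rw [mem_coe, mem_powerset]
  intro x hx
  refine mem_image.2 ⟨ofLex x, mem_product.2 ⟨?_, ?_⟩, toLex_ofLex x⟩
  · exact mem_image.2 ⟨_, hweight ▸ mem_support_weight hx, neg_neg _⟩
  · exact List.mem_toFinset.2 (hword ▸ mem_wordOf.2 ⟨x, hx, rfl⟩)

instance (W : List Letter) (m : ℤ →₀ ℕ) : Finite (pointSet W m) :=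
  (pointSet_finite W m).to_subtype

def pointSetPairs (A B : List Letter) (m : ℤ →₀ ℕ) :
    Set (Finset (ℤ ×ₗ Letter) × Finset (ℤ ×ₗ Letter)) :=
  {q | wordOf q.1 = A ∧ wordOf q.2 = B ∧ BelowVal q.1 ∧ BelowVal q.2 ∧
    weight q.1 + weight q.2 = m}

def mergedPointSets (A B : List Letter) (m : ℤ →₀ ℕ) : Set (Finset (ℤ ×ₗ Letter)) :=
  {s | Interleave A B (wordOf s) ∧ BelowVal s ∧ weight s = m}

noncomputable def pointSetPairsEquivSigma (A B : List Letter) (m : ℤ →₀ ℕ) :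
    pointSetPairs A B m ≃ Σ p : antidiagonal m, pointSet A p.1.1 × pointSet B p.1.2 where
  toFun q := ⟨⟨(weight q.1.1, weight q.1.2), mem_antidiagonal.2 q.2.2.2.2.2⟩,
    ⟨q.1.1, q.2.1, q.2.2.2.1, rfl⟩, ⟨q.1.2, q.2.2.1, q.2.2.2.2.1, rfl⟩⟩
  invFun x := ⟨(x.2.1, x.2.2), x.2.1.2.1, x.2.2.2.1, x.2.1.2.2.1, x.2.2.2.2.1, by
    rw [x.2.1.2.2.2, x.2.2.2.2.2]
    exact mem_antidiagonal.1 x.1.2⟩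
  left_inv _ := rfl
  right_inv := by
    rintro ⟨⟨⟨m₁, m₂⟩, -⟩, ⟨s₁, hs₁⟩, ⟨s₂, hs₂⟩⟩
    obtain rfl : m₁ = weight s₁ := hs₁.2.2.symm
    obtain rfl : m₂ = weight s₂ := hs₂.2.2.symm
    rfl

noncomputable def mergedPointSetsEquivSigma (A B : List Letter) (m : ℤ →₀ ℕ)
    (T : Finset (List Letter)) (hT : ∀ L, L ∈ T ↔ Interleave A B L) :
    mergedPointSets A B m ≃ Σ L : T, pointSet L m where
  toFun s := ⟨⟨wordOf s.1, (hT _).2 s.2.1⟩, ⟨s.1, rfl, s.2.2⟩⟩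
  invFun x := ⟨x.2.1, (hT _).1 (by rw [x.2.2.1]; exact x.1.2), x.2.2.2⟩
  left_inv _ := rfl
  right_inv := by
    rintro ⟨⟨L, -⟩, ⟨s, hs⟩⟩
    obtain rfl : L = wordOf s := hs.1.symm
    rfl

theorem snd_mem_of_wordOf_eq {s : Finset (ℤ ×ₗ Letter)} {W : List Letter} (h : wordOf s = W)
    {x : ℤ ×ₗ Letter} (hx : x ∈ s) : (ofLex x).2 ∈ W :=
  h ▸ mem_wordOf.2 ⟨x, hx, rfl⟩

variable {A B : List Letter} {m : ℤ →₀ ℕ} {s₁ s₂ : Finset (ℤ ×ₗ Letter)}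

theorem interleave_iff_filter_mem (hAB : A.Disjoint B) {L : List Letter} :
    Interleave A B L ↔ L.filter (· ∈ A) = A ∧ L.filter (· ∉ A) = B := by
  rw [interleave_iff_filter (p := fun a => decide (a ∈ A)) (by simp)
    (fun b hb => decide_eq_false fun hbA => hAB hbA hb)]
  simp only [decide_not]

theorem filter_union_eq_left (h₁ : wordOf s₁ = A) (h₂ : wordOf s₂ = B) (hAB : A.Disjoint B) :
    (s₁ ∪ s₂).filter (fun x => (ofLex x).2 ∈ A) = s₁ := by
  ext x
  simp only [mem_filter, mem_union]
  exact ⟨fun ⟨hx, hxA⟩ => hx.resolve_right fun hx₂ => hAB hxA (snd_mem_of_wordOf_eq h₂ hx₂),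
    fun hx => ⟨.inl hx, snd_mem_of_wordOf_eq h₁ hx⟩⟩

theorem filter_union_eq_right (h₁ : wordOf s₁ = A) (h₂ : wordOf s₂ = B) (hAB : A.Disjoint B) :
    (s₁ ∪ s₂).filter (fun x => (ofLex x).2 ∉ A) = s₂ := by
  ext x
  simp only [mem_filter, mem_union]
  exact ⟨fun ⟨hx, hxA⟩ => hx.resolve_left fun hx₁ => hxA (snd_mem_of_wordOf_eq h₁ hx₁),
    fun hx => ⟨.inr hx, fun hxA => hAB hxA (snd_mem_of_wordOf_eq h₂ hx)⟩⟩

theorem union_mem_mergedPointSets (hAB : A.Disjoint B) (h : (s₁, s₂) ∈ pointSetPairs A B m) :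
    s₁ ∪ s₂ ∈ mergedPointSets A B m := by
  obtain ⟨h₁, h₂, hb₁, hb₂, hw⟩ := h
  refine ⟨(interleave_iff_filter_mem hAB).2 ⟨?_, ?_⟩, forall_mem_union.2 ⟨hb₁, hb₂⟩, ?_⟩
  · rw [← wordOf_filter, filter_union_eq_left h₁ h₂ hAB, h₁]
  · rw [← wordOf_filter, filter_union_eq_right h₁ h₂ hAB, h₂]
  · rwa [weight, sum_union (disjoint_left.2 fun x hx₁ hx₂ =>
      hAB (snd_mem_of_wordOf_eq h₁ hx₁) (snd_mem_of_wordOf_eq h₂ hx₂))]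

theorem filter_mem_pointSetPairs (hAB : A.Disjoint B) {s : Finset (ℤ ×ₗ Letter)}
    (h : s ∈ mergedPointSets A B m) :
    (s.filter fun x => (ofLex x).2 ∈ A, s.filter fun x => (ofLex x).2 ∉ A) ∈
      pointSetPairs A B m := by
  obtain ⟨hI, hb, hw⟩ := h
  obtain ⟨hA, hB⟩ := (interleave_iff_filter_mem hAB).1 hI
  refine ⟨?_, ?_, fun x hx => hb x (mem_filter.1 hx).1, fun x hx => hb x (mem_filter.1 hx).1, ?_⟩
  · exact (wordOf_filter _ _).trans hA
  · exact (wordOf_filter _ _).trans hB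
  · rw [← hw, weight, weight, weight, sum_filter_add_sum_filter_not]

noncomputable def pointSetPairsEquivMerged (hAB : A.Disjoint B) (m : ℤ →₀ ℕ) :
    pointSetPairs A B m ≃ mergedPointSets A B m where
  toFun q := ⟨q.1.1 ∪ q.1.2, union_mem_mergedPointSets hAB q.2⟩
  invFun s := ⟨_, filter_mem_pointSetPairs hAB s.2⟩
  left_inv := by
    rintro ⟨⟨s₁, s₂⟩, h₁, h₂, -⟩
    exact Subtype.ext
      (Prod.ext (filter_union_eq_left h₁ h₂ hAB) (filter_union_eq_right h₁ h₂ hAB))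
  right_inv s := Subtype.ext (filter_union_filter_not_eq _ s.1)

end Merge

section Product

variable {A B : List Letter}

theorem sum_card_pointSet_mul_card_pointSet (hAB : A.Disjoint B) (m : ℤ →₀ ℕ)
    (T : Finset (List Letter)) (hT : ∀ L, L ∈ T ↔ Interleave A B L) :
    ∑ p ∈ antidiagonal m, Nat.card (pointSet A p.1) * Nat.card (pointSet B p.2) =
      ∑ L ∈ T, Nat.card (pointSet L m) := by
  calc ∑ p ∈ antidiagonal m, Nat.card (pointSet A p.1) * Nat.card (pointSet B p.2)
      = Nat.card (Σ p : antidiagonal m, pointSet A p.1.1 × pointSet B p.1.2) := by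
        rw [Nat.card_sigma, ← sum_coe_sort]
        simp only [Nat.card_prod]
    _ = Nat.card (Σ L : T, pointSet L m) :=
        Nat.card_congr ((pointSetPairsEquivSigma A B m).symm.trans
          ((pointSetPairsEquivMerged hAB m).trans (mergedPointSetsEquivSigma A B m T hT)))
    _ = ∑ L ∈ T, Nat.card (pointSet L m) := by
        rw [Nat.card_sigma, sum_coe_sort T fun L => Nat.card (pointSet L m)]

theorem backSlideW_mul_eq_finsum_interleave (hA : A.Nodup) (hB : B.Nodup) (hAB : A.Disjoint B) :
    backSlideW A * backSlideW B = ∑ᶠ L ∈ {L | Interleave A B L}, backSlideW L := by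
  have hfin := Interleave.finite_setOf A B
  rw [finsum_mem_eq_finite_toFinset_sum _ hfin]
  ext m
  rw [MvPowerSeries.coeff_mul, map_sum, sum_congr rfl fun L hL =>
    coeff_backSlideW_eq_card_pointSet ((hfin.mem_toFinset.1 hL).nodup hA hB hAB) m]
  simp only [coeff_backSlideW_eq_card_pointSet hA, coeff_backSlideW_eq_card_pointSet hB]
  exact_mod_cast sum_card_pointSet_mul_card_pointSet hAB m _ fun L => hfin.mem_toFinset

end Product

theorem backSlideW_map {f : Letter → Letter} (hf : StrictMono f)
    (hval : ∀ a, (ofLex (f a)).1 = (ofLex a).1) (W : List Letter) :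
    backSlideW (W.map f) = backSlideW W := by
  ext m
  -- stated for independent lengths so that `(W.map f).length = W.length` can be substituted
  have hcongr : ∀ {n n' : ℕ} (h : n = n') (w : Fin n → Letter) (w' : Fin n' → Letter),
      (∀ j, w' (Fin.cast h j) = f (w j)) →
        Nat.card (CompatibleSeq w' m) = Nat.card (CompatibleSeq w m) := by
    rintro n _ rfl w w' hw
    obtain rfl : w' = f ∘ w := funext hw
    rw [show CompatibleSeq (f ∘ w) m = CompatibleSeq w m from
      Set.ext fun g => by simp [CompatibleSeq, hf.lt_iff_lt, hval]]
  rw [coeff_backSlideW, coeff_backSlideW,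
    hcongr (W.length_map f).symm W.get (W.map f).get fun j => by simp]

section Words

theorem coe_snd_le_of_mem_WcZ {c : ℤ →₀ ℕ} {a : Letter} (ha : a ∈ WcZ c) :
    ((ofLex a).2 : ℕ) ≤ c (ofLex a).1 := by
  simp only [WcZ, List.mem_flatten, List.mem_map] at ha
  obtain ⟨_, ⟨i, -, rfl⟩, ha⟩ := ha
  obtain ⟨j, hj, rfl⟩ := List.mem_map.1 ha
  simpa using hj

theorem nodup_WcZ (c : ℤ →₀ ℕ) : (WcZ c).Nodup := by
  rw [WcZ, List.nodup_flatten, List.pairwise_map]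
  refine ⟨?_, (List.nodup_reverse.2 (sort_nodup _ _)).imp fun hne => ?_⟩
  · simp only [List.mem_map]
    rintro _ ⟨i, -, rfl⟩
    exact List.nodup_range.map fun j k h => by simpa using h
  · simp only [List.Disjoint, List.mem_map]
    rintro _ ⟨j, -, rfl⟩ ⟨k, -, h⟩
    exact hne (congrArg (fun a : Letter => (ofLex a).1) h).symm

def shiftLetter (c : ℤ →₀ ℕ) (a : Letter) : Letter :=
  toLex ((ofLex a).1, ⟨((ofLex a).2 : ℕ) + c (ofLex a).1, Nat.add_pos_left (ofLex a).2.2 _⟩)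

theorem strictMono_shiftLetter (c : ℤ →₀ ℕ) : StrictMono (shiftLetter c) := by
  intro a b hab
  rcases Prod.Lex.lt_iff.1 hab with h | ⟨h₁, h₂⟩
  · exact Prod.Lex.lt_iff.2 (.inl h)
  · refine Prod.Lex.lt_iff.2 (.inr ⟨h₁, ?_⟩)
    simp only [shiftLetter, ofLex_toLex, h₁]
    exact Nat.add_lt_add_right h₂ _

theorem backSlideW_shiftWord (c : ℤ →₀ ℕ) (W : List Letter) :
    backSlideW (shiftWord c W) = backSlideW W :=
  backSlideW_map (strictMono_shiftLetter c) (fun _ => rfl) W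

theorem disjoint_WcZ_shiftWord (c d : ℤ →₀ ℕ) : (WcZ c).Disjoint (shiftWord c (WcZ d)) := by
  intro a ha hb
  obtain ⟨b, -, rfl⟩ := List.mem_map.1 hb
  have := coe_snd_le_of_mem_WcZ ha
  simp only [ofLex_toLex, PNat.mk_coe] at this
  exact (ofLex b).2.ne_zero (by omega)

end Words

/-- **Shuffle rule for back stable slides**: `𝔉⃖_c · 𝔉⃖_d = ∑_L 𝔉⃖(L)`, the sum over
all interleavings `L` of `W_c` and `W'_d`, where `W'_d` is `W_d` with each letter `(i,j)`
replaced by `(i, j + c_i)`. -/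
theorem backSlide_shuffle (c d : ℤ →₀ ℕ) :
    backSlideC c * backSlideC d =
      ∑ᶠ L ∈ {L : List (ℤ ×ₗ ℕ+) | Interleave (WcZ c) (shiftWord c (WcZ d)) L},
        backSlideW L := by
  rw [backSlideC, backSlideC, ← backSlideW_shiftWord c (WcZ d)]
  exact backSlideW_mul_eq_finsum_interleave (nodup_WcZ c)
    ((nodup_WcZ d).map (strictMono_shiftLetter c).injective) (disjoint_WcZ_shiftWord c d)
end

section
/- For every m ≥ 1, the relation ≤_m is a partial order on 𝒫_m, and the poset (𝒫_m, ≤_m) is a lattice: any two elements have a least upper bound and a greatest lower bound. -/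
/-!
Encode `C ∈ 𝒫_m` as the antitone integer sequence on `ℕ` that repeats `C_m` forever; then
`D ≤_m C` says `D ≤ C` pointwise and every descent of `C` is a descent of `D`. Both lattice
operations are built by recursion along the sequence. The join may only descend where both
arguments descend, so it is constant on the blocks between common descents, equal there to
`max C D` at the start of the block. The meet must descend wherever either argument does, so it
is the largest sequence below `min C D` that drops by at least one at each such place.
-/

/-- `𝒫_m`: weakly decreasing sequences `(C₁, …, C_m)` of integers. -/
def Pm (m : ℕ) : Type := {C : Fin m → ℤ // Antitone C}

/-- The order `D ≤_m C` on `𝒫_m`: `D_i ≤ C_i` for all `i`, and `D_i > D_{i+1}`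
whenever `C_i > C_{i+1}`. -/
def relm {m : ℕ} (D C : Pm m) : Prop :=
  (∀ i, D.1 i ≤ C.1 i) ∧
  ∀ i j : Fin m, (j : ℕ) = (i : ℕ) + 1 → C.1 j < C.1 i → D.1 j < D.1 i

theorem relm_isPartialOrder (m : ℕ) : IsPartialOrder (Pm m) relm where
  refl _ := ⟨fun _ => le_rfl, fun _ _ _ h => h⟩
  trans _ _ _ hAB hBC :=
    ⟨fun i => (hAB.1 i).trans (hBC.1 i), fun i j hij h => hAB.2 i j hij (hBC.2 i j hij h)⟩
  antisymm _ _ hAB hBA := Subtype.ext <| funext fun i => le_antisymm (hAB.1 i) (hBA.1 i)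

namespace IntSeq

def SeqLE (d c : ℕ → ℤ) : Prop :=
  (∀ n, d n ≤ c n) ∧ ∀ n, c (n + 1) < c n → d (n + 1) < d n

def StableFrom (N : ℕ) (c : ℕ → ℤ) : Prop :=
  ∀ n, N ≤ n → c (n + 1) = c n

theorem StableFrom.apply_min {N : ℕ} {c : ℕ → ℤ} (hc : StableFrom N c) (n : ℕ) :
    c (min n N) = c n := by
  rcases le_total n N with h | h
  · rw [min_eq_left h]
  · rw [min_eq_right h]
    induction n, h using Nat.le_induction with
    | base => rfl
    | succ n hn ih => rw [hc n hn, ih]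

def joinSeq (c d : ℕ → ℤ) : ℕ → ℤ
  | 0 => max (c 0) (d 0)
  | n + 1 =>
    if c (n + 1) < c n ∧ d (n + 1) < d n then max (c (n + 1)) (d (n + 1)) else joinSeq c d n

def meetSeq (c d : ℕ → ℤ) : ℕ → ℤ
  | 0 => min (c 0) (d 0)
  | n + 1 =>
    min (min (c (n + 1)) (d (n + 1)))
      (meetSeq c d n - if c (n + 1) < c n ∨ d (n + 1) < d n then 1 else 0)

variable {c d g : ℕ → ℤ}

section Join

theorem joinSeq_le (hg : Antitone g) (hcg : SeqLE c g) (hdg : SeqLE d g) (n : ℕ) :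
    joinSeq c d n ≤ g n := by
  induction n with
  | zero => exact max_le (hcg.1 0) (hdg.1 0)
  | succ n ih =>
    rw [joinSeq]
    split_ifs with h
    · exact max_le (hcg.1 _) (hdg.1 _)
    · have hg_step : g (n + 1) = g n :=
        (hg n.le_succ).eq_or_lt.resolve_right fun hlt => h ⟨hcg.2 n hlt, hdg.2 n hlt⟩
      rwa [hg_step]

variable (hc : Antitone c) (hd : Antitone d)
include hc hd

theorem max_le_joinSeq (n : ℕ) : max (c n) (d n) ≤ joinSeq c d n := by
  induction n with
  | zero => exact le_rfl
  | succ n ih =>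
    rw [joinSeq]
    split_ifs
    · exact le_rfl
    · exact (max_le_max (hc n.le_succ) (hd n.le_succ)).trans ih

theorem joinSeq_succ_lt_iff (n : ℕ) :
    joinSeq c d (n + 1) < joinSeq c d n ↔ c (n + 1) < c n ∧ d (n + 1) < d n := by
  refine ⟨fun h => ?_, fun h => ?_⟩
  · by_contra hn
    rw [joinSeq, if_neg hn] at h
    exact h.false
  · rw [joinSeq, if_pos h]
    exact (max_lt_max h.1 h.2).trans_le (max_le_joinSeq hc hd n)

theorem antitone_joinSeq : Antitone (joinSeq c d) := by
  refine antitone_nat_of_succ_le fun n => ?_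
  by_cases h : c (n + 1) < c n ∧ d (n + 1) < d n
  · exact ((joinSeq_succ_lt_iff hc hd n).2 h).le
  · rw [joinSeq, if_neg h]

theorem seqLE_joinSeq_left : SeqLE c (joinSeq c d) :=
  ⟨fun n => (le_max_left _ _).trans (max_le_joinSeq hc hd n),
    fun n h => ((joinSeq_succ_lt_iff hc hd n).1 h).1⟩

theorem seqLE_joinSeq_right : SeqLE d (joinSeq c d) :=
  ⟨fun n => (le_max_right _ _).trans (max_le_joinSeq hc hd n),
    fun n h => ((joinSeq_succ_lt_iff hc hd n).1 h).2⟩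

theorem joinSeq_seqLE (hg : Antitone g) (hcg : SeqLE c g) (hdg : SeqLE d g) :
    SeqLE (joinSeq c d) g :=
  ⟨joinSeq_le hg hcg hdg,
    fun n h => (joinSeq_succ_lt_iff hc hd n).2 ⟨hcg.2 n h, hdg.2 n h⟩⟩

end Join

theorem StableFrom.joinSeq {N : ℕ} (hc : StableFrom N c) (hd : StableFrom N d) :
    StableFrom N (joinSeq c d) := fun n hn => by
  rw [IntSeq.joinSeq, if_neg (by rw [hc n hn, hd n hn]; simp)]

section Meet

theorem meetSeq_le_min (n : ℕ) : meetSeq c d n ≤ min (c n) (d n) := by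
  cases n with
  | zero => exact le_rfl
  | succ n => exact min_le_left _ _

theorem antitone_meetSeq : Antitone (meetSeq c d) := by
  refine antitone_nat_of_succ_le fun n => (min_le_right _ _).trans ?_
  split_ifs <;> omega

theorem meetSeq_succ_lt_iff (hc : Antitone c) (hd : Antitone d) (n : ℕ) :
    meetSeq c d (n + 1) < meetSeq c d n ↔ c (n + 1) < c n ∨ d (n + 1) < d n := by
  refine ⟨fun h => ?_, fun h => ?_⟩
  · by_contra hn
    have hc_step : c (n + 1) = c n := (hc n.le_succ).eq_or_lt.resolve_right fun h' => hn (.inl h')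
    have hd_step : d (n + 1) = d n := (hd n.le_succ).eq_or_lt.resolve_right fun h' => hn (.inr h')
    rw [meetSeq, if_neg hn, hc_step, hd_step, sub_zero, min_eq_right (meetSeq_le_min n)] at h
    exact h.false
  · have : meetSeq c d (n + 1) ≤ meetSeq c d n - 1 := by
      rw [meetSeq, if_pos h]
      exact min_le_right _ _
    omega

theorem le_meetSeq (hg : Antitone g) (hgc : SeqLE g c) (hgd : SeqLE g d) (n : ℕ) :
    g n ≤ meetSeq c d n := by
  induction n with
  | zero => exact le_min (hgc.1 0) (hgd.1 0)
  | succ n ih =>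
    refine le_min (le_min (hgc.1 _) (hgd.1 _)) ?_
    split_ifs with h
    · have := h.elim (hgc.2 n) (hgd.2 n)
      omega
    · have : g (n + 1) ≤ g n := hg n.le_succ
      omega

variable (hc : Antitone c) (hd : Antitone d)
include hc hd

theorem meetSeq_seqLE_left : SeqLE (meetSeq c d) c :=
  ⟨fun n => (meetSeq_le_min n).trans (min_le_left _ _),
    fun n h => (meetSeq_succ_lt_iff hc hd n).2 (.inl h)⟩

theorem meetSeq_seqLE_right : SeqLE (meetSeq c d) d :=
  ⟨fun n => (meetSeq_le_min n).trans (min_le_right _ _),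
    fun n h => (meetSeq_succ_lt_iff hc hd n).2 (.inr h)⟩

theorem seqLE_meetSeq (hg : Antitone g) (hgc : SeqLE g c) (hgd : SeqLE g d) :
    SeqLE g (meetSeq c d) :=
  ⟨le_meetSeq hg hgc hgd,
    fun n h => ((meetSeq_succ_lt_iff hc hd n).1 h).elim (hgc.2 n) (hgd.2 n)⟩

end Meet

theorem StableFrom.meetSeq {N : ℕ} (hc : StableFrom N c) (hd : StableFrom N d) :
    StableFrom N (meetSeq c d) := fun n hn => by
  rw [IntSeq.meetSeq, if_neg (by rw [hc n hn, hd n hn]; simp), hc n hn, hd n hn, sub_zero,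
    min_eq_right (meetSeq_le_min n)]

end IntSeq

open IntSeq

namespace Pm

variable {n : ℕ}

def toSeq (A : Pm (n + 1)) (k : ℕ) : ℤ :=
  A.1 ⟨min k n, Nat.lt_succ_of_le (min_le_right k n)⟩

def ofSeq (e : ℕ → ℤ) (he : Antitone e) : Pm (n + 1) :=
  ⟨fun i => e i, he.comp_monotone Fin.val_strictMono.monotone⟩

theorem toSeq_val (A : Pm (n + 1)) (i : Fin (n + 1)) : A.toSeq i = A.1 i := by
  simp [toSeq, min_eq_left (Nat.le_of_lt_succ i.2)]

theorem antitone_toSeq (A : Pm (n + 1)) : Antitone A.toSeq :=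
  fun _ _ h => A.2 (Fin.mk_le_mk.2 (min_le_min_right n h))

theorem stableFrom_toSeq (A : Pm (n + 1)) : StableFrom n A.toSeq := fun k hk => by
  simp only [toSeq, min_eq_right hk, min_eq_right (hk.trans k.le_succ)]

theorem toSeq_ofSeq {e : ℕ → ℤ} (he : Antitone e) (hs : StableFrom n e) :
    (ofSeq (n := n) e he).toSeq = e :=
  funext hs.apply_min

theorem relm_iff_seqLE {D C : Pm (n + 1)} : relm D C ↔ SeqLE D.toSeq C.toSeq := by
  refine ⟨fun h => ⟨fun k => h.1 _, fun k hk => ?_⟩, fun h => ⟨fun i => ?_, fun i j hij hC => ?_⟩⟩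
  · have hkn : k + 1 ≤ n := by
      by_contra hkn
      rw [C.stableFrom_toSeq k (by omega)] at hk
      exact hk.false
    have := h.2 ⟨k, by omega⟩ ⟨k + 1, by omega⟩ rfl
    simp only [← toSeq_val] at this
    exact this hk
  · simpa only [toSeq_val] using h.1 i
  · have := h.2 i
    simp only [← hij, toSeq_val] at this
    exact this hC

end Pm

namespace Pm

variable {n : ℕ}

theorem exists_join (C D : Pm (n + 1)) :
    ∃ E : Pm (n + 1), relm C E ∧ relm D E ∧ ∀ G, relm C G → relm D G → relm E G := by
  have hc := C.antitone_toSeq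
  have hd := D.antitone_toSeq
  have he := antitone_joinSeq hc hd
  have hE := toSeq_ofSeq he (C.stableFrom_toSeq.joinSeq D.stableFrom_toSeq)
  refine ⟨ofSeq _ he, ?_⟩
  simp only [relm_iff_seqLE, hE]
  exact ⟨seqLE_joinSeq_left hc hd, seqLE_joinSeq_right hc hd,
    fun G => joinSeq_seqLE hc hd G.antitone_toSeq⟩

theorem exists_meet (C D : Pm (n + 1)) :
    ∃ E : Pm (n + 1), relm E C ∧ relm E D ∧ ∀ G, relm G C → relm G D → relm G E := by
  have hc := C.antitone_toSeq
  have hd := D.antitone_toSeq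
  have he : Antitone (meetSeq C.toSeq D.toSeq) := antitone_meetSeq
  have hE := toSeq_ofSeq he (C.stableFrom_toSeq.meetSeq D.stableFrom_toSeq)
  refine ⟨ofSeq _ he, ?_⟩
  simp only [relm_iff_seqLE, hE]
  exact ⟨meetSeq_seqLE_left hc hd, meetSeq_seqLE_right hc hd,
    fun G => seqLE_meetSeq hc hd G.antitone_toSeq⟩

end Pm

/-- For every `m ≥ 1`, `≤_m` is a partial order on `𝒫_m`, and `(𝒫_m, ≤_m)` is a
lattice: any two elements have a least upper bound and a greatest lower bound. -/
theorem Pm_lattice (m : ℕ) (hm : 1 ≤ m) :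
    IsPartialOrder (Pm m) relm ∧
    (∀ C D : Pm m, ∃ E : Pm m, relm C E ∧ relm D E ∧
      ∀ G : Pm m, relm C G → relm D G → relm E G) ∧
    (∀ C D : Pm m, ∃ E : Pm m, relm E C ∧ relm E D ∧
      ∀ G : Pm m, relm G C → relm G D → relm G E) := by
  obtain ⟨n, rfl⟩ := Nat.exists_eq_add_of_le' hm
  exact ⟨relm_isPartialOrder _, Pm.exists_join, Pm.exists_meet⟩
end

section
/- Let C, D ∈ 𝒫_m with D ≤_m C. Then the Möbius function of the poset (𝒫_m, ≤_m) satisfies μ(D,C) = (−1)^{|S_C(D)|} if D ∈ 𝔹_C, and μ(D,C) = 0 if D ∉ 𝔹_C. -/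
/-- Position `i` is the start of a block of `C` (i.e. `i = 0` or `C_{i-1} > C_i`). -/
def IsStart {m : ℕ} (C : Fin m → ℤ) (i : Fin m) : Prop :=
  (i : ℕ) = 0 ∨ ∃ h : Fin m, (i : ℕ) = (h : ℕ) + 1 ∧ C i < C h

/-- Membership `D ∈ 𝔹_C`: writing `C = M₁^{m₁}⋯M_t^{m_t}` (blocks of equal entries),
`D` is a concatenation of words `X^i ∈ B_i` where each `X^i = x₁⋯x_{m_i}` satisfies
`x_{j+1} ∈ {x_j, x_j − 1}` starting from `x₀ = M_i`, and ends with `x_{m_i} > M_{i+1}`.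
Equivalently: at each block start `D_i ∈ {C_i, C_i − 1}`; inside a block
`D_{i+1} ∈ {D_i, D_i − 1}`; and at each block end (followed by a strictly smaller
block value `C_{i+1}`) one has `D_i > C_{i+1}`. -/
def InBC {m : ℕ} (C D : Fin m → ℤ) : Prop :=
  (∀ i : Fin m, IsStart C i → (D i = C i ∨ D i = C i - 1)) ∧
  (∀ i j : Fin m, (j : ℕ) = (i : ℕ) + 1 → C i = C j → (D j = D i ∨ D j = D i - 1)) ∧
  (∀ i j : Fin m, (j : ℕ) = (i : ℕ) + 1 → C j < C i → C j < D i)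

/-- The set `S_C(D)` of positions at which the word `D ∈ 𝔹_C` takes a downward step
(`x_{j+1} = x_j − 1`) relative to its reference (`C_i` at a block start, the previous
entry of `D` inside a block). -/
def SCD {m : ℕ} (C D : Fin m → ℤ) : Set (Fin m) :=
  {i | (IsStart C i ∧ D i = C i - 1) ∨
       ∃ h : Fin m, (i : ℕ) = (h : ℕ) + 1 ∧ C h = C i ∧ D i = D h - 1}

/-!
Both `μ(·, C)` and the claimed formula satisfy the recursion that defines the Möbius function on
the finite intervals `[D, C]`, so they agree by induction on the size of the interval.

For the formula, the recursion says that the signs `(-1)^|S_C(E)|` of the `E ∈ 𝔹_C` above `D`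
cancel. They are paired by toggling a fixed position `p`: shifting `E` by one on the block of `C`
containing `p`, from `p` onwards, adds `p` to `S_C(E)` or removes it. On a block of `C`, `C - E`
counts the steps of `E` so far, and these steps can only occur where `D` steps down, which happens
at most `C - D` times so far. So the partner stays above `D` and inside `𝔹_C` as soon as `D` steps
down at `p` and the block of `p` leaves room for one more step; the last position where `D` steps
down is such a `p`.
-/

open scoped symmDiff

theorem eq_of_finsum_Icc_eq_zero {α M : Type*} [PartialOrder α] [AddCommGroup M] {C : α}
    (hfin : ∀ D, (Set.Icc D C).Finite) {f g : α → M} (hC : f C = g C)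
    (hf : ∀ D < C, ∑ᶠ E ∈ Set.Icc D C, f E = 0) (hg : ∀ D < C, ∑ᶠ E ∈ Set.Icc D C, g E = 0)
    {D : α} (hD : D ≤ C) : f D = g D := by
  induction hn : (Set.Icc D C).ncard using Nat.strong_induction_on generalizing D with
  | _ n ih =>
    obtain rfl | hDC := hD.eq_or_lt
    · exact hC
    have hfg : ∀ E ∈ Set.Ioc D C, f E = g E := fun E hE =>
      ih _ (hn ▸ Set.ncard_lt_ncard (Set.Icc_ssubset_Icc_left hD hE.1 le_rfl) (hfin D)) hE.2 rfl
    have hsplit : ∀ φ : α → M, ∑ᶠ E ∈ Set.Icc D C, φ E = φ D + ∑ᶠ E ∈ Set.Ioc D C, φ E :=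
      fun φ => by
        rw [← Set.Ioc_insert_left hD, finsum_mem_insert _ Set.left_notMem_Ioc
          ((hfin D).subset Set.Ioc_subset_Icc_self)]
    calc f D = -∑ᶠ E ∈ Set.Ioc D C, f E := eq_neg_of_add_eq_zero_left (hsplit f ▸ hf D hDC)
      _ = -∑ᶠ E ∈ Set.Ioc D C, g E := by rw [finsum_mem_congr rfl hfg]
      _ = g D := (eq_neg_of_add_eq_zero_left (hsplit g ▸ hg D hDC)).symm

lemma neg_one_pow_ncard_symmDiff_singleton {α R : Type*} [Finite α] [Ring R] (s : Set α) (a : α) :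
    (-1 : R) ^ (s ∆ {a}).ncard = -(-1) ^ s.ncard := by
  by_cases ha : a ∈ s
  · have hs : s ∆ {a} = s \ {a} := by ext; grind
    rw [hs, ← Set.ncard_sdiff_singleton_add_one ha, pow_succ, mul_neg_one, neg_neg]
  · have hs : s ∆ {a} = insert a s := by ext; grind
    rw [hs, Set.ncard_insert_of_notMem ha, pow_succ, mul_neg_one]

lemma Fin.lt_of_val_eq_add_one {m : ℕ} {i j : Fin m} (hij : (j : ℕ) = i + 1) : i < j :=
  Fin.lt_def.2 (by omega)

lemma Fin.antitone_of_forall_val_eq_add_one {m : ℕ} {α : Type*} [Preorder α] {f : Fin m → α}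
    (hf : ∀ i j : Fin m, (j : ℕ) = i + 1 → f j ≤ f i) : Antitone f := by
  cases m with
  | zero => exact fun i => i.elim0
  | succ n => exact Fin.antitone_iff_succ_le.2 fun i => hf _ _ (by simp)

namespace Pm

variable {m : ℕ}

instance : PartialOrder (Pm m) where
  le := relm
  le_refl _ := ⟨fun _ => le_rfl, fun _ _ _ h => h⟩
  le_trans _ _ _ hDE hEC :=
    ⟨fun i => (hDE.1 i).trans (hEC.1 i), fun i j hij h => hDE.2 i j hij (hEC.2 i j hij h)⟩
  le_antisymm D C hDC hCD := Subtype.ext (funext fun i => le_antisymm (hDC.1 i) (hCD.1 i))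

lemma finite_Icc (D C : Pm m) : (Set.Icc D C).Finite :=
  ((Set.Finite.pi' fun i => Set.finite_Icc (D.1 i) (C.1 i)).preimage
    Subtype.val_injective.injOn).subset fun _ hE i => ⟨hE.1.1 i, hE.2.1 i⟩

/-- `relm` on sequences not yet known to be antitone. -/
def LE' (D C : Fin m → ℤ) : Prop :=
  (∀ i, D i ≤ C i) ∧ ∀ i j : Fin m, (j : ℕ) = i + 1 → C j < C i → D j < D i

section Blocks

variable {C D E : Fin m → ℤ} {S T : Set (Fin m)} {h i j l p q : Fin m}

lemma _root_.IsStart.le_of_eq (hC : Antitone C) (hs : IsStart C i) (hq : C q = C i) : i ≤ q := by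
  by_contra! hqi
  rcases hs with hi | ⟨h, hih, hlt⟩
  · exact absurd (Fin.lt_def.1 hqi) (by omega)
  · have := hC (Fin.le_def.2 (by have := Fin.lt_def.1 hqi; omega) : q ≤ h)
    omega

lemma exists_pred_of_not_isStart (hC : Antitone C) (hi : ¬ IsStart C i) :
    ∃ h : Fin m, (i : ℕ) = h + 1 ∧ C h = C i := by
  simp only [IsStart, not_or, not_exists, not_and, not_lt] at hi
  obtain ⟨hi0, hpred⟩ := hi
  have hh : (i : ℕ) = (⟨i - 1, by omega⟩ : Fin m) + 1 := (Nat.sub_add_cancel (by omega)).symm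
  exact ⟨_, hh, le_antisymm (hpred _ hh) (hC (Fin.lt_of_val_eq_add_one hh).le)⟩

lemma not_isStart_of_pred (hih : (i : ℕ) = h + 1) (hC : C h = C i) : ¬ IsStart C i := by
  rintro (hi | ⟨h', hih', hlt⟩)
  · omega
  · obtain rfl : h = h' := Fin.ext (by omega)
    omega

lemma mem_SCD_of_isStart (hi : IsStart C i) : i ∈ SCD C E ↔ E i = C i - 1 :=
  ⟨fun hmem => hmem.elim And.right fun ⟨_, hih, hC, _⟩ => absurd hi (not_isStart_of_pred hih hC),
    fun hE => Or.inl ⟨hi, hE⟩⟩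

lemma mem_SCD_of_pred (hih : (i : ℕ) = h + 1) (hC : C h = C i) :
    i ∈ SCD C E ↔ E i = E h - 1 := by
  refine ⟨?_, fun hE => Or.inr ⟨h, hih, hC, hE⟩⟩
  rintro (⟨hi, -⟩ | ⟨h', hih', -, hE⟩)
  · exact absurd hi (not_isStart_of_pred hih hC)
  · obtain rfl : h = h' := Fin.ext (by omega)
    exact hE

/-- The positions where an `E ∈ 𝔹_C` with `D ≤_m E` is allowed to step down. -/
def freeSet (C D : Fin m → ℤ) : Set (Fin m) :=
  {i | (IsStart C i ∧ D i < C i) ∨ ∃ h : Fin m, (i : ℕ) = h + 1 ∧ C h = C i ∧ D i < D h}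

lemma mem_freeSet_of_isStart (hi : IsStart C i) : i ∈ freeSet C D ↔ D i < C i :=
  ⟨fun hmem => hmem.elim And.right fun ⟨_, hih, hC, _⟩ => absurd hi (not_isStart_of_pred hih hC),
    fun hD => Or.inl ⟨hi, hD⟩⟩

lemma mem_freeSet_of_pred (hih : (i : ℕ) = h + 1) (hC : C h = C i) :
    i ∈ freeSet C D ↔ D i < D h := by
  refine ⟨?_, fun hD => Or.inr ⟨h, hih, hC, hD⟩⟩
  rintro (⟨hi, -⟩ | ⟨h', hih', -, hD⟩)
  · exact absurd hi (not_isStart_of_pred hih hC)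
  · obtain rfl : h = h' := Fin.ext (by omega)
    exact hD

lemma SCD_subset_freeSet (hDE : LE' D E) : SCD C E ⊆ freeSet C D := by
  rintro i (⟨hi, hE⟩ | ⟨h, hih, hC, hE⟩)
  · exact Or.inl ⟨hi, by linarith [hDE.1 i]⟩
  · exact Or.inr ⟨h, hih, hC, hDE.2 h i hih (by omega)⟩

lemma le_of_freeSet_eq_empty (hC : Antitone C) (hF : freeSet C D = ∅) (l : Fin m) : C l ≤ D l := by
  induction l using WellFoundedLT.induction with
  | _ l ih =>
  have hl : l ∉ freeSet C D := hF ▸ Set.notMem_empty l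
  by_cases hst : IsStart C l
  · simpa [mem_freeSet_of_isStart hst] using hl
  · obtain ⟨h, hlh, hCh⟩ := exists_pred_of_not_isStart hC hst
    have := ih h (Fin.lt_of_val_eq_add_one hlh)
    rw [mem_freeSet_of_pred hlh hCh] at hl
    omega

noncomputable def blockCount (C : Fin m → ℤ) (S : Set (Fin m)) (l : Fin m) : ℕ :=
  {q ∈ S | C q = C l ∧ q ≤ l}.ncard

lemma blockCount_of_isStart (hC : Antitone C) (hl : IsStart C l) [Decidable (l ∈ S)] :
    blockCount C S l = if l ∈ S then 1 else 0 := by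
  have : {q ∈ S | C q = C l ∧ q ≤ l} = S ∩ {l} := by
    ext q
    simp only [Set.mem_ofPred_eq, Set.mem_inter_iff, Set.mem_singleton_iff]
    exact and_congr_right fun _ =>
      ⟨fun ⟨hq, hql⟩ => le_antisymm hql (hl.le_of_eq hC hq), fun hq => hq ▸ ⟨rfl, le_rfl⟩⟩
  split_ifs with hlS <;> simp [blockCount, this, hlS]

lemma blockCount_of_pred (hlh : (l : ℕ) = h + 1) (hC : C h = C l) [Decidable (l ∈ S)] :
    blockCount C S l = blockCount C S h + if l ∈ S then 1 else 0 := by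
  have hlt : h < l := Fin.lt_of_val_eq_add_one hlh
  have hle : ∀ q, q ≤ l ↔ q ≤ h ∨ q = l := fun q => by
    simp only [Fin.le_def, Fin.ext_iff]; omega
  have hset : {q ∈ S | C q = C l ∧ q ≤ l} = {q ∈ S | C q = C h ∧ q ≤ h} ∪ (S ∩ {l}) := by
    ext q
    simp only [Set.mem_ofPred_eq, Set.mem_union, Set.mem_inter_iff, Set.mem_singleton_iff, hle, hC]
    constructor
    · rintro ⟨hqS, hCq, hqh | rfl⟩
      exacts [Or.inl ⟨hqS, hCq, hqh⟩, Or.inr ⟨hqS, rfl⟩]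
    · rintro (⟨hqS, hCq, hqh⟩ | ⟨hqS, rfl⟩)
      exacts [⟨hqS, hCq, Or.inl hqh⟩, ⟨hqS, rfl, Or.inr rfl⟩]
  have hdisj : Disjoint {q ∈ S | C q = C h ∧ q ≤ h} (S ∩ {l}) :=
    Set.disjoint_left.2 fun q hq hq' => absurd (hq'.2 ▸ hq.2.2) hlt.not_ge
  rw [blockCount, hset, Set.ncard_union_eq hdisj, blockCount]
  split_ifs with hlS <;> simp [hlS]

lemma blockCount_lt_blockCount (hST : S ⊆ T) (hpT : p ∈ T) (hpS : p ∉ S) (hpl : p ≤ l)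
    (hC : C p = C l) : blockCount C S l < blockCount C T l :=
  Set.ncard_lt_ncard ⟨fun q hq => ⟨hST hq.1, hq.2⟩, fun hsub => hpS (hsub ⟨hpT, hC, hpl⟩).1⟩

lemma blockCount_pos (hpS : p ∈ S) (hpl : p ≤ l) (hC : C p = C l) : 0 < blockCount C S l :=
  (Set.ncard_pos).2 ⟨p, hpS, hC, hpl⟩

end Blocks

section Counting

variable {C D E : Fin m → ℤ} {i j l p : Fin m}

lemma sub_eq_blockCount_SCD (hC : Antitone C) (hE : InBC C E) (l : Fin m) :
    C l - E l = blockCount C (SCD C E) l := by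
  classical
  induction l using WellFoundedLT.induction with
  | _ l ih =>
  by_cases hst : IsStart C l
  · rw [blockCount_of_isStart hC hst, mem_SCD_of_isStart hst]
    rcases hE.1 l hst with hl | hl <;> rw [hl] <;> split_ifs <;> omega
  · obtain ⟨h, hlh, hCh⟩ := exists_pred_of_not_isStart hC hst
    rw [blockCount_of_pred hlh hCh, mem_SCD_of_pred hlh hCh]
    have := ih h (Fin.lt_of_val_eq_add_one hlh)
    rcases hE.2.1 h l hlh hCh with hl | hl <;> rw [hl] <;> split_ifs <;> omega

lemma blockCount_freeSet_le (hC : Antitone C) (hD : Antitone D) (hDC : ∀ i, D i ≤ C i)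
    (l : Fin m) : (blockCount C (freeSet C D) l : ℤ) ≤ C l - D l := by
  classical
  induction l using WellFoundedLT.induction with
  | _ l ih =>
  by_cases hst : IsStart C l
  · rw [blockCount_of_isStart hC hst, mem_freeSet_of_isStart hst]
    have := hDC l
    split_ifs <;> push_cast <;> omega
  · obtain ⟨h, hlh, hCh⟩ := exists_pred_of_not_isStart hC hst
    rw [blockCount_of_pred hlh hCh, mem_freeSet_of_pred hlh hCh]
    have := ih h (Fin.lt_of_val_eq_add_one hlh)
    have := hD (Fin.lt_of_val_eq_add_one hlh).le
    split_ifs <;> push_cast <;> omega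

/-- Toggling at a pivot is a sign-reversing involution of `𝔹_C ∩ [D, C]`. -/
structure IsPivot (C D : Fin m → ℤ) (p : Fin m) : Prop where
  mem_freeSet : p ∈ freeSet C D
  blockCount_lt : ∀ i j : Fin m, (j : ℕ) = i + 1 → C i = C p → C j < C i →
    (blockCount C (freeSet C D) i : ℤ) < C i - C j

/-- The last free position is a pivot: if its block had no room left, `D` would drop to the
value of `C` on the next block, whose start would then be free. -/
lemma exists_isPivot (hC : Antitone C) (hD : Antitone D) (hDC : LE' D C) (hne : D ≠ C) :
    ∃ p, IsPivot C D p := by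
  have hF : (freeSet C D).Nonempty := Set.nonempty_iff_ne_empty.2 fun hF =>
    hne (funext fun l => le_antisymm (hDC.1 l) (le_of_freeSet_eq_empty hC hF l))
  obtain ⟨p, hpF, hmax⟩ := Set.exists_max_image _ id (Set.toFinite _) hF
  refine ⟨p, hpF, fun i j hij hCi hCj => ?_⟩
  by_contra! hroom
  have hpi : p ≤ i := by
    by_contra! hip
    have := hC (Fin.le_def.2 (by have := Fin.lt_def.1 hip; omega) : j ≤ p)
    omega
  have hjF : j ∈ freeSet C D := by
    rw [mem_freeSet_of_isStart (Or.inr ⟨i, hij, hCj⟩)]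
    linarith [blockCount_freeSet_le hC hD hDC.1 i, hDC.2 i j hij hCj]
  exact (hpi.trans_lt (Fin.lt_of_val_eq_add_one hij)).not_ge (hmax j hjF)

end Counting

section Toggle

variable {C D E : Fin m → ℤ} {h i j l p : Fin m}

def blockSuffix (C : Fin m → ℤ) (p : Fin m) : Set (Fin m) :=
  {l | p ≤ l ∧ C l = C p}

lemma mem_blockSuffix_self : p ∈ blockSuffix C p := ⟨le_rfl, rfl⟩

lemma blockSuffix_cases (hC : Antitone C) (p : Fin m) (hij : (j : ℕ) = i + 1) :
    (i ∈ blockSuffix C p ∧ j ∈ blockSuffix C p) ∨ (i ∉ blockSuffix C p ∧ j ∉ blockSuffix C p) ∨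
      (i ∉ blockSuffix C p ∧ j = p) ∨ (i ∈ blockSuffix C p ∧ j ∉ blockSuffix C p ∧ C j < C i) := by
  have hCij := hC (Fin.lt_of_val_eq_add_one hij).le
  by_cases hi : i ∈ blockSuffix C p <;> by_cases hj : j ∈ blockSuffix C p
  · exact Or.inl ⟨hi, hj⟩
  · exact Or.inr (Or.inr (Or.inr ⟨hi, hj, hCij.lt_of_ne fun hCji =>
      hj ⟨hi.1.trans (Fin.lt_of_val_eq_add_one hij).le, hCji ▸ hi.2⟩⟩))
  · refine Or.inr (Or.inr (Or.inl ⟨hi, ?_⟩))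
    by_contra hjp
    have hpi : p ≤ i := Fin.le_def.2 <| by
      have := Fin.le_def.1 hj.1; have := Fin.val_ne_of_ne hjp; omega
    exact hi ⟨hpi, le_antisymm (hC hpi) (hj.2 ▸ hCij)⟩
  · exact Or.inr (Or.inl ⟨hi, hj⟩)

open Classical in
noncomputable def toggle (C : Fin m → ℤ) (p : Fin m) (E : Fin m → ℤ) : Fin m → ℤ :=
  E + (blockSuffix C p).indicator fun _ => if p ∈ SCD C E then 1 else -1

open Classical in
lemma toggle_of_mem (hl : l ∈ blockSuffix C p) :
    toggle C p E l = E l + if p ∈ SCD C E then 1 else -1 := by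
  simp [toggle, hl]

lemma toggle_of_notMem (hl : l ∉ blockSuffix C p) : toggle C p E l = E l := by
  simp [toggle, hl]

lemma toggle_apply_self_ne : toggle C p E p ≠ E p := by
  rw [toggle_of_mem mem_blockSuffix_self]
  split_ifs <;> omega

lemma toggle_sub_toggle_of_pred (hC : Antitone C) (hlh : (l : ℕ) = h + 1) (hCh : C h = C l)
    (hlp : l ≠ p) : toggle C p E l - toggle C p E h = E l - E h := by
  rcases blockSuffix_cases hC p hlh with ⟨hh, hl⟩ | ⟨hh, hl⟩ | ⟨-, rfl⟩ | ⟨-, -, hlt⟩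
  · rw [toggle_of_mem hh, toggle_of_mem hl]; ring
  · rw [toggle_of_notMem hh, toggle_of_notMem hl]
  · exact absurd rfl hlp
  · exact absurd hCh hlt.ne'

lemma toggle_antitone (hC : Antitone C) (hE : Antitone E) (hEC : ∀ i, E i ≤ C i)
    (hB : InBC C E) : Antitone (toggle C p E) := by
  refine Fin.antitone_of_forall_val_eq_add_one fun i j hij => ?_
  have hEij := hE (Fin.lt_of_val_eq_add_one hij).le
  rcases blockSuffix_cases hC p hij with ⟨hi, hj⟩ | ⟨hi, hj⟩ | ⟨hi, rfl⟩ | ⟨hi, hj, hCji⟩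
  · rw [toggle_of_mem hi, toggle_of_mem hj]; omega
  · rw [toggle_of_notMem hi, toggle_of_notMem hj]; exact hEij
  · rw [toggle_of_notMem hi, toggle_of_mem mem_blockSuffix_self]
    split_ifs with hpE
    · rcases (hC (Fin.lt_of_val_eq_add_one hij).le).eq_or_lt with hCji | hCji
      · have := (mem_SCD_of_pred hij hCji.symm).1 hpE
        omega
      · have := (mem_SCD_of_isStart (Or.inr ⟨i, hij, hCji⟩)).1 hpE
        have := hB.2.2 i j hij hCji
        omega
    · omega
  · rw [toggle_of_mem hi, toggle_of_notMem hj]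
    have := hB.2.2 i j hij hCji
    have := hEC j
    split_ifs <;> omega

lemma toggle_le (hC : Antitone C) (hEC : ∀ i, E i ≤ C i) (hB : InBC C E) (l : Fin m) :
    toggle C p E l ≤ C l := by
  by_cases hl : l ∈ blockSuffix C p
  · rw [toggle_of_mem hl]
    split_ifs with hpE
    · have := blockCount_pos hpE hl.1 hl.2.symm (C := C)
      have := sub_eq_blockCount_SCD hC hB l
      omega
    · have := hEC l
      omega
  · rw [toggle_of_notMem hl]; exact hEC l

lemma IsPivot.blockCount_SCD_lt (hp : IsPivot C D p) (hDE : LE' D E) (hpE : p ∉ SCD C E)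
    (hl : l ∈ blockSuffix C p) : blockCount C (SCD C E) l < blockCount C (freeSet C D) l :=
  blockCount_lt_blockCount (SCD_subset_freeSet hDE) hp.mem_freeSet hpE hl.1 hl.2.symm

lemma inBC_toggle (hC : Antitone C) (hDE : LE' D E) (hB : InBC C E) (hp : IsPivot C D p) :
    InBC C (toggle C p E) := by
  refine ⟨fun i hi => ?_, fun i j hij hCij => ?_, fun i j hij hCji => ?_⟩
  · by_cases hiJ : i ∈ blockSuffix C p
    · obtain rfl : i = p := le_antisymm (hi.le_of_eq hC hiJ.2.symm) hiJ.1
      rw [toggle_of_mem hiJ]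
      split_ifs with hiE
      · rw [mem_SCD_of_isStart hi] at hiE; omega
      · rw [mem_SCD_of_isStart hi] at hiE; rcases hB.1 i hi with hEi | hEi <;> omega
    · rw [toggle_of_notMem hiJ]; exact hB.1 i hi
  · by_cases hjp : j = p
    · subst hjp
      have hiJ : i ∉ blockSuffix C j := fun hiJ => by have := Fin.le_def.1 hiJ.1; omega
      rw [toggle_of_notMem hiJ, toggle_of_mem mem_blockSuffix_self]
      split_ifs with hjE <;> rw [mem_SCD_of_pred hij hCij] at hjE <;>
        rcases hB.2.1 i j hij hCij with hEj | hEj <;> omega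
    · have := toggle_sub_toggle_of_pred hC hij hCij hjp (E := E)
      rcases hB.2.1 i j hij hCij with hEj | hEj <;> omega
  · by_cases hiJ : i ∈ blockSuffix C p
    · rw [toggle_of_mem hiJ]
      have := hB.2.2 i j hij hCji
      split_ifs with hpE
      · omega
      · have := hp.blockCount_SCD_lt hDE hpE hiJ
        have := hp.blockCount_lt i j hij hiJ.2 hCji
        have := sub_eq_blockCount_SCD hC hB i
        omega
    · rw [toggle_of_notMem hiJ]; exact hB.2.2 i j hij hCji

lemma le'_toggle (hC : Antitone C) (hD : Antitone D) (hDC : LE' D C) (hDE : LE' D E)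
    (hB : InBC C E) (hp : IsPivot C D p) : LE' D (toggle C p E) := by
  refine ⟨fun l => ?_, fun i j hij hlt => ?_⟩
  · by_cases hl : l ∈ blockSuffix C p
    · rw [toggle_of_mem hl]
      have := hDE.1 l
      split_ifs with hpE
      · omega
      · have := hp.blockCount_SCD_lt hDE hpE hl
        have := sub_eq_blockCount_SCD hC hB l
        have := blockCount_freeSet_le hC hD hDC.1 l
        omega
    · rw [toggle_of_notMem hl]; exact hDE.1 l
  · rcases blockSuffix_cases hC p hij with ⟨hi, hj⟩ | ⟨hi, hj⟩ | ⟨-, rfl⟩ | ⟨-, -, hCji⟩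
    · rw [toggle_of_mem hi, toggle_of_mem hj] at hlt
      exact hDE.2 i j hij (by omega)
    · rw [toggle_of_notMem hi, toggle_of_notMem hj] at hlt
      exact hDE.2 i j hij hlt
    · rcases (hC (Fin.lt_of_val_eq_add_one hij).le).eq_or_lt with hCji | hCji
      · exact (mem_freeSet_of_pred hij hCji.symm).1 hp.mem_freeSet
      · exact hDC.2 i j hij hCji
    · exact hDC.2 i j hij hCji

lemma le'_of_inBC (hB : InBC C E) (hEC : ∀ i, E i ≤ C i) : LE' E C :=
  ⟨hEC, fun i j hij hCji => (hEC j).trans_lt (hB.2.2 i j hij hCji)⟩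

lemma SCD_toggle (hC : Antitone C) (hB : InBC C E) :
    SCD C (toggle C p E) = SCD C E ∆ {p} := by
  ext l
  rw [Set.mem_symmDiff, Set.mem_singleton_iff]
  rcases eq_or_ne l p with rfl | hlp
  · simp only [not_true, and_false, true_and, false_or]
    by_cases hst : IsStart C l
    · simp only [mem_SCD_of_isStart hst, toggle_of_mem (mem_blockSuffix_self (C := C))]
      rcases hB.1 l hst with hEl | hEl <;> split_ifs <;> omega
    · obtain ⟨h, hlh, hCh⟩ := exists_pred_of_not_isStart hC hst
      have hh : h ∉ blockSuffix C l := fun hh => by have := Fin.le_def.1 hh.1; omega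
      simp only [mem_SCD_of_pred hlh hCh, toggle_of_mem (mem_blockSuffix_self (C := C)),
        toggle_of_notMem hh]
      rcases hB.2.1 h l hlh hCh with hEl | hEl <;> split_ifs <;> omega
  · simp only [hlp, not_false_eq_true, and_true, false_and, or_false]
    by_cases hst : IsStart C l
    · have hl : l ∉ blockSuffix C p := fun hl => hlp (le_antisymm (hst.le_of_eq hC hl.2.symm) hl.1)
      rw [mem_SCD_of_isStart hst, mem_SCD_of_isStart hst, toggle_of_notMem hl]
    · obtain ⟨h, hlh, hCh⟩ := exists_pred_of_not_isStart hC hst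
      have := toggle_sub_toggle_of_pred hC hlh hCh hlp (E := E)
      rw [mem_SCD_of_pred hlh hCh, mem_SCD_of_pred hlh hCh]
      omega

lemma toggle_toggle (hC : Antitone C) (hB : InBC C E) : toggle C p (toggle C p E) = E := by
  funext l
  by_cases hl : l ∈ blockSuffix C p
  · rw [toggle_of_mem hl, toggle_of_mem hl, SCD_toggle hC hB]
    by_cases hpE : p ∈ SCD C E <;> simp [Set.mem_symmDiff, hpE]
  · rw [toggle_of_notMem hl, toggle_of_notMem hl]

end Toggle

lemma inBC_self (C : Fin m → ℤ) : InBC C C :=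
  ⟨fun _ _ => Or.inl rfl, fun _ _ _ hC => Or.inl hC.symm, fun _ _ _ hC => hC⟩

lemma SCD_self (C : Fin m → ℤ) : SCD C C = ∅ := by
  ext i
  simp only [SCD, Set.mem_ofPred_eq, Set.mem_empty_iff_false, iff_false]
  omega

open Classical in
noncomputable def moebiusFormula (D C : Pm m) : ℤ :=
  if InBC C.1 D.1 then (-1) ^ Nat.card (SCD C.1 D.1) else 0

lemma moebiusFormula_self (C : Pm m) : moebiusFormula C C = 1 := by
  simp [moebiusFormula, inBC_self, SCD_self]

lemma finsum_Icc_moebiusFormula {D C : Pm m} (hDC : D < C) :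
    ∑ᶠ E ∈ Set.Icc D C, moebiusFormula E C = 0 := by
  classical
  obtain ⟨p, hp⟩ := exists_isPivot C.2 D.2 hDC.le (fun h => hDC.ne (Subtype.ext h))
  rw [finsum_mem_eq_finite_toFinset_sum _ (finite_Icc D C)]
  simp only [moebiusFormula]
  rw [← Finset.sum_filter]
  set t := (finite_Icc D C).toFinset.filter fun E => InBC C.1 E.1
  have ht : ∀ E, E ∈ t ↔ (D ≤ E ∧ E ≤ C) ∧ InBC C.1 E.1 := by simp [t]
  refine Finset.sum_involution
    (fun E hE => ⟨toggle C.1 p E.1, toggle_antitone C.2 E.2 ((ht E).1 hE).1.2.1 ((ht E).1 hE).2⟩)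
    (fun E hE => ?_) (fun E hE _ heq => ?_) (fun E hE => ?_) (fun E hE => ?_)
  all_goals obtain ⟨⟨hDE, hEC⟩, hB⟩ := (ht E).1 hE
  · change (-1) ^ Nat.card (SCD C.1 E.1) + (-1) ^ Nat.card (SCD C.1 (toggle C.1 p E.1)) = 0
    rw [SCD_toggle C.2 hB, Nat.card_coe_set_eq, Nat.card_coe_set_eq,
      neg_one_pow_ncard_symmDiff_singleton, add_neg_cancel]
  · exact toggle_apply_self_ne (congrArg (fun F : Pm m => F.1 p) heq)
  · exact (ht _).2 ⟨⟨le'_toggle C.2 D.2 hDC.le hDE hB hp,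
      le'_of_inBC (inBC_toggle C.2 hDE hB hp) (toggle_le C.2 hEC.1 hB)⟩, inBC_toggle C.2 hDE hB hp⟩
  · exact Subtype.ext (toggle_toggle C.2 hB)

end Pm

/-- **Möbius function of `(𝒫_m, ≤_m)`**: if `μ` satisfies the defining recursion of the
Möbius function (`μ(C,C) = 1`, and `∑_{D ≤_m E ≤_m C} μ(E,C) = 0` whenever `D <_m C`;
every interval of `𝒫_m` is finite, so the sum is finite), then for all `D ≤_m C`,
`μ(D,C) = (−1)^{|S_C(D)|}` if `D ∈ 𝔹_C`, and `μ(D,C) = 0` otherwise. -/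
theorem moebius_Pm (m : ℕ) (μ : Pm m → Pm m → ℤ)
    (h1 : ∀ C : Pm m, μ C C = 1)
    (h2 : ∀ D C : Pm m, relm D C → D ≠ C →
      ∑ᶠ E ∈ {E : Pm m | relm D E ∧ relm E C}, μ E C = 0)
    (D C : Pm m) (hDC : relm D C) :
    (InBC C.1 D.1 → μ D C = (-1) ^ (Nat.card (SCD C.1 D.1))) ∧
    (¬ InBC C.1 D.1 → μ D C = 0) := by
  have hμ : μ D C = Pm.moebiusFormula D C :=
    eq_of_finsum_Icc_eq_zero (Pm.finite_Icc · C) (by rw [h1, Pm.moebiusFormula_self])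
      (fun D hD => h2 D C hD.le hD.ne) (fun _ => Pm.finsum_Icc_moebiusFormula) hDC
  rw [hμ, Pm.moebiusFormula]
  exact ⟨fun hB => if_pos hB, fun hB => if_neg hB⟩
end
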